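/- arXiv:2107.10905 — 8 statements merged into one kernel-verified Lean document; each statement's English description precedes it below -/
import Mathlib

section
/- Let H be a real inner product space with 3 ≤ dim(H) ≤ ∞, and let A₁, A₂ be (not necessarily bounded) linear endomorphisms of H. Then the joint real numerical range W_ℝ(A₁,A₂) = {(⟨A₁x,x⟩, ⟨A₂x,x⟩) : ‖x‖ = 1} is a convex subset of ℝ². -/
/-!
Let `p ≠ q` be the values of `z ↦ (⟪A₁ z, z⟫, ⟪A₂ z, z⟫)` at unit vectors `x` and `y`. For suitable
combinations `B`, `C` of `A₁`, `A₂` and the identity, a unit vector `z` is mapped onto the line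
through `p` and `q` iff `⟪B z, z⟫ = 0`, and `⟪C z, z⟫` is then its position on that line; so it
suffices that `⟪C z, z⟫` takes every value between its values at `x` and `y` on the `B`-isotropic
unit vectors. This can be checked in a 3-dimensional subspace through `x` and `y`, where the
symmetric part of `B` diagonalises: in eigencoordinates the isotropic unit vectors are the `v` with
`∑ vᵢ² = 1` and `∑ λᵢ vᵢ² = 0`. As `⟪C z, z⟫` is even, it suffices to join any two such points, up
to sign, by a path in this set. Points whose coordinates have compatible signs are joined by
interpolating the squares `vᵢ²` linearly, and a coordinate whose eigenvalue has the sign opposite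
to the other two makes it possible to change the signs of the other coordinates.
-/

open Set Module
open scoped RealInnerProductSpace

theorem JoinedIn.uIcc_subset_image {X : Type*} [TopologicalSpace X] {F : Set X} {x y : X}
    (h : JoinedIn F x y) {G : X → ℝ} (hG : ContinuousOn G F) : uIcc (G x) (G y) ⊆ G '' F := by
  obtain ⟨γ, hγ⟩ := h.map_continuousOn hG
  have hγ' : IsPreconnected (range γ) := isPreconnected_range γ.continuous
  exact (hγ'.ordConnected.uIcc_subset ⟨0, γ.source⟩ ⟨1, γ.target⟩).trans
    (range_subset_iff.2 hγ)

theorem exists_sq_eq_one_mul_abs_eq_of_mul_nonneg {a b : ℝ} (h : 0 ≤ a * b) :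
    ∃ s : ℝ, s ^ 2 = 1 ∧ s * |a| = a ∧ s * |b| = b := by
  rcases le_total 0 (a + b) with hab | hab
  · refine ⟨1, one_pow 2, ?_, ?_⟩ <;> rw [one_mul, abs_of_nonneg (by nlinarith)]
  · refine ⟨-1, by norm_num, ?_, ?_⟩ <;> rw [abs_of_nonpos (by nlinarith)] <;> ring

theorem zero_mem_segment_of_mul_nonpos {a b : ℝ} (h : a * b ≤ 0) : (0 : ℝ) ∈ segment ℝ a b := by
  rw [segment_eq_uIcc, mem_uIcc]
  rcases mul_nonpos_iff.1 h with ⟨ha, hb⟩ | ⟨ha, hb⟩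
  exacts [Or.inr ⟨hb, ha⟩, Or.inl ⟨ha, hb⟩]

theorem exists_sq_eq_one_mul_nonneg (a : ℝ) : ∃ s : ℝ, s ^ 2 = 1 ∧ 0 ≤ a * s := by
  rcases le_total 0 a with ha | ha
  exacts [⟨1, one_pow 2, by linarith⟩, ⟨-1, by norm_num, by linarith⟩]

theorem sq_mul_sqrt_of_sq_eq_one {s X : ℝ} (hs : s ^ 2 = 1) (hX : 0 ≤ X) : (s * √X) ^ 2 = X := by
  rw [mul_pow, hs, one_mul, Real.sq_sqrt hX]

section Coordinates

variable {ι : Type*} [Fintype ι]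

def diagIsotropicSphere (l : ι → ℝ) : Set (ι → ℝ) :=
  {v | ∑ i, v i ^ 2 = 1 ∧ ∑ i, l i * v i ^ 2 = 0}

theorem neg_mem_diagIsotropicSphere {l : ι → ℝ} {v : ι → ℝ} (hv : v ∈ diagIsotropicSphere l) :
    -v ∈ diagIsotropicSphere l := by
  simpa [diagIsotropicSphere] using hv

theorem comp_perm_mem_diagIsotropicSphere_iff {l v : ι → ℝ} (σ : Equiv.Perm ι) :
    v ∘ σ ∈ diagIsotropicSphere (l ∘ σ) ↔ v ∈ diagIsotropicSphere l := by
  simp only [diagIsotropicSphere, mem_ofPred_eq, Function.comp_apply,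
    Equiv.sum_comp σ (fun i => v i ^ 2), Equiv.sum_comp σ (fun i => l i * v i ^ 2)]

theorem joinedIn_diagIsotropicSphere_of_mul_nonneg {l u v : ι → ℝ}
    (hu : u ∈ diagIsotropicSphere l) (hv : v ∈ diagIsotropicSphere l)
    (huv : ∀ i, 0 ≤ u i * v i) : JoinedIn (diagIsotropicSphere l) u v := by
  choose s hs hsu hsv using fun i => exists_sq_eq_one_mul_abs_eq_of_mul_nonneg (huv i)
  let γ : ℝ → ι → ℝ := fun t i => s i * √((1 - t) * u i ^ 2 + t * v i ^ 2)
  refine JoinedIn.ofLine (f := γ) (by fun_prop) ?_ ?_ ?_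
  · ext i; simp [γ, Real.sqrt_sq_eq_abs, hsu]
  · ext i; simp [γ, Real.sqrt_sq_eq_abs, hsv]
  · rintro _ ⟨t, ⟨ht₀, ht₁⟩, rfl⟩
    have hγ : ∀ i, γ t i ^ 2 = (1 - t) * u i ^ 2 + t * v i ^ 2 := fun i =>
      sq_mul_sqrt_of_sq_eq_one (hs i)
        (add_nonneg (mul_nonneg (by linarith) (sq_nonneg _)) (mul_nonneg ht₀ (sq_nonneg _)))
    simp only [diagIsotropicSphere, mem_ofPred_eq, hγ, mul_add, Finset.sum_add_distrib,
      mul_left_comm (l _), ← Finset.mul_sum, hu.1, hu.2, hv.1, hv.2]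
    constructor <;> ring

theorem vecCons_mem_diagIsotropicSphere_iff {l : Fin 3 → ℝ} {a b c : ℝ} :
    ![a, b, c] ∈ diagIsotropicSphere l ↔
      a ^ 2 + b ^ 2 + c ^ 2 = 1 ∧ l 0 * a ^ 2 + l 1 * b ^ 2 + l 2 * c ^ 2 = 0 := by
  simp [diagIsotropicSphere, Fin.sum_univ_three]

theorem joinedIn_diagIsotropicSphere_of_nonneg {l : Fin 3 → ℝ} (h₁ : l 0 * l 1 ≤ 0)
    (h₂ : l 0 * l 2 ≤ 0) {u v : Fin 3 → ℝ} (hu : u ∈ diagIsotropicSphere l)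
    (hv : v ∈ diagIsotropicSphere l) (hu₀ : 0 ≤ u 0) (hv₀ : 0 ≤ v 0) :
    JoinedIn (diagIsotropicSphere l) u v := by
  obtain ⟨P, Q, hP, hQ, hPQ, hl⟩ := zero_mem_segment_of_mul_nonpos h₁
  set b : Fin 3 → ℝ := ![√P, √Q, 0]
  -- every `w` with `0 ≤ w 0` is joined to `b` through a point whose coordinate `1` vanishes
  suffices hb : ∀ w ∈ diagIsotropicSphere l, 0 ≤ w 0 → JoinedIn (diagIsotropicSphere l) w b from
    (hb u hu hu₀).trans (hb v hv hv₀).symm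
  intro w hw hw₀
  obtain ⟨P', Q', hP', hQ', hPQ', hl'⟩ := zero_mem_segment_of_mul_nonpos h₂
  obtain ⟨s, hs, hws⟩ := exists_sq_eq_one_mul_nonneg (w 2)
  set c : Fin 3 → ℝ := ![√P', 0, s * √Q']
  have hbS : b ∈ diagIsotropicSphere l := by
    rw [vecCons_mem_diagIsotropicSphere_iff, Real.sq_sqrt hP, Real.sq_sqrt hQ]
    exact ⟨by linear_combination hPQ, by linear_combination hl⟩
  have hcS : c ∈ diagIsotropicSphere l := by
    rw [vecCons_mem_diagIsotropicSphere_iff, Real.sq_sqrt hP', sq_mul_sqrt_of_sq_eq_one hs hQ']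
    exact ⟨by linear_combination hPQ', by linear_combination hl'⟩
  refine (joinedIn_diagIsotropicSphere_of_mul_nonneg hw hcS ?_).trans
    (joinedIn_diagIsotropicSphere_of_mul_nonneg hcS hbS ?_)
  · simpa [Fin.forall_fin_succ, c, ← mul_assoc] using
      ⟨mul_nonneg hw₀ (Real.sqrt_nonneg P'), mul_nonneg hws (Real.sqrt_nonneg Q')⟩
  · simp [Fin.forall_fin_succ, b, c, mul_nonneg, Real.sqrt_nonneg]

theorem exists_perm_mul_nonpos {l : Fin 3 → ℝ} (hl : (diagIsotropicSphere l).Nonempty) :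
    ∃ σ : Equiv.Perm (Fin 3), l (σ 0) * l (σ 1) ≤ 0 ∧ l (σ 0) * l (σ 2) ≤ 0 := by
  obtain ⟨v, hv₁, hv₀⟩ := hl
  by_contra! h
  have h₀ := h 1
  have h₁ := h (Equiv.swap 0 1)
  have h₂ := h (Equiv.swap 0 2)
  simp only [Fin.isValue, Equiv.Perm.coe_one, id_eq, Equiv.swap_apply_left,
    Equiv.swap_apply_right, Equiv.swap_apply_def, Fin.reduceEq, ↓reduceIte, one_ne_zero] at h₀ h₁ h₂
  -- otherwise all the `l i` have the same strict sign
  have hpos : ∀ i, 0 < l 0 * l i := by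
    have h01 : 0 < l 0 * l 1 := by
      by_contra! h01
      nlinarith [mul_pos (h₀ h01) (h₁ (by linarith)),
        mul_nonpos_of_nonpos_of_nonneg h01 (sq_nonneg (l 2))]
    have h02 : 0 < l 0 * l 2 := by
      by_contra! h02
      rcases le_or_gt (l 2 * l 1) 0 with h21 | h21
      · nlinarith [h₂ h21]
      · nlinarith [mul_pos h01 h21, mul_nonpos_of_nonpos_of_nonneg h02 (sq_nonneg (l 1))]
    intro i
    fin_cases i
    · exact mul_self_pos.2 (left_ne_zero_of_mul h01.ne')
    · exact h01
    · exact h02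
  have hv : ∀ i ∈ Finset.univ, l 0 * l i * v i ^ 2 = 0 := by
    refine (Finset.sum_eq_zero_iff_of_nonneg fun i _ => ?_).1 ?_
    · exact mul_nonneg (hpos i).le (sq_nonneg _)
    · simp_rw [mul_assoc, ← Finset.mul_sum, hv₀, mul_zero]
  rw [Finset.sum_eq_zero fun i hi => (mul_eq_zero.1 (hv i hi)).resolve_left (hpos i).ne'] at hv₁
  exact zero_ne_one hv₁

theorem ordConnected_image_diagIsotropicSphere_of_mul_nonpos {l : Fin 3 → ℝ}
    (h₁ : l 0 * l 1 ≤ 0) (h₂ : l 0 * l 2 ≤ 0) {G : (Fin 3 → ℝ) → ℝ} (hG : Continuous G)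
    (hG_neg : ∀ v, G (-v) = G v) : (G '' diagIsotropicSphere l).OrdConnected := by
  have hflip : ∀ v ∈ diagIsotropicSphere l,
      ∃ w ∈ diagIsotropicSphere l, 0 ≤ w 0 ∧ G w = G v := fun v hv =>
    (le_total 0 (v 0)).elim (fun h => ⟨v, hv, h, rfl⟩)
      (fun h => ⟨-v, neg_mem_diagIsotropicSphere hv, by simpa using h, hG_neg v⟩)
  rw [ordConnected_iff_uIcc_subset]
  rintro _ ⟨u, hu, rfl⟩ _ ⟨v, hv, rfl⟩
  obtain ⟨u', hu', hu'₀, hGu⟩ := hflip u hu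
  obtain ⟨v', hv', hv'₀, hGv⟩ := hflip v hv
  rw [← hGu, ← hGv]
  exact (joinedIn_diagIsotropicSphere_of_nonneg h₁ h₂ hu' hv' hu'₀ hv'₀).uIcc_subset_image
    hG.continuousOn

theorem ordConnected_image_diagIsotropicSphere (l : Fin 3 → ℝ) {G : (Fin 3 → ℝ) → ℝ}
    (hG : Continuous G) (hG_neg : ∀ v, G (-v) = G v) :
    (G '' diagIsotropicSphere l).OrdConnected := by
  rcases (diagIsotropicSphere l).eq_empty_or_nonempty with hl | hl
  · rw [hl, image_empty]; exact ordConnected_empty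
  obtain ⟨σ, h₁, h₂⟩ := exists_perm_mul_nonpos hl
  have hσ : G '' diagIsotropicSphere l =
      (fun v => G (v ∘ σ.symm)) '' diagIsotropicSphere (l ∘ σ) := by
    ext r
    constructor
    · rintro ⟨v, hv, rfl⟩
      exact ⟨v ∘ σ, (comp_perm_mem_diagIsotropicSphere_iff σ).2 hv, by simp [Function.comp_assoc]⟩
    · rintro ⟨w, hw, rfl⟩
      refine ⟨w ∘ σ.symm, (comp_perm_mem_diagIsotropicSphere_iff σ).1 ?_, rfl⟩
      simpa [Function.comp_assoc] using hw
  rw [hσ]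
  exact ordConnected_image_diagIsotropicSphere_of_mul_nonpos h₁ h₂ (by fun_prop)
    (fun v => hG_neg (v ∘ σ.symm))

end Coordinates

theorem Submodule.exists_le_finrank_eq {K V : Type*} [DivisionRing K] [AddCommGroup V]
    [Module K V] (W : Submodule K V) [FiniteDimensional K W] {n : ℕ} (hW : finrank K W ≤ n)
    (hn : n ≤ Module.rank K V) :
    ∃ U : Submodule K V, W ≤ U ∧ FiniteDimensional K U ∧ finrank K U = n := by
  induction n with
  | zero => exact ⟨W, le_rfl, inferInstance, Nat.le_zero.1 hW⟩
  | succ n ih =>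
    rcases hW.lt_or_eq with hW | hW
    · obtain ⟨U, hWU, hU, hUn⟩ := ih (Nat.lt_succ_iff.1 hW)
        (le_trans (by exact_mod_cast n.le_succ) hn)
      obtain ⟨v, hv⟩ : ∃ v, v ∉ U := by
        by_contra! hU_top
        have : Module.rank K V = n := by
          rw [← rank_top K V, ← (Submodule.eq_top_iff'.2 hU_top), ← hUn, finrank_eq_rank]
        rw [this] at hn
        exact absurd hn (by exact_mod_cast n.lt_succ_self.not_ge)
      have hv₀ : v ≠ 0 := fun h => hv (h ▸ U.zero_mem)
      refine ⟨U ⊔ K ∙ v, hWU.trans le_sup_left, inferInstance, ?_⟩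
      have := Submodule.finrank_sup_add_finrank_inf_eq U (K ∙ v)
      rwa [(Submodule.disjoint_span_singleton_of_notMem hv).eq_bot, finrank_bot, add_zero,
        finrank_span_singleton hv₀, hUn] at this
    · exact ⟨W, le_rfl, inferInstance, hW⟩

section InnerProductSpace

variable {E : Type*} [NormedAddCommGroup E] [InnerProductSpace ℝ E]

def isotropicSphere (B : E →ₗ[ℝ] E) : Set E := {z | ‖z‖ = 1 ∧ ⟪B z, z⟫ = 0}

theorem mem_isotropicSphere_iff_repr_mem_diagIsotropicSphere [FiniteDimensional ℝ E]
    {T : E →ₗ[ℝ] E} (hT : T.IsSymmetric) {n : ℕ} (hn : Module.finrank ℝ E = n) (z : E) :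
    z ∈ isotropicSphere T ↔
      ((hT.eigenvectorBasis hn).repr z).ofLp ∈ diagIsotropicSphere (hT.eigenvalues hn) := by
  set e := hT.eigenvectorBasis hn
  have hnorm : ‖z‖ ^ 2 = ∑ i, e.repr z i ^ 2 := by
    rw [← e.repr.norm_map, EuclideanSpace.real_norm_sq_eq]
  have hquad : ⟪T z, z⟫ = ∑ i, hT.eigenvalues hn i * e.repr z i ^ 2 := by
    rw [← e.repr.inner_map_map, PiLp.inner_apply]
    simp [e, hT.eigenvectorBasis_apply_self_apply, sq, mul_left_comm]
  simp only [isotropicSphere, diagIsotropicSphere, mem_ofPred_eq, ← hnorm, ← hquad,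
    pow_eq_one_iff_of_nonneg (norm_nonneg z) two_ne_zero]

theorem ordConnected_image_isotropicSphere_of_finrank_eq_three [FiniteDimensional ℝ E]
    (hE : Module.finrank ℝ E = 3) {T : E →ₗ[ℝ] E} (hT : T.IsSymmetric) {F : E → ℝ}
    (hF : Continuous F) (hF_neg : ∀ z, F (-z) = F z) : (F '' isotropicSphere T).OrdConnected := by
  set e := hT.eigenvectorBasis hE
  set φ : (Fin 3 → ℝ) → E := fun v => e.repr.symm (WithLp.toLp 2 v)
  have hφ : isotropicSphere T = φ '' diagIsotropicSphere (hT.eigenvalues hE) := by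
    ext z
    rw [mem_isotropicSphere_iff_repr_mem_diagIsotropicSphere hT hE]
    constructor
    · exact fun hz => ⟨_, hz, by simp [φ, e]⟩
    · rintro ⟨v, hv, rfl⟩
      simpa [φ, e] using hv
  rw [hφ, image_image]
  exact ordConnected_image_diagIsotropicSphere _ (hF.comp (by fun_prop))
    (fun v => by simpa [φ] using hF_neg (φ v))

theorem Submodule.exists_isSymmetric_inner_self_eq (K : Submodule ℝ E) [FiniteDimensional ℝ K]
    (B : E →ₗ[ℝ] E) : ∃ T : K →ₗ[ℝ] K, T.IsSymmetric ∧ ∀ v : K, ⟪T v, v⟫ = ⟪B v, v⟫ := by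
  set S : K →ₗ[ℝ] K := K.orthogonalProjectionOnto.toLinearMap ∘ₗ B ∘ₗ K.subtype
  have hS : ∀ v : K, ⟪S v, v⟫ = ⟪B v, v⟫ := fun v =>
    K.inner_orthogonalProjectionOnto_eq_of_mem_right v (B v)
  refine ⟨(2⁻¹ : ℝ) • (S + LinearMap.adjoint S), ?_, fun v => ?_⟩
  · exact ((LinearMap.isSymmetric_iff_isSelfAdjoint _).2 (IsSelfAdjoint.add_star_self S)).smul rfl
  · rw [LinearMap.smul_apply, LinearMap.add_apply, real_inner_smul_left, inner_add_left,
      LinearMap.adjoint_inner_left, real_inner_comm (S v), hS]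
    ring

theorem ordConnected_image_isotropicSphere (hE : 3 ≤ Module.rank ℝ E) (B C : E →ₗ[ℝ] E) :
    ((fun z => ⟪C z, z⟫) '' isotropicSphere B).OrdConnected := by
  rw [ordConnected_iff_uIcc_subset]
  rintro _ ⟨x, hx, rfl⟩ _ ⟨y, hy, rfl⟩
  have := FiniteDimensional.span_of_finite ℝ (finite_range ![x, y])
  obtain ⟨K, hxyK, hK, hK3⟩ := (Submodule.span ℝ (range ![x, y])).exists_le_finrank_eq
    ((finrank_range_le_card _).trans (by simp)) hE
  obtain ⟨T, hT, hTB⟩ := K.exists_isSymmetric_inner_self_eq B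
  have hmem : ∀ v : K, v ∈ isotropicSphere T ↔ (v : E) ∈ isotropicSphere B := fun v => by
    simp only [isotropicSphere, mem_ofPred_eq, hTB, Submodule.coe_norm]
  set F : K → ℝ := fun v => ⟪C v, v⟫
  have hF : Continuous F :=
    have hCK : Continuous (C ∘ₗ K.subtype) := LinearMap.continuous_of_finiteDimensional _
    hCK.inner continuous_subtype_val
  have hxK : x ∈ K := hxyK (Submodule.subset_span ⟨0, rfl⟩)
  have hyK : y ∈ K := hxyK (Submodule.subset_span ⟨1, rfl⟩)
  refine ((ordConnected_image_isotropicSphere_of_finrank_eq_three hK3 hT hF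
    (fun v => by simp [F])).uIcc_subset (x := F ⟨x, hxK⟩) (y := F ⟨y, hyK⟩)
    ⟨_, (hmem _).2 hx, rfl⟩ ⟨_, (hmem _).2 hy, rfl⟩).trans ?_
  rintro _ ⟨v, hv, rfl⟩
  exact ⟨v, (hmem v).1 hv, rfl⟩

end InnerProductSpace

theorem Prod.eq_of_cross_eq_of_dot_eq {d u w : ℝ × ℝ} (hd : d ≠ 0)
    (hcross : d.1 * u.2 - d.2 * u.1 = d.1 * w.2 - d.2 * w.1)
    (hdot : d.1 * u.1 + d.2 * u.2 = d.1 * w.1 + d.2 * w.2) : u = w := by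
  have hN : d.1 ^ 2 + d.2 ^ 2 ≠ 0 := by
    contrapose! hd
    rw [add_eq_zero_iff_of_nonneg (sq_nonneg _) (sq_nonneg _), sq_eq_zero_iff, sq_eq_zero_iff] at hd
    exact Prod.ext hd.1 hd.2
  ext
  · exact sub_eq_zero.1 <| (mul_eq_zero.1 (by linear_combination d.1 * hdot - d.2 * hcross :
      (d.1 ^ 2 + d.2 ^ 2) * (u.1 - w.1) = 0)).resolve_left hN
  · exact sub_eq_zero.1 <| (mul_eq_zero.1 (by linear_combination d.2 * hdot + d.1 * hcross :
      (d.1 ^ 2 + d.2 ^ 2) * (u.2 - w.2) = 0)).resolve_left hN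

theorem brickman_convexity
    {H : Type*} [NormedAddCommGroup H] [InnerProductSpace ℝ H]
    (hdim : 3 ≤ Module.rank ℝ H) (A₁ A₂ : H →ₗ[ℝ] H) :
    Convex ℝ {p : ℝ × ℝ | ∃ x : H, ‖x‖ = 1 ∧ p = (⟪A₁ x, x⟫, ⟪A₂ x, x⟫)} := by
  rintro p ⟨x, hx, hpx⟩ q ⟨y, hy, hqy⟩ a b ha hb hab
  rcases eq_or_ne p q with rfl | hpq
  · exact ⟨y, hy, by rw [Convex.combo_self hab, hqy]⟩
  obtain ⟨hp₁, hp₂⟩ : p.1 = ⟪A₁ x, x⟫ ∧ p.2 = ⟪A₂ x, x⟫ := Prod.ext_iff.1 hpx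
  obtain ⟨hq₁, hq₂⟩ : q.1 = ⟪A₁ y, y⟫ ∧ q.2 = ⟪A₂ y, y⟫ := Prod.ext_iff.1 hqy
  set d := p - q
  -- for unit `z`, `⟪B z, z⟫ = 0` says that the point of `z` lies on the line through `p` and `q`,
  -- and `⟪C z, z⟫` is its coordinate along that line
  set B := d.1 • A₂ - d.2 • A₁ - (d.1 * q.2 - d.2 * q.1) • LinearMap.id
  set C := d.1 • A₁ + d.2 • A₂
  have hB (z : H) (hz : ‖z‖ = 1) :
      ⟪B z, z⟫ = d.1 * ⟪A₂ z, z⟫ - d.2 * ⟪A₁ z, z⟫ - (d.1 * q.2 - d.2 * q.1) := by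
    simp [B, inner_sub_left, real_inner_smul_left, hz]
  have hC (z : H) : ⟪C z, z⟫ = d.1 * ⟪A₁ z, z⟫ + d.2 * ⟪A₂ z, z⟫ := by
    simp [C, inner_add_left, real_inner_smul_left]
  have hxB : x ∈ isotropicSphere B := ⟨hx, by
    rw [hB x hx, ← hp₁, ← hp₂]; simp only [d, Prod.fst_sub, Prod.snd_sub]; ring⟩
  have hyB : y ∈ isotropicSphere B := ⟨hy, by rw [hB y hy, ← hq₁, ← hq₂]; ring⟩
  have hμ : a * ⟪C x, x⟫ + b * ⟪C y, y⟫ ∈ uIcc ⟪C x, x⟫ ⟪C y, y⟫ :=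
    segment_eq_uIcc (𝕜 := ℝ) _ _ ▸ ⟨a, b, ha, hb, hab, rfl⟩
  obtain ⟨z, ⟨hz, hBz⟩, hCz⟩ := (ordConnected_image_isotropicSphere hdim B C).uIcc_subset
    ⟨x, hxB, rfl⟩ ⟨y, hyB, rfl⟩ hμ
  rw [hB z hz] at hBz
  simp only [hC, ← hp₁, ← hp₂, ← hq₁, ← hq₂] at hCz
  refine ⟨z, hz, (Prod.eq_of_cross_eq_of_dot_eq (sub_ne_zero.2 hpq) ?_ ?_).symm⟩ <;>
    simp only [d, Prod.fst_add, Prod.snd_add, Prod.smul_fst, Prod.smul_snd, smul_eq_mul,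
      Prod.fst_sub, Prod.snd_sub] at hBz hCz ⊢
  · linear_combination hBz - ((p.1 - q.1) * q.2 - (p.2 - q.2) * q.1) * hab
  · linear_combination hCz
end

section
/- On ℓ², let (αₙ) be a sequence of positive reals converging to 0, and define diagonal operators A₀(x) = (αₙ xₙ)ₙ and A₁(x) = (αₙ(1 + 1/n) xₙ)ₙ. Then A₀ and A₁ are compact positive definite operators, the point (1,1) lies in the closure of the joint image {(⟨A₀x,x⟩, ⟨A₁x,x⟩) : x ∈ ℓ²}, but (1,1) does not belong to this joint image; hence the joint image is not closed. -/
/-!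
Both operators are diagonal in the Hilbert basis, with positive eigenvalues tending to `0`:
such an operator is symmetric, positive definite, and compact, being the operator-norm limit
of its finite-rank truncations. The vectors `b n / √(α n)` realise the points
`(1, 1 + 1/(n+1)) → (1, 1)` of the joint image. On the other hand `A₁ - A₀` is diagonal with
eigenvalues `α n / (n+1) > 0`, so `⟪A₀ x, x⟫ < ⟪A₁ x, x⟫` for `x ≠ 0`, and `(1, 1)` is never
attained.
-/

open scoped RealInnerProductSpace

open Filter Topology InnerProductSpace

lemma isCompactOperator_rankOne {𝕜 E F : Type*} [RCLike 𝕜] [NormedAddCommGroup E]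
    [InnerProductSpace 𝕜 E] [NormedAddCommGroup F] [InnerProductSpace 𝕜 F] (x : E) (y : F) :
    IsCompactOperator (rankOne 𝕜 x y) :=
  (isCompactOperator_of_locallyCompactSpace_dom (innerSL 𝕜 y)).clm_comp
    (ContinuousLinearMap.toSpanSingleton 𝕜 x)

namespace HilbertBasis

variable {ι H : Type*} [NormedAddCommGroup H] [InnerProductSpace ℝ H]

def Diagonalizes (b : HilbertBasis ι ℝ H) (A : H →L[ℝ] H) (β : ι → ℝ) : Prop :=
  ∀ i, A (b i) = β i • b i

lemma hasSum_sq_inner (b : HilbertBasis ι ℝ H) (x : H) :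
    HasSum (fun i => ⟪b i, x⟫ ^ 2) (‖x‖ ^ 2) := by
  simpa [← real_inner_self_eq_norm_sq, real_inner_comm x, sq] using b.hasSum_inner_mul_inner x x

namespace Diagonalizes

variable {b : HilbertBasis ι ℝ H} {A B : H →L[ℝ] H} {β γ : ι → ℝ}

lemma sub (hA : b.Diagonalizes A β) (hB : b.Diagonalizes B γ) :
    b.Diagonalizes (A - B) (β - γ) := fun i => by
  simp [hA i, hB i, sub_smul]

lemma inner_basis_apply (hA : b.Diagonalizes A β) (i : ι) (x : H) :
    ⟪b i, A x⟫ = β i * ⟪b i, x⟫ := by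
  classical
  have hsum := (b.hasSum_repr x).mapL ((innerSL ℝ (b i)).comp A)
  refine hsum.unique ((hasSum_ite_eq i (β i * ⟪b i, x⟫)).congr_fun fun j => ?_)
  simp only [ContinuousLinearMap.comp_apply, map_smul, hA j, innerSL_apply_apply,
    orthonormal_iff_ite.mp b.orthonormal i j, b.repr_apply_apply]
  obtain rfl | h := eq_or_ne j i
  · simp [mul_comm]
  · simp [h, h.symm]

lemma hasSum_inner (hA : b.Diagonalizes A β) (x y : H) :
    HasSum (fun i => β i * ⟪b i, x⟫ * ⟪b i, y⟫) ⟪A x, y⟫ := by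
  simpa [real_inner_comm _ (A x), hA.inner_basis_apply, mul_assoc]
    using b.hasSum_inner_mul_inner (A x) y

lemma isSymmetric (hA : b.Diagonalizes A β) : (A : H →ₗ[ℝ] H).IsSymmetric := fun x y => by
  have h := hA.hasSum_inner y x
  simp only [mul_right_comm _ ⟪b _, y⟫] at h
  change ⟪A x, y⟫ = ⟪x, A y⟫
  rw [real_inner_comm (A y)]
  exact (hA.hasSum_inner x y).unique h

lemma inner_self_pos (hA : b.Diagonalizes A β) (hβ : ∀ i, 0 < β i) {x : H} (hx : x ≠ 0) :
    0 < ⟪A x, x⟫ := by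
  obtain ⟨i, hi⟩ : ∃ i, ⟪b i, x⟫ ≠ 0 := by
    by_contra! h
    have hx2 : ‖x‖ ^ 2 = 0 := (b.hasSum_sq_inner x).unique (by simp [h])
    exact hx (by simpa using hx2)
  calc 0 < β i * ⟪b i, x⟫ * ⟪b i, x⟫ := by
        rw [mul_assoc]; exact mul_pos (hβ i) (mul_self_pos.mpr hi)
    _ ≤ ⟪A x, x⟫ := le_hasSum (hA.hasSum_inner x x) i fun j _ => by
        rw [mul_assoc]; exact mul_nonneg (hβ j).le (mul_self_nonneg _)

lemma inner_self_lt (hA : b.Diagonalizes A β) (hB : b.Diagonalizes B γ) (hβγ : ∀ i, β i < γ i)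
    {x : H} (hx : x ≠ 0) : ⟪A x, x⟫ < ⟪B x, x⟫ := by
  have := (hB.sub hA).inner_self_pos (fun i => sub_pos.mpr (hβγ i)) hx
  rwa [sub_apply, inner_sub_left, sub_pos] at this

lemma opNorm_le (hA : b.Diagonalizes A β) {ε : ℝ} (hε : 0 ≤ ε) (hβ : ∀ i, |β i| ≤ ε) :
    ‖A‖ ≤ ε := by
  refine A.opNorm_le_bound hε fun x => pow_le_pow_iff_left₀ (norm_nonneg _) (by positivity)
    two_ne_zero |>.mp ?_
  refine hasSum_le (fun i => ?_) (b.hasSum_sq_inner (A x)) ((b.hasSum_sq_inner x).mul_left (ε ^ 2))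
    |>.trans_eq (by ring)
  rw [hA.inner_basis_apply, mul_pow]
  exact mul_le_mul_of_nonneg_right (sq_le_sq' (abs_le.mp (hβ i)).1 (abs_le.mp (hβ i)).2)
    (sq_nonneg _)

lemma inner_smul_basis_self (hA : b.Diagonalizes A β) (c : ℝ) (i : ι) :
    ⟪A (c • b i), c • b i⟫ = c ^ 2 * β i := by
  rw [map_smul, hA i, real_inner_smul_left, real_inner_smul_left, real_inner_smul_right,
    real_inner_self_eq_norm_sq, b.orthonormal.1 i]
  ring

lemma sub_sum_rankOne (hA : b.Diagonalizes A β) (s : Finset ι) :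
    b.Diagonalizes (A - ∑ i ∈ s, rankOne ℝ (β i • b i) (b i)) ((↑s : Set ι)ᶜ.indicator β) :=
  fun j => by
  classical
  simp only [sub_apply, sum_apply, rankOne_apply, hA j, orthonormal_iff_ite.mp b.orthonormal,
    ite_smul, one_smul, zero_smul, Finset.sum_ite_eq']
  by_cases hj : j ∈ s <;> simp [hj]

lemma isCompactOperator [CompleteSpace H] (hA : b.Diagonalizes A β)
    (hβ : Tendsto β cofinite (𝓝 0)) : IsCompactOperator A := by
  classical
  let T : Finset ι → H →L[ℝ] H := fun s => ∑ i ∈ s, rankOne ℝ (β i • b i) (b i)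
  have hT : ∀ s, IsCompactOperator (T s) := fun s =>
    (compactOperator (RingHom.id ℝ) H H).sum_mem fun i _ => isCompactOperator_rankOne _ _
  refine isCompactOperator_of_tendsto (Metric.tendsto_atTop.mpr fun ε hε => ?_) (.of_forall hT)
  have hfin := eventually_cofinite.mp <| Metric.tendsto_nhds.mp hβ (ε / 2) (half_pos hε)
  refine ⟨hfin.toFinset, fun s hs => ?_⟩
  have hsmall : ∀ j, |(↑s : Set ι)ᶜ.indicator β j| ≤ ε / 2 := fun j => by
    by_cases hj : j ∈ s
    · simpa [hj] using (half_pos hε).le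
    · have hj' : j ∉ hfin.toFinset := fun h => hj (hs h)
      rw [Set.Finite.mem_toFinset, Set.mem_ofPred_eq, not_not, Real.dist_0_eq_abs] at hj'
      simpa [hj] using hj'.le
  rw [dist_eq_norm']
  exact ((hA.sub_sum_rankOne s).opNorm_le (half_pos hε).le hsmall).trans_lt (half_lt_self hε)

end Diagonalizes

end HilbertBasis

section JointImage

variable {ι H : Type*} [NormedAddCommGroup H] [InnerProductSpace ℝ H]

def jointImage (A₀ A₁ : H →L[ℝ] H) : Set (ℝ × ℝ) :=
  {p | ∃ x : H, p = (⟪A₀ x, x⟫, ⟪A₁ x, x⟫)}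

lemma HilbertBasis.Diagonalizes.mk_div_mem_jointImage {b : HilbertBasis ι ℝ H}
    {A₀ A₁ : H →L[ℝ] H} {β₀ β₁ : ι → ℝ} (h₀ : b.Diagonalizes A₀ β₀) (h₁ : b.Diagonalizes A₁ β₁)
    {i : ι} (hi : 0 < β₀ i) : (1, β₁ i / β₀ i) ∈ jointImage A₀ A₁ := by
  refine ⟨(√(β₀ i))⁻¹ • b i, ?_⟩
  rw [h₀.inner_smul_basis_self, h₁.inner_smul_basis_self, inv_pow, Real.sq_sqrt hi.le,
    inv_mul_cancel₀ hi.ne', inv_mul_eq_div]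

lemma one_one_notMem_jointImage {A₀ A₁ : H →L[ℝ] H}
    (h : ∀ x ≠ 0, ⟪A₀ x, x⟫ < ⟪A₁ x, x⟫) : ((1 : ℝ), (1 : ℝ)) ∉ jointImage A₀ A₁ := by
  rintro ⟨x, hx⟩
  simp only [Prod.mk.injEq] at hx
  obtain rfl | hx0 := eq_or_ne x 0
  · simp at hx
  · linarith [h x hx0]

end JointImage

/-- Example: on a real Hilbert space with a Hilbert basis `b` indexed by `ℕ`
(modeling `ℓ²`), given a sequence of positive reals `α n → 0` and the diagonal
operators `A₀ (b n) = α n • b n` and `A₁ (b n) = α n (1 + 1/(n+1)) • b n`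
(indexing from `0`, so `n+1` plays the role of the paper's `n ≥ 1`),
`A₀` and `A₁` are compact positive definite operators, `(1,1)` lies in the
closure of the joint image but not in it, hence the joint image is not closed. -/
theorem joint_image_not_closed_compact_case
    {H : Type*} [NormedAddCommGroup H] [InnerProductSpace ℝ H] [CompleteSpace H]
    (b : HilbertBasis ℕ ℝ H)
    (α : ℕ → ℝ) (hαpos : ∀ n, 0 < α n)
    (hαlim : Filter.Tendsto α Filter.atTop (nhds 0))
    (A₀ A₁ : H →L[ℝ] H)
    (hA₀ : ∀ n, A₀ (b n) = α n • b n)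
    (hA₁ : ∀ n, A₁ (b n) = (α n * (1 + 1 / (n + 1 : ℝ))) • b n) :
    IsCompactOperator A₀ ∧ IsCompactOperator A₁ ∧
    (∀ x y : H, ⟪A₀ x, y⟫ = ⟪x, A₀ y⟫) ∧
    (∀ x y : H, ⟪A₁ x, y⟫ = ⟪x, A₁ y⟫) ∧
    (∀ x : H, x ≠ 0 → 0 < ⟪A₀ x, x⟫) ∧
    (∀ x : H, x ≠ 0 → 0 < ⟪A₁ x, x⟫) ∧
    ((1, 1) ∈ closure {p : ℝ × ℝ | ∃ x : H, p = (⟪A₀ x, x⟫, ⟪A₁ x, x⟫)}) ∧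
    ((1, 1) ∉ {p : ℝ × ℝ | ∃ x : H, p = (⟪A₀ x, x⟫, ⟪A₁ x, x⟫)}) ∧
    ¬ IsClosed {p : ℝ × ℝ | ∃ x : H, p = (⟪A₀ x, x⟫, ⟪A₁ x, x⟫)} := by
  have h₀ : b.Diagonalizes A₀ α := hA₀
  have h₁ : b.Diagonalizes A₁ _ := hA₁
  have hlt : ∀ n : ℕ, α n < α n * (1 + 1 / (n + 1 : ℝ)) := fun n =>
    lt_mul_of_one_lt_right (hαpos n) (lt_add_of_pos_right 1 (by positivity))
  have hratio : Tendsto (fun n : ℕ => 1 + 1 / (n + 1 : ℝ)) atTop (𝓝 1) := by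
    simpa using tendsto_one_div_add_atTop_nhds_zero_nat.const_add (1 : ℝ)
  have hclosure : ((1 : ℝ), (1 : ℝ)) ∈ closure (jointImage A₀ A₁) := by
    refine mem_closure_of_tendsto (tendsto_const_nhds.prodMk_nhds hratio) (.of_forall fun n => ?_)
    simpa [(hαpos n).ne'] using h₀.mk_div_mem_jointImage h₁ (hαpos n)
  have hnotMem := one_one_notMem_jointImage fun x hx => h₀.inner_self_lt h₁ hlt hx
  rw [← Nat.cofinite_eq_atTop] at hαlim hratio
  exact ⟨h₀.isCompactOperator hαlim, h₁.isCompactOperator (by simpa using hαlim.mul hratio),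
    h₀.isSymmetric, h₁.isSymmetric, fun x hx => h₀.inner_self_pos hαpos hx,
    fun x hx => h₁.inner_self_pos (fun n => (hαpos n).trans (hlt n)) hx, hclosure, hnotMem,
    fun hcl => hnotMem (hcl.closure_subset hclosure)⟩
end

section
/- Let A₁, ..., Aₙ be compact bounded linear operators on a real Hilbert space H. Then the set {(⟨A₁x,x⟩, ..., ⟨Aₙx,x⟩) ∈ ℝⁿ : ‖x‖ ≤ 1} is closed. -/
open scoped RealInnerProductSpace

open Metric Set Filter Topology

/-!
Identify `H` with its dual by the Riesz map. The closed unit ball of the dual is weak-* compact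
(Banach–Alaoglu), so it suffices that `φ ↦ φ (A (riesz φ))` is weak-* continuous on it. A compact
operator sends the weak-* topology of the ball to the norm topology of `H`: on the norm-compact
closure of `A '' ball`, the weak-* topology is Hausdorff and coarser than the norm, hence equal to
it. Finally, evaluation `(φ, v) ↦ φ v` is jointly continuous on (bounded set) × (norm topology).
-/

theorem ContinuousOn.of_comp_of_mapsTo_isCompact {X Y Z : Type*} [TopologicalSpace X]
    [TopologicalSpace Y] [TopologicalSpace Z] [T2Space Z] {f : X → Y} {g : Y → Z}
    {s : Set X} {K : Set Y} (hK : IsCompact K) (hfK : MapsTo f s K) (hg : ContinuousOn g K)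
    (hgK : InjOn g K) (hgf : ContinuousOn (g ∘ f) s) : ContinuousOn f s := by
  have : CompactSpace K := isCompact_iff_compactSpace.mp hK
  have hemb : IsEmbedding (K.domRestrict g) :=
    (hg.domRestrict.isClosedEmbedding hgK.injective).isEmbedding
  rw [continuousOn_iff_continuous_domRestrict] at hgf ⊢
  exact continuous_subtype_val.comp (hemb.continuous_iff.mpr hgf : Continuous (hfK.restrict f s K))

namespace WeakDual

theorem continuousOn_eval_closedBall {𝕜 E : Type*} [NontriviallyNormedField 𝕜]
    [SeminormedAddCommGroup E] [NormedSpace 𝕜 E] (r : ℝ) :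
    ContinuousOn (fun p : WeakDual 𝕜 E × E => p.1 p.2)
      ((toStrongDual ⁻¹' closedBall 0 r) ×ˢ univ) := by
  rintro ⟨φ₀, v₀⟩ -
  have hsplit : (fun p : WeakDual 𝕜 E × E => p.1 p.2) =
      fun p => p.1 v₀ + p.1 (p.2 - v₀) := by
    funext p
    simp only [map_sub, add_sub_cancel]
  have hfixed : Tendsto (fun p : WeakDual 𝕜 E × E => p.1 v₀) (𝓝 (φ₀, v₀)) (𝓝 (φ₀ v₀)) :=
    ((eval_continuous v₀).comp continuous_fst).tendsto _
  have hsmall : Tendsto (fun p : WeakDual 𝕜 E × E => p.1 (p.2 - v₀))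
      (𝓝[(toStrongDual ⁻¹' closedBall 0 r) ×ˢ univ] (φ₀, v₀)) (𝓝 0) := by
    refine squeeze_zero_norm' (a := fun p => r * ‖p.2 - v₀‖) ?_ ?_
    · filter_upwards [self_mem_nhdsWithin] with p hp
      exact (toStrongDual p.1).le_of_opNorm_le (mem_closedBall_zero_iff.mp hp.1) _
    · have : Tendsto (fun p : WeakDual 𝕜 E × E => r * ‖p.2 - v₀‖) (𝓝 (φ₀, v₀))
          (𝓝 (r * ‖v₀ - v₀‖)) :=
        ((continuous_snd.sub continuous_const).norm.const_mul r).tendsto _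
      simpa using this.mono_left nhdsWithin_le_nhds
  rw [ContinuousWithinAt, hsplit]
  simpa using (hfixed.mono_left nhdsWithin_le_nhds).add hsmall

end WeakDual

section Hilbert

variable {H : Type*} [NormedAddCommGroup H] [InnerProductSpace ℝ H] [CompleteSpace H]

namespace WeakDual

noncomputable def rieszVector (φ : WeakDual ℝ H) : H :=
  (InnerProductSpace.toDual ℝ H).symm (toStrongDual φ)

theorem inner_rieszVector (φ : WeakDual ℝ H) (v : H) : ⟪rieszVector φ, v⟫ = φ v :=
  InnerProductSpace.toDual_symm_apply

theorem image_rieszVector_closedBall (r : ℝ) :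
    rieszVector '' (toStrongDual ⁻¹' closedBall (0 : StrongDual ℝ H) r) = closedBall 0 r := by
  ext x
  constructor
  · rintro ⟨φ, hφ, rfl⟩
    simpa [rieszVector] using hφ
  · intro hx
    refine ⟨StrongDual.toWeakDual (InnerProductSpace.toDual ℝ H x), ?_, ?_⟩
    · simpa using hx
    · simp [rieszVector]

end WeakDual

open WeakDual

theorem IsCompactOperator.continuousOn_comp_rieszVector {A : H →L[ℝ] H}
    (hA : IsCompactOperator A) (r : ℝ) :
    ContinuousOn (fun φ => A (rieszVector φ)) (toStrongDual ⁻¹' closedBall 0 r) := by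
  let g : H → WeakDual ℝ H := fun x => StrongDual.toWeakDual (InnerProductSpace.toDual ℝ H x)
  have hg : Continuous g :=
    NormedSpace.Dual.toWeakDual_continuous.comp (InnerProductSpace.toDual ℝ H).continuous
  have hg_inj : Function.Injective g :=
    StrongDual.toWeakDual.injective.comp (InnerProductSpace.toDual ℝ H).injective
  -- Weak-* continuity of `g ∘ A ∘ rieszVector`: its value at `u` is `φ (A† u)`.
  have hgA : Continuous fun φ => g (A (rieszVector φ)) := by
    refine continuous_of_continuous_eval fun u => ?_
    have : (fun φ => g (A (rieszVector φ)) u) = fun φ : WeakDual ℝ H => φ (A.adjoint u) := by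
      funext φ
      simp only [g, StrongDual.coe_toWeakDual, InnerProductSpace.toDual_apply_apply,
        ← ContinuousLinearMap.adjoint_inner_right, inner_rieszVector]
    rw [this]
    exact eval_continuous _
  refine ContinuousOn.of_comp_of_mapsTo_isCompact (hA.isCompact_closure_image_closedBall r)
    ?_ hg.continuousOn hg_inj.injOn hgA.continuousOn
  intro φ hφ
  refine subset_closure (mem_image_of_mem A ?_)
  rw [← image_rieszVector_closedBall]
  exact mem_image_of_mem _ hφ

end Hilbert

theorem joint_image_closed_ball_closed
    {H : Type*} [NormedAddCommGroup H] [InnerProductSpace ℝ H] [CompleteSpace H]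
    (n : ℕ) (A : Fin n → H →L[ℝ] H) (hA : ∀ i, IsCompactOperator (A i)) :
    IsClosed {y : Fin n → ℝ | ∃ x : H, ‖x‖ ≤ 1 ∧ y = fun i => ⟪A i x, x⟫} := by
  have himage : {y : Fin n → ℝ | ∃ x : H, ‖x‖ ≤ 1 ∧ y = fun i => ⟪A i x, x⟫} =
      (fun φ : WeakDual ℝ H => fun i => φ (A i (WeakDual.rieszVector φ))) ''
        (WeakDual.toStrongDual ⁻¹' closedBall 0 1) := by
    have hpull : (fun φ : WeakDual ℝ H => fun i => φ (A i (WeakDual.rieszVector φ))) =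
        (fun x i => ⟪A i x, x⟫) ∘ WeakDual.rieszVector := by
      funext φ i
      rw [Function.comp_apply, real_inner_comm, WeakDual.inner_rieszVector]
    rw [hpull, image_comp, WeakDual.image_rieszVector_closedBall]
    ext y
    simp [eq_comm]
  rw [himage]
  refine ((WeakDual.isCompact_closedBall 0 1).image_of_continuousOn ?_).isClosed
  refine continuousOn_pi.2 fun i => ?_
  exact (WeakDual.continuousOn_eval_closedBall 1).comp
    (continuousOn_id.prodMk ((hA i).continuousOn_comp_rieszVector 1)) fun φ hφ => ⟨hφ, trivial⟩
end

section
/- Let A₁, A₂ be compact selfadjoint operators on a real Hilbert space H. If (0,0) belongs to the joint numerical range W_ℝ(A₁,A₂) = {(⟨A₁x,x⟩, ⟨A₂x,x⟩) : ‖x‖ = 1}, then W_ℝ(A₁,A₂) is a closed subset of ℝ². -/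
/-!
Write `q x = (⟪A₁ x, x⟫, ⟪A₂ x, x⟫)`, so that `W = q '' sphere 0 1`. The unit ball is weakly
compact and compact operators turn weak convergence into norm convergence, so every limit point
of `W` is `q x` for some `‖x‖ ≤ 1`. In finite dimension `W` is compact anyway. Otherwise, since
`q x = ‖x‖² q (x / ‖x‖)`, it suffices that `W` contains the segment from `q v = 0` to any `q u`.
For `a = q u ≠ 0`, the vectors `z` with `q z` parallel to `a` are the isotropic vectors of the
symmetric operator `B = a₁ A₂ - a₂ A₁`. As soon as the dimension is at least `3`, the nonzero
isotropic vectors of `B` contain a preconnected set joining `u` to the line `ℝ v`, and the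
intermediate value theorem applied to `⟪a, q z⟫ / ‖z‖²` along it produces the segment.
-/

open scoped RealInnerProductSpace
open Set Filter Topology

section

variable {H : Type*} [NormedAddCommGroup H] [InnerProductSpace ℝ H]

lemma LinearMap.IsSymmetric.inner_apply_comm {B : H →ₗ[ℝ] H} (hB : B.IsSymmetric) (x y : H) :
    ⟪B x, y⟫ = ⟪B y, x⟫ := by
  rw [hB x y, real_inner_comm]

def isotropicCone (B : H →ₗ[ℝ] H) : Set H := {z | z ≠ 0 ∧ ⟪B z, z⟫ = 0}

lemma segment_subset_isotropicCone {B : H →ₗ[ℝ] H} (hB : B.IsSymmetric) {x y : H}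
    (hind : LinearIndependent ℝ ![x, y]) (hx : ⟪B x, x⟫ = 0) (hy : ⟪B y, y⟫ = 0)
    (hxy : ⟪B x, y⟫ = 0) : segment ℝ x y ⊆ isotropicCone B := by
  rintro _ ⟨a, b, -, -, hab, rfl⟩
  refine ⟨fun h => ?_, ?_⟩
  · obtain ⟨rfl, rfl⟩ := LinearIndependent.pair_iff.mp hind a b h
    norm_num at hab
  · simp only [map_add, map_smul, inner_add_left, inner_add_right, real_inner_smul_left,
      real_inner_smul_right, hx, hy, hxy, hB.inner_apply_comm y x]
    ring

lemma exists_isPreconnected_isotropicCone_of_inner_ne_zero {B : H →ₗ[ℝ] H}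
    (hB : B.IsSymmetric) {u v w : H} (hu : ⟪B u, u⟫ = 0) (hv : ⟪B v, v⟫ = 0)
    (huv : ⟪B u, v⟫ ≠ 0) (huw : ⟪B u, w⟫ = 0) (hvw : ⟪B v, w⟫ = 0) (hw : ⟪B w, w⟫ ≠ 0) :
    ∃ P ⊆ isotropicCone B, IsPreconnected P ∧ u ∈ P ∧ ∃ σ : ℝ, σ • v ∈ P := by
  set c := ⟪B u, v⟫
  set d := ⟪B w, w⟫
  -- `⟪B z, z⟫ = 2 α β c + γ² d` at `z = α u + β v + γ w`, which vanishes along this curve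
  set curve : ℝ → H := fun s => (1 - s) ^ 2 • u + (-(c * d) / 2 * s ^ 2) • v + (c * s * (1 - s)) • w
  have hvu : ⟪B v, u⟫ = c := hB.inner_apply_comm v u
  have hwu : ⟪B w, u⟫ = 0 := by rw [hB.inner_apply_comm, huw]
  have hwv : ⟪B w, v⟫ = 0 := by rw [hB.inner_apply_comm, hvw]
  refine ⟨curve '' Icc 0 1, ?_, isPreconnected_Icc.image curve (by fun_prop),
    ⟨0, by simp, by simp [curve]⟩, -(c * d) / 2, 1, by simp, by simp [curve]⟩
  rintro _ ⟨s, -, rfl⟩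
  refine ⟨fun h => ?_, ?_⟩
  · have hcv : ⟪B (curve s), v⟫ = (1 - s) ^ 2 * c := by
      simp only [curve, map_add, map_smul, inner_add_left, real_inner_smul_left, hv, hwv]
      ring
    have hcu : ⟪B (curve s), u⟫ = -(c * d) / 2 * s ^ 2 * c := by
      simp only [curve, map_add, map_smul, inner_add_left, real_inner_smul_left, hu, hvu, hwu]
      ring
    rw [h, map_zero, inner_zero_left] at hcv hcu
    have hs : s = 1 := by
      have : (1 - s) ^ 2 = 0 := (mul_eq_zero.mp hcv.symm).resolve_right huv
      linarith [pow_eq_zero_iff two_ne_zero |>.mp this]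
    subst hs
    exact mul_ne_zero (mul_ne_zero huv huv) hw (by linear_combination 2 * hcu)
  · simp only [curve, map_add, map_smul, inner_add_left, inner_add_right, real_inner_smul_left,
      real_inner_smul_right, hu, hv, huw, hvw, hwu, hwv, hvu]
    ring

lemma exists_ne_zero_inner_eq_zero_of_two_lt_rank (hdim : 2 < Module.rank ℝ H) (a b : H) :
    ∃ w ≠ 0, ⟪a, w⟫ = 0 ∧ ⟪b, w⟫ = 0 := by
  set L : H →ₗ[ℝ] ℝ × ℝ := (innerSL ℝ a : H →ₗ[ℝ] ℝ).prod (innerSL ℝ b)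
  have hker : LinearMap.ker L ≠ ⊥ := by
    intro h
    have := L.lift_rank_le_of_injective (LinearMap.ker_eq_bot (f := L) |>.mp h)
    simp only [Cardinal.lift_uzero, rank_prod, Module.rank_self,
      Cardinal.lift_add, Cardinal.lift_one] at this
    exact (this.trans_eq one_add_one_eq_two).not_gt hdim
  obtain ⟨w, hw, hw0⟩ := Submodule.ne_bot_iff _ |>.mp hker
  exact ⟨w, hw0, congrArg Prod.fst hw, congrArg Prod.snd hw⟩

lemma exists_isPreconnected_isotropicCone (hdim : 2 < Module.rank ℝ H) {B : H →ₗ[ℝ] H}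
    (hB : B.IsSymmetric) {u v : H} (hind : LinearIndependent ℝ ![u, v])
    (hu : ⟪B u, u⟫ = 0) (hv : ⟪B v, v⟫ = 0) :
    ∃ P ⊆ isotropicCone B, IsPreconnected P ∧ u ∈ P ∧ ∃ σ : ℝ, σ • v ∈ P := by
  by_cases huv : ⟪B u, v⟫ = 0
  · exact ⟨segment ℝ u v, segment_subset_isotropicCone hB hind hu hv huv,
      (convex_segment u v).isPreconnected, left_mem_segment ℝ u v, 1, by
        simpa using right_mem_segment ℝ u v⟩
  obtain ⟨w, hw0, huw, hvw⟩ := exists_ne_zero_inner_eq_zero_of_two_lt_rank hdim (B u) (B v)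
  by_cases hw : ⟪B w, w⟫ = 0
  · have hwu : ⟪B w, u⟫ = 0 := by rw [hB.inner_apply_comm, huw]
    have hwv : ⟪B w, v⟫ = 0 := by rw [hB.inner_apply_comm, hvw]
    have hind_u : LinearIndependent ℝ ![w, u] := by
      refine (LinearIndependent.pair_iff' hw0).mpr fun a h => huv ?_
      rw [← h, map_smul, inner_smul_left, hwv, mul_zero]
    have hind_v : LinearIndependent ℝ ![w, v] := by
      refine (LinearIndependent.pair_iff' hw0).mpr fun a h => huv ?_
      rw [← h, real_inner_smul_right, huw, mul_zero]
    refine ⟨segment ℝ w u ∪ segment ℝ w v,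
      union_subset (segment_subset_isotropicCone hB hind_u hw hu hwu)
        (segment_subset_isotropicCone hB hind_v hw hv hwv),
      (convex_segment w u).isPreconnected.union w (left_mem_segment ℝ w u)
        (left_mem_segment ℝ w v) (convex_segment w v).isPreconnected,
      Or.inl (right_mem_segment ℝ w u), 1, Or.inr (by simpa using right_mem_segment ℝ w v)⟩
  · exact exists_isPreconnected_isotropicCone_of_inner_ne_zero hB hu hv huv huw hvw hw

def jointForm (A₁ A₂ : H →L[ℝ] H) (x : H) : ℝ × ℝ := (⟪A₁ x, x⟫, ⟪A₂ x, x⟫)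

def jointNumericalRange (A₁ A₂ : H →L[ℝ] H) : Set (ℝ × ℝ) :=
  jointForm A₁ A₂ '' Metric.sphere 0 1

section JointForm

variable (A₁ A₂ : H →L[ℝ] H)

@[fun_prop]
lemma continuous_jointForm : Continuous (jointForm A₁ A₂) := by
  unfold jointForm; fun_prop

lemma jointForm_smul (c : ℝ) (x : H) : jointForm A₁ A₂ (c • x) = c ^ 2 • jointForm A₁ A₂ x := by
  simp only [jointForm, map_smul, real_inner_smul_left, real_inner_smul_right, Prod.smul_mk,
    smul_eq_mul]
  ring_nf

@[simp]
lemma jointForm_zero : jointForm A₁ A₂ 0 = 0 := by simp [jointForm]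

end JointForm

lemma Prod.eq_smul_of_dot_eq_of_cross_eq_zero {a p : ℝ × ℝ} (ha : a ≠ 0) {t : ℝ}
    (hdot : a.1 * p.1 + a.2 * p.2 = t * (a.1 ^ 2 + a.2 ^ 2))
    (hcross : a.1 * p.2 - a.2 * p.1 = 0) : p = t • a := by
  have hpos : a.1 ^ 2 + a.2 ^ 2 ≠ 0 := by
    contrapose! ha
    exact Prod.ext (pow_eq_zero_iff two_ne_zero |>.mp (by nlinarith [sq_nonneg a.2]))
      (pow_eq_zero_iff two_ne_zero |>.mp (by nlinarith [sq_nonneg a.1]))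
  refine Prod.ext (mul_left_cancel₀ hpos ?_) (mul_left_cancel₀ hpos ?_)
  · simp only [Prod.smul_fst, smul_eq_mul]
    linear_combination a.1 * hdot - a.2 * hcross
  · simp only [Prod.smul_snd, smul_eq_mul]
    linear_combination a.2 * hdot + a.1 * hcross

lemma linearIndependent_of_jointForm_eq_zero {A₁ A₂ : H →L[ℝ] H} {u v : H}
    (hu : jointForm A₁ A₂ u ≠ 0) (hv : v ≠ 0) (hqv : jointForm A₁ A₂ v = 0) :
    LinearIndependent ℝ ![u, v] := by
  refine LinearIndependent.pair_iff.mpr fun s r h => ?_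
  have hs : s = 0 := by
    have : s ^ 2 • jointForm A₁ A₂ u = 0 := by
      rw [← jointForm_smul, eq_neg_of_add_eq_zero_left h, ← neg_smul, jointForm_smul, hqv,
        smul_zero]
    simpa [hu] using this
  subst hs
  exact ⟨rfl, by simpa [hv] using h⟩

theorem smul_jointForm_mem_jointNumericalRange (hdim : 2 < Module.rank ℝ H)
    {A₁ A₂ : H →L[ℝ] H} (hA₁ : (A₁ : H →ₗ[ℝ] H).IsSymmetric)
    (hA₂ : (A₂ : H →ₗ[ℝ] H).IsSymmetric) (h0 : 0 ∈ jointNumericalRange A₁ A₂) {u : H}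
    (hu : ‖u‖ = 1) {t : ℝ} (ht : t ∈ Icc (0 : ℝ) 1) :
    t • jointForm A₁ A₂ u ∈ jointNumericalRange A₁ A₂ := by
  obtain ⟨v, hv, hv0⟩ := h0
  set a := jointForm A₁ A₂ u
  rcases eq_or_ne a 0 with ha | ha
  · rw [ha, smul_zero]
    exact ⟨v, hv, hv0⟩
  set B : H →ₗ[ℝ] H := a.1 • (A₂ : H →ₗ[ℝ] H) - a.2 • (A₁ : H →ₗ[ℝ] H)
  have hB : B.IsSymmetric := (hA₂.smul (conj_trivial _)).sub (hA₁.smul (conj_trivial _))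
  have hBq (z : H) :
      ⟪B z, z⟫ = a.1 * (jointForm A₁ A₂ z).2 - a.2 * (jointForm A₁ A₂ z).1 := by
    simp [B, jointForm, inner_sub_left, real_inner_smul_left]
  have hind := linearIndependent_of_jointForm_eq_zero ha
    (ne_zero_of_norm_ne_zero (by rw [mem_sphere_zero_iff_norm.mp hv]; exact one_ne_zero)) hv0
  obtain ⟨P, hPB, hP, huP, σ, hσP⟩ := exists_isPreconnected_isotropicCone hdim hB hind
    (by rw [hBq]; ring) (by rw [hBq, hv0]; simp)
  set f : H → ℝ := fun z => (a.1 * (jointForm A₁ A₂ z).1 + a.2 * (jointForm A₁ A₂ z).2) / ‖z‖ ^ 2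
  have hf : ContinuousOn f P := by
    refine ContinuousOn.div (by fun_prop) (by fun_prop) fun z hz => ?_
    exact pow_ne_zero 2 (norm_ne_zero_iff.mpr (hPB hz).1)
  have hfu : f u = a.1 ^ 2 + a.2 ^ 2 := by simp only [f, hu]; ring
  have hfv : f (σ • v) = 0 := by simp [f, jointForm_smul, hv0]
  obtain ⟨z, hzP, hfz⟩ := hP.intermediate_value hσP huP hf
    (show t * (a.1 ^ 2 + a.2 ^ 2) ∈ Icc (f (σ • v)) (f u) by
      rw [hfu, hfv]; exact ⟨by nlinarith [ht.1], by nlinarith [ht.2]⟩)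
  obtain ⟨hz0, hBz⟩ := hPB hzP
  refine ⟨‖z‖⁻¹ • z, by rw [mem_sphere_zero_iff_norm, norm_smul, norm_inv, norm_norm,
    inv_mul_cancel₀ (norm_ne_zero_iff.mpr hz0)], ?_⟩
  apply Prod.eq_smul_of_dot_eq_of_cross_eq_zero ha
  · rw [← hfz, jointForm_smul]
    simp only [f, Prod.smul_fst, Prod.smul_snd, smul_eq_mul]
    field_simp
  · rw [jointForm_smul]
    simp only [Prod.smul_fst, Prod.smul_snd, smul_eq_mul]
    linear_combination (‖z‖⁻¹ ^ 2) * ((hBq z).symm.trans hBz)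

theorem image_closedBall_subset_jointNumericalRange (hdim : 2 < Module.rank ℝ H)
    {A₁ A₂ : H →L[ℝ] H} (hA₁ : (A₁ : H →ₗ[ℝ] H).IsSymmetric)
    (hA₂ : (A₂ : H →ₗ[ℝ] H).IsSymmetric) (h0 : 0 ∈ jointNumericalRange A₁ A₂) :
    jointForm A₁ A₂ '' Metric.closedBall 0 1 ⊆ jointNumericalRange A₁ A₂ := by
  rintro _ ⟨x, hx, rfl⟩
  rcases eq_or_ne x 0 with rfl | hx0
  · rwa [jointForm_zero]
  have hnx : ‖x‖ ≠ 0 := norm_ne_zero_iff.mpr hx0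
  have hx_eq : x = ‖x‖ • (‖x‖⁻¹ • x) := by rw [smul_inv_smul₀ hnx]
  rw [hx_eq, jointForm_smul]
  refine smul_jointForm_mem_jointNumericalRange hdim hA₁ hA₂ h0 ?_
    ⟨by positivity, by simpa using mem_closedBall_zero_iff.mp hx⟩
  rw [norm_smul, norm_inv, norm_norm, inv_mul_cancel₀ hnx]

section Complete

variable [CompleteSpace H] {ι : Type*}

lemma Ultrafilter.exists_tendsto_inner_of_norm_le (U : Ultrafilter ι) {x : ι → H} {r : ℝ}
    (hx : ∀ i, ‖x i‖ ≤ r) :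
    ∃ y, ‖y‖ ≤ r ∧ ∀ w, Tendsto (fun i => ⟪x i, w⟫) U (𝓝 ⟪y, w⟫) := by
  let e := InnerProductSpace.toDual ℝ H
  let g : ι → WeakDual ℝ H := fun i => StrongDual.toWeakDual (e (x i))
  obtain ⟨φ, hφ, hgφ⟩ := (WeakDual.isCompact_closedBall 0 r).ultrafilter_le_nhds (U.map g)
    (le_principal_iff.mpr <| Ultrafilter.mem_map.mpr <|
      univ_mem' fun i => by simpa [g, e] using hx i)
  refine ⟨e.symm (WeakDual.toStrongDual φ), by simpa using hφ, fun w => ?_⟩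
  have := ((WeakDual.eval_continuous w).tendsto φ).comp hgφ
  simpa [g, e, Function.comp_def] using this

lemma IsCompactOperator.tendsto_of_tendsto_inner {F : Type*} [NormedAddCommGroup F]
    [InnerProductSpace ℝ F] [CompleteSpace F] {A : H →L[ℝ] F} (hA : IsCompactOperator A)
    {U : Ultrafilter ι} {x : ι → H} {r : ℝ} (hx : ∀ i, ‖x i‖ ≤ r) {y : H}
    (hxy : ∀ w, Tendsto (fun i => ⟪x i, w⟫) U (𝓝 ⟪y, w⟫)) :
    Tendsto (fun i => A (x i)) U (𝓝 (A y)) := by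
  obtain ⟨K, hK, hAK⟩ := IsCompactOperator.image_closedBall_subset_compact
    (f := (A : H →ₗ[ℝ] F)) hA r
  obtain ⟨z, -, hz : Tendsto (fun i => A (x i)) U (𝓝 z)⟩ :=
    hK.ultrafilter_le_nhds (U.map fun i => A (x i)) <| le_principal_iff.mpr <|
      Ultrafilter.mem_map.mpr <| univ_mem' fun i => hAK ⟨x i, by simpa using hx i, rfl⟩
  suffices z = A y by rwa [← this]
  refine ext_inner_right ℝ fun w => tendsto_nhds_unique (hz.inner tendsto_const_nhds) ?_
  simpa only [ContinuousLinearMap.adjoint_inner_right] using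
    hxy (ContinuousLinearMap.adjoint A w)

lemma IsCompactOperator.tendsto_inner_apply_self {A : H →L[ℝ] H} (hA : IsCompactOperator A)
    {U : Ultrafilter ι} {x : ι → H} {r : ℝ} (hx : ∀ i, ‖x i‖ ≤ r) {y : H}
    (hxy : ∀ w, Tendsto (fun i => ⟪x i, w⟫) U (𝓝 ⟪y, w⟫)) :
    Tendsto (fun i => ⟪A (x i), x i⟫) U (𝓝 ⟪A y, y⟫) := by
  have h₁ : Tendsto (fun i => ⟪A (x i) - A y, x i⟫) U (𝓝 0) := by
    refine squeeze_zero_norm (fun i => (norm_inner_le_norm _ _).trans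
      (mul_le_mul_of_nonneg_left (hx i) (norm_nonneg _))) ?_
    simpa using ((hA.tendsto_of_tendsto_inner hx hxy).sub_const (A y)).norm.mul_const r
  have h₂ : Tendsto (fun i => ⟪A y, x i⟫) U (𝓝 ⟪A y, y⟫) := by
    simpa [real_inner_comm (A y)] using hxy (A y)
  simpa only [inner_sub_left, sub_add_cancel, zero_add] using h₁.add h₂

lemma closure_jointNumericalRange_subset {A₁ A₂ : H →L[ℝ] H} (hA₁ : IsCompactOperator A₁)
    (hA₂ : IsCompactOperator A₂) :
    closure (jointNumericalRange A₁ A₂) ⊆ jointForm A₁ A₂ '' Metric.closedBall 0 1 := by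
  intro p hp
  obtain ⟨q, hqW, hqp⟩ := mem_closure_iff_seq_limit.mp hp
  choose x hx hxq using hqW
  have hx1 (n : ℕ) : ‖x n‖ ≤ 1 := (mem_sphere_zero_iff_norm.mp (hx n)).le
  let U := Ultrafilter.of (atTop : Filter ℕ)
  obtain ⟨y, hy, hxy⟩ := U.exists_tendsto_inner_of_norm_le hx1
  refine ⟨y, mem_closedBall_zero_iff.mpr hy,
    tendsto_nhds_unique ?_ (hqp.mono_left (Ultrafilter.of_le _))⟩
  rw [show q = fun n => jointForm A₁ A₂ (x n) from funext fun n => (hxq n).symm]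
  exact (hA₁.tendsto_inner_apply_self hx1 hxy).prodMk_nhds (hA₂.tendsto_inner_apply_self hx1 hxy)

end Complete

end

theorem joint_numerical_range_closed_of_zero_mem
    {H : Type*} [NormedAddCommGroup H] [InnerProductSpace ℝ H] [CompleteSpace H]
    (A₁ A₂ : H →L[ℝ] H)
    (hA₁c : IsCompactOperator A₁) (hA₂c : IsCompactOperator A₂)
    (hA₁s : IsSelfAdjoint A₁) (hA₂s : IsSelfAdjoint A₂)
    (h0 : (0, 0) ∈ {p : ℝ × ℝ | ∃ x : H, ‖x‖ = 1 ∧ p = (⟪A₁ x, x⟫, ⟪A₂ x, x⟫)}) :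
    IsClosed {p : ℝ × ℝ | ∃ x : H, ‖x‖ = 1 ∧ p = (⟪A₁ x, x⟫, ⟪A₂ x, x⟫)} := by
  have hW : {p : ℝ × ℝ | ∃ x : H, ‖x‖ = 1 ∧ p = (⟪A₁ x, x⟫, ⟪A₂ x, x⟫)} =
      jointNumericalRange A₁ A₂ := by
    ext p
    simp [jointNumericalRange, jointForm, eq_comm]
  rw [hW] at h0 ⊢
  by_cases hfin : FiniteDimensional ℝ H
  · exact ((isCompact_sphere 0 1).image (continuous_jointForm A₁ A₂)).isClosed
  have hdim : 2 < Module.rank ℝ H :=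
    Cardinal.natCast_lt_aleph0.trans_le (not_lt.mp (mt Module.rank_lt_aleph0_iff.mp hfin))
  exact isClosed_of_closure_subset ((closure_jointNumericalRange_subset hA₁c hA₂c).trans
    (image_closedBall_subset_jointNumericalRange hdim hA₁s.isSymmetric hA₂s.isSymmetric h0))
end

section
/- Let H be a real inner product space with 3 ≤ dim(H) ≤ ∞, A₁, A₂ bounded operators with μ₁A₁ + μ₂A₂ positive definite for some reals μ₁, μ₂, and aⱼ ∈ H, bⱼ ∈ ℝ for j = 1,2. Define φⱼ(x) = ⟨Aⱼx,x⟩ + ⟨x,aⱼ⟩ + bⱼ. Then the joint image Φ(H) = {(φ₁(x), φ₂(x)) : x ∈ H} is a convex subset of ℝ². -/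
/-!
On a finite-dimensional subspace `E` containing the two given points the positive definite
combination is coercive, so adding a large multiple of `s²` to the homogenized forms on `E × ℝ`
yields a positive definite form `B₀`. By Brickman's theorem the joint image of the `B₀`-unit
sphere under the two homogenized forms is convex when `dim (E × ℝ) ≥ 3`; hence so is the cone
over it, and the joint image of `(φ₁, φ₂)` is the slice `s = 1` of that cone.

Brickman's theorem is proved by cutting the unit sphere with the quadric `q = 0` attached to the
line through two image points: the values of any third form on this intersection form an
interval, because in dimension `≥ 3` two nonzero `q`-isotropic vectors are joined, up to sign, by
a path of nonzero isotropic vectors.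
-/

open scoped RealInnerProductSpace Convex
open Set Filter Module
open LinearMap (BilinForm)

theorem zero_notMem_segment_or_neg {V : Type*} [AddCommGroup V] [Module ℝ V] {x y : V}
    (hx : x ≠ 0) (hy : y ≠ 0) :
    (0 : V) ∉ [x -[ℝ] y] ∨ (0 : V) ∉ [x -[ℝ] -y] := by
  by_contra! h
  simp only [mem_segment_iff_sameRay, zero_sub, sub_zero] at h
  have hneg : SameRay ℝ y (-y) := h.1.symm.trans h.2 fun h0 => absurd (neg_eq_zero.mp h0) hx
  exact hy (eq_zero_of_sameRay_self_neg hneg)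

theorem exists_finiteDimensional_submodule {K M : Type*} [DivisionRing K] [AddCommGroup M]
    [Module K M] {n : ℕ} (hn : n ≤ Module.rank K M) {s : Set M} (hs : s.Finite) :
    ∃ E : Submodule K M, FiniteDimensional K E ∧ n ≤ finrank K E ∧ s ⊆ E := by
  obtain ⟨t, rfl, ht⟩ := le_rank_iff_exists_linearIndependent_finset.mp hn
  have hE := FiniteDimensional.span_of_finite K (hs.union t.finite_toSet)
  refine ⟨_, hE, ?_, subset_union_left.trans Submodule.subset_span⟩
  rw [← finrank_span_finset_eq_card ht]
  exact Submodule.finrank_mono (Submodule.span_mono subset_union_right)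

namespace LinearMap.BilinForm

section Algebraic

variable {V : Type*} [AddCommGroup V] [Module ℝ V]

theorem apply_smul_smul (B : BilinForm ℝ V) (c : ℝ) (v : V) :
    B (c • v) (c • v) = c ^ 2 * B v v := by
  simp only [map_smul, LinearMap.smul_apply, smul_eq_mul]
  ring

theorem apply_add_smul_smul (B : BilinForm ℝ V) (a b : ℝ) (x y : V) :
    B (a • x + b • y) (a • x + b • y) =
      a ^ 2 * B x x + a * b * (B x y + B y x) + b ^ 2 * B y y := by
  simp only [map_add, map_smul, LinearMap.add_apply, LinearMap.smul_apply, smul_eq_mul]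
  ring

theorem exists_smul_apply_self_eq_one {B₀ : BilinForm ℝ V} {v : V} (hv : 0 < B₀ v v) :
    ∃ c : ℝ, B₀ (c • v) (c • v) = 1 ∧
      ∀ g : BilinForm ℝ V, g (c • v) (c • v) = g v v / B₀ v v := by
  refine ⟨(√(B₀ v v))⁻¹, ?_, fun g => ?_⟩ <;>
    rw [apply_smul_smul, inv_pow, Real.sq_sqrt hv.le, inv_mul_eq_div]
  exact div_self hv.ne'

def homogenization (β : BilinForm ℝ V) (α : V →ₗ[ℝ] ℝ) (b : ℝ) : BilinForm ℝ (V × ℝ) :=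
  β.compl₁₂ (LinearMap.fst ℝ V ℝ) (LinearMap.fst ℝ V ℝ) +
    linMulLin (LinearMap.snd ℝ V ℝ) (α ∘ₗ LinearMap.fst ℝ V ℝ) +
    b • linMulLin (LinearMap.snd ℝ V ℝ) (LinearMap.snd ℝ V ℝ)

@[simp]
theorem homogenization_apply (β : BilinForm ℝ V) (α : V →ₗ[ℝ] ℝ) (b : ℝ) (x y : V)
    (s t : ℝ) :
    homogenization β α b (x, s) (y, t) = β x y + s * α y + b * (s * t) := by
  simp [homogenization, linMulLin_apply]

def punctNullCone (q : BilinForm ℝ V) : Set V := {v | v ≠ 0 ∧ q v v = 0}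

theorem neg_mem_punctNullCone {q : BilinForm ℝ V} {v : V} (hv : v ∈ q.punctNullCone) :
    -v ∈ q.punctNullCone :=
  ⟨neg_ne_zero.mpr hv.1, by simpa using hv.2⟩

theorem exists_ne_zero_apply_eq_zero [FiniteDimensional ℝ V] (hV : 3 ≤ finrank ℝ V)
    (q : BilinForm ℝ V) (x y : V) : ∃ w ≠ 0, q x w = 0 ∧ q y w = 0 := by
  have hker : LinearMap.ker ((q x).prod (q y)) ≠ ⊥ :=
    LinearMap.ker_ne_bot_of_finrank_lt (by rw [finrank_prod, finrank_self]; omega)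
  obtain ⟨w, hw, hw0⟩ := (Submodule.ne_bot_iff _).mp hker
  exact ⟨w, hw0, Prod.mk_eq_zero.mp hw⟩

variable {q : BilinForm ℝ V} {x y w : V}

theorem segment_subset_punctNullCone (hq : ∀ u v, q u v = q v u) (hxx : q x x = 0)
    (hyy : q y y = 0) (hxy : q x y = 0) (h0 : (0 : V) ∉ [x -[ℝ] y]) :
    [x -[ℝ] y] ⊆ q.punctNullCone := by
  rintro _ ⟨a, b, ha, hb, hab, rfl⟩
  refine ⟨fun h => h0 ⟨a, b, ha, hb, hab, h⟩, ?_⟩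
  rw [apply_add_smul_smul, hxx, hyy, hq y x, hxy]
  ring

section Topology

variable [TopologicalSpace V] [IsTopologicalAddGroup V] [ContinuousSMul ℝ V]

theorem exists_joinedIn_punctNullCone_of_apply_eq_zero (hq : ∀ u v, q u v = q v u)
    (hx : x ∈ q.punctNullCone) (hy : y ∈ q.punctNullCone) (hxy : q x y = 0) :
    ∃ y' ∈ ({y, -y} : Set V), JoinedIn q.punctNullCone x y' := by
  rcases zero_notMem_segment_or_neg hx.1 hy.1 with h | h
  · exact ⟨y, by simp, .of_segment_subset (segment_subset_punctNullCone hq hx.2 hy.2 hxy h)⟩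
  · refine ⟨-y, by simp, .of_segment_subset (segment_subset_punctNullCone hq hx.2 ?_ ?_ h)⟩
    · simpa using hy.2
    · simpa using hxy

/-- When `q x y` and `q w w` have opposite signs, `q` vanishes on the curve
`t ↦ (1 - t)² x + t² y + λ t (1 - t) w` for `λ² = -2 q x y / q w w`. -/
theorem joinedIn_punctNullCone_of_mul_neg (hq : ∀ u v, q u v = q v u)
    (hx : x ∈ q.punctNullCone) (hy : y ∈ q.punctNullCone) (hxw : q x w = 0) (hyw : q y w = 0)
    (hsign : q x y * q w w < 0) : JoinedIn q.punctNullCone x y := by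
  have hxy : q x y ≠ 0 := left_ne_zero_of_mul hsign.ne
  have hww : q w w ≠ 0 := right_ne_zero_of_mul hsign.ne
  set l := √(-2 * q x y / q w w)
  have hl : l ^ 2 * q w w = -2 * q x y := by
    have : q x y / q w w < 0 := div_neg_iff.mpr (mul_neg_iff.mp hsign)
    rw [Real.sq_sqrt (by rw [mul_div_assoc]; linarith)]
    field_simp
  let γ : ℝ → V := fun t => (1 - t) ^ 2 • x + t ^ 2 • y + (l * t * (1 - t)) • w
  refine .ofLine (f := γ) (by fun_prop) (by simp [γ]) (by simp [γ]) ?_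
  rintro _ ⟨t, -, rfl⟩
  refine ⟨fun h => ?_, ?_⟩
  · have hxγ := congrArg (q x) h
    simp only [γ, map_add, map_smul, smul_eq_mul, hx.2, hxw, map_zero] at hxγ
    have ht : t = 0 := by simpa [hxy] using hxγ
    simp [γ, ht, hx.1] at h
  · simp only [γ, map_add, map_smul, LinearMap.add_apply, LinearMap.smul_apply, smul_eq_mul,
      hx.2, hy.2, hxw, hyw, hq w x, hq w y, hq y x]
    linear_combination (t ^ 2 * (1 - t) ^ 2) * hl

theorem exists_joinedIn_punctNullCone [FiniteDimensional ℝ V] (hV : 3 ≤ finrank ℝ V)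
    (hq : ∀ u v, q u v = q v u) (hx : x ∈ q.punctNullCone) (hy : y ∈ q.punctNullCone) :
    ∃ y' ∈ ({y, -y} : Set V), JoinedIn q.punctNullCone x y' := by
  by_cases hxy : q x y = 0
  · exact exists_joinedIn_punctNullCone_of_apply_eq_zero hq hx hy hxy
  obtain ⟨w, hw, hxw, hyw⟩ := exists_ne_zero_apply_eq_zero hV q x y
  rcases lt_trichotomy (q x y * q w w) 0 with h | h | h
  · exact ⟨y, by simp, joinedIn_punctNullCone_of_mul_neg hq hx hy hxw hyw h⟩
  · -- `w` is itself isotropic: go from `x` to `±w` and on to `±y` along segments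
    have hww : q w w = 0 := (mul_eq_zero.mp h).resolve_left hxy
    obtain ⟨w', hw', hxw'⟩ :=
      exists_joinedIn_punctNullCone_of_apply_eq_zero hq hx ⟨hw, hww⟩ hxw
    have hw'y : q w' y = 0 := by rcases hw' with rfl | rfl <;> simp [hq _ y, hyw]
    obtain ⟨y', hy', hw'y'⟩ :=
      exists_joinedIn_punctNullCone_of_apply_eq_zero hq hxw'.target_mem hy hw'y
    exact ⟨y', hy', hxw'.trans hw'y'⟩
  · exact ⟨-y, by simp, joinedIn_punctNullCone_of_mul_neg hq hx (neg_mem_punctNullCone hy)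
      hxw (by simp [hyw]) (by simpa using h)⟩

end Topology

end Algebraic

section Normed

variable {V : Type*} [NormedAddCommGroup V] [NormedSpace ℝ V] [FiniteDimensional ℝ V]

theorem continuous_apply_self (B : BilinForm ℝ V) : Continuous fun v => B v v :=
  B.toContinuousBilinearMap.continuous₂.comp (continuous_id.prodMk continuous_id)

theorem exists_pos_mul_norm_sq_le {β : BilinForm ℝ V} (hβ : ∀ x ≠ 0, 0 < β x x) :
    ∃ c > 0, ∀ x, c * ‖x‖ ^ 2 ≤ β x x := by
  rcases subsingleton_or_nontrivial V with _ | _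
  · exact ⟨1, one_pos, fun x => by simp [Subsingleton.elim x 0]⟩
  obtain ⟨v, hv, hmin⟩ := (isCompact_sphere (0 : V) 1).exists_isMinOn
    (NormedSpace.sphere_nonempty.mpr zero_le_one) β.continuous_apply_self.continuousOn
  have hv0 : v ≠ 0 := ne_zero_of_mem_unit_sphere ⟨v, hv⟩
  refine ⟨β v v, hβ v hv0, fun x => ?_⟩
  rcases eq_or_ne x 0 with rfl | hx
  · simp
  have hx' : ‖x‖ ≠ 0 := norm_ne_zero_iff.mpr hx
  have hle : β v v ≤ β (‖x‖⁻¹ • x) (‖x‖⁻¹ • x) :=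
    hmin (by simp [norm_smul, hx'])
  rw [apply_smul_smul, inv_pow, inv_mul_eq_div, le_div_iff₀ (by positivity)] at hle
  exact hle

theorem eventually_pos_homogenization {β : BilinForm ℝ V} (hβ : ∀ x ≠ 0, 0 < β x x)
    (α : V →ₗ[ℝ] ℝ) : ∀ᶠ b in atTop, ∀ p ≠ 0, 0 < homogenization β α b p p := by
  obtain ⟨c, hc, hcβ⟩ := exists_pos_mul_norm_sq_le hβ
  set K := ‖LinearMap.toContinuousLinearMap α‖
  filter_upwards [eventually_gt_atTop (K ^ 2 / (4 * c))] with b hb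
  rintro ⟨x, s⟩ hp
  rw [homogenization_apply]
  rcases eq_or_ne s 0 with rfl | hs
  · simpa using hβ x (by simpa using hp)
  -- `|s α x| ≤ K |s| ‖x‖`, and `c X² - K X Y + b Y² > 0` for `Y ≠ 0` since `K² < 4 b c`
  have hα : |s * α x| ≤ K * |s| * ‖x‖ := by
    rw [abs_mul, mul_comm K, mul_assoc]
    exact mul_le_mul_of_nonneg_left ((LinearMap.toContinuousLinearMap α).le_opNorm x)
      (abs_nonneg s)
  have hb' : K ^ 2 < 4 * c * b := by rwa [div_lt_iff₀ (by positivity), mul_comm] at hb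
  have hs' : 0 < |s| := abs_pos.mpr hs
  nlinarith [hcβ x, neg_abs_le (s * α x), sq_abs s, sq_nonneg (2 * c * ‖x‖ - K * |s|),
    mul_pos hs' hs']

theorem ordConnected_image_unitSphere_inter_nullCone (hV : 3 ≤ finrank ℝ V)
    {B₀ q : BilinForm ℝ V} (hB₀ : ∀ v ≠ 0, 0 < B₀ v v) (hq : ∀ u v, q u v = q v u)
    (g : BilinForm ℝ V) :
    OrdConnected ((fun z => g z z) '' {z | B₀ z z = 1 ∧ q z z = 0}) := by
  refine ⟨?_⟩
  rintro _ ⟨x, ⟨hx1, hx0⟩, rfl⟩ _ ⟨y, ⟨hy1, hy0⟩, rfl⟩ m hm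
  have hC : ∀ v, B₀ v v = 1 → q v v = 0 → v ∈ q.punctNullCone :=
    fun v h1 h0 => ⟨by rintro rfl; simp at h1, h0⟩
  obtain ⟨y', hy', hxy'⟩ := exists_joinedIn_punctNullCone hV hq (hC x hx1 hx0) (hC y hy1 hy0)
  have hgy' : g y' y' = g y y ∧ B₀ y' y' = B₀ y y := by rcases hy' with rfl | rfl <;> simp
  let γ := hxy'.somePath
  have hγ : ∀ t, γ t ∈ q.punctNullCone := hxy'.somePath_mem
  have hf : Continuous fun t => g (γ t) (γ t) / B₀ (γ t) (γ t) :=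
    (g.continuous_apply_self.comp γ.continuous).div
      (B₀.continuous_apply_self.comp γ.continuous) fun t => (hB₀ _ (hγ t).1).ne'
  obtain ⟨t, rfl⟩ := intermediate_value_univ 0 1 hf (by simpa [γ, hx1, hgy', hy1] using hm)
  obtain ⟨c, hc1, hcg⟩ := exists_smul_apply_self_eq_one (hB₀ _ (hγ t).1)
  exact ⟨c • γ t, ⟨hc1, by rw [apply_smul_smul, (hγ t).2, mul_zero]⟩, hcg g⟩

end Normed

end LinearMap.BilinForm

open LinearMap.BilinForm

section

variable {V : Type*} [NormedAddCommGroup V] [NormedSpace ℝ V] [FiniteDimensional ℝ V]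

/-- Brickman's theorem. -/
theorem convex_image_unitSphere (hV : 3 ≤ finrank ℝ V) {B₀ : BilinForm ℝ V}
    (hB₀ : ∀ v ≠ 0, 0 < B₀ v v) (g₁ g₂ : BilinForm ℝ V) :
    Convex ℝ ((fun z => (g₁ z z, g₂ z z)) '' {z | B₀ z z = 1}) := by
  rintro _ ⟨x, hx, rfl⟩ _ ⟨y, hy, rfl⟩ a b ha hb hab
  set d₁ := g₁ y y - g₁ x x with hd₁
  set d₂ := g₂ y y - g₂ x x with hd₂
  by_cases hd : d₁ = 0 ∧ d₂ = 0
  · have hxy : (g₁ y y, g₂ y y) = (g₁ x x, g₂ x x) := by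
      simp only [d₁, d₂, sub_eq_zero] at hd
      rw [hd.1, hd.2]
    refine ⟨x, hx, ?_⟩
    change (g₁ x x, g₂ x x) = a • (g₁ x x, g₂ x x) + b • (g₁ y y, g₂ y y)
    rw [hxy, ← add_smul, hab, one_smul]
  obtain rfl : a = 1 - b := eq_sub_of_add_eq hab
  -- On the unit sphere, `q` vanishes exactly where `(g₁, g₂)` lies on the line through the
  -- two points, and `g` is the coordinate along that line.
  set q := d₂ • g₁ - d₁ • g₂ - (d₂ * g₁ x x - d₁ * g₂ x x) • B₀
  set g := d₁ • g₁ + d₂ • g₂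
  have hq : ∀ z, B₀ z z = 1 →
      (q + q.flip) z z = 2 * (d₂ * (g₁ z z - g₁ x x) - d₁ * (g₂ z z - g₂ x x)) := by
    intro z hz
    simp only [LinearMap.add_apply, LinearMap.BilinForm.flip_apply, q, LinearMap.sub_apply,
      LinearMap.smul_apply, smul_eq_mul, hz]
    ring
  have hg : ∀ z, g z z = d₁ * g₁ z z + d₂ * g₂ z z := fun z => rfl
  have hle : 0 ≤ g y y - g x x := by
    rw [show g y y - g x x = d₁ ^ 2 + d₂ ^ 2 by rw [hg, hg, hd₁, hd₂]; ring]
    positivity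
  have hS := ordConnected_image_unitSphere_inter_nullCone hV hB₀
    (q := q + q.flip) (fun u v => add_comm _ _) g
  obtain ⟨z, ⟨hz1, hzq⟩, hzg⟩ := hS.out
    ⟨x, ⟨hx, by rw [hq x hx]; ring⟩, rfl⟩ ⟨y, ⟨hy, by rw [hq y hy]; ring⟩, rfl⟩
    (show (1 - b) * g x x + b * g y y ∈ Icc (g x x) (g y y) from
      ⟨by nlinarith [mul_nonneg hb hle], by nlinarith [mul_nonneg ha hle]⟩)
  refine ⟨z, hz1, ?_⟩
  rw [hq z hz1] at hzq
  dsimp only at hzg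
  rw [hg, hg, hg] at hzg
  change (g₁ z z, g₂ z z) = (1 - b) • (g₁ x x, g₂ x x) + b • (g₁ y y, g₂ y y)
  simp only [Prod.smul_mk, Prod.mk_add_mk, smul_eq_mul, Prod.mk.injEq]
  have hd' : d₁ ^ 2 + d₂ ^ 2 ≠ 0 := by
    contrapose! hd
    constructor <;> nlinarith
  constructor
  · apply mul_left_cancel₀ hd'
    linear_combination d₁ * hzg + d₂ * hzq / 2
  · apply mul_left_cancel₀ hd'
    linear_combination d₂ * hzg - d₁ * hzq / 2

/-- Polyak's theorem, homogeneous case. -/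
theorem convex_image_ne_zero (hV : 3 ≤ finrank ℝ V) {B₀ : BilinForm ℝ V}
    (hB₀ : ∀ v ≠ 0, 0 < B₀ v v) (g₁ g₂ : BilinForm ℝ V) :
    Convex ℝ ((fun v => ((g₁ v v, g₂ v v), B₀ v v)) '' {v | v ≠ 0}) := by
  set S := ((fun z => (g₁ z z, g₂ z z)) '' {z | B₀ z z = 1}) ×ˢ {(1 : ℝ)}
  have hS : Convex ℝ S := (convex_image_unitSphere hV hB₀ g₁ g₂).prod (convex_singleton 1)
  suffices (fun v => ((g₁ v v, g₂ v v), B₀ v v)) '' {v | v ≠ 0} = ConvexCone.hull ℝ S by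
    rw [this]
    exact (ConvexCone.hull ℝ S).convex
  ext p
  rw [SetLike.mem_coe, ConvexCone.mem_hull_of_convex hS]
  constructor
  · rintro ⟨v, hv, rfl⟩
    obtain ⟨c, hc1, hcg⟩ := exists_smul_apply_self_eq_one (hB₀ v hv)
    refine ⟨B₀ v v, hB₀ v hv, mem_smul_set.mpr
      ⟨((g₁ (c • v) (c • v), g₂ (c • v) (c • v)), 1), ⟨⟨c • v, hc1, rfl⟩, rfl⟩, ?_⟩⟩
    simp only [hcg, Prod.smul_mk, smul_eq_mul, mul_one]
    field_simp [(hB₀ v hv).ne']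
  · rintro ⟨r, hr, hp⟩
    obtain ⟨⟨_, _⟩, ⟨⟨z, hz, rfl⟩, rfl⟩, rfl⟩ := mem_smul_set.mp hp
    have hv : B₀ (√r • z) (√r • z) = r := by
      rw [apply_smul_smul, Real.sq_sqrt hr.le, hz, mul_one]
    refine ⟨√r • z, fun h => ?_, ?_⟩
    · rw [h, map_zero] at hv
      exact hr.ne hv
    · simp only [hv, apply_smul_smul, Real.sq_sqrt hr.le, Prod.smul_mk, smul_eq_mul, mul_one]

theorem convex_image_affine_slice (hV : 3 ≤ finrank ℝ V) (g₁ g₂ : BilinForm ℝ V)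
    (ℓ : V →ₗ[ℝ] ℝ) {μ₁ μ₂ μ₃ : ℝ} (hμ₃ : μ₃ ≠ 0)
    (hpos : ∀ v ≠ 0, 0 < μ₁ * g₁ v v + μ₂ * g₂ v v + μ₃ * ℓ v ^ 2) :
    Convex ℝ ((fun v => (g₁ v v, g₂ v v)) '' {v | ℓ v = 1}) := by
  set B₀ := μ₁ • g₁ + μ₂ • g₂ + μ₃ • linMulLin ℓ ℓ
  have hB₀ : ∀ v, B₀ v v = μ₁ * g₁ v v + μ₂ * g₂ v v + μ₃ * ℓ v ^ 2 := fun v => by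
    simp [B₀, linMulLin_apply, sq]
  have hK := convex_image_ne_zero hV (B₀ := B₀) (fun v hv => hB₀ v ▸ hpos v hv) g₁ g₂
  -- on the slice `ℓ = 1` the third coordinate is an affine function of the first two
  have hmem : ∀ v, ℓ v = 1 → ((g₁ v v, g₂ v v), μ₁ * g₁ v v + μ₂ * g₂ v v + μ₃) ∈
      (fun v => ((g₁ v v, g₂ v v), B₀ v v)) '' {v | v ≠ 0} := fun v hv =>
    ⟨v, by rintro rfl; simp at hv, by simp [hB₀, hv]⟩
  rintro _ ⟨v, hv, rfl⟩ _ ⟨v', hv', rfl⟩ a b ha hb hab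
  obtain ⟨u, -, hu⟩ := hK (hmem v hv) (hmem v' hv') ha hb hab
  simp only [Prod.smul_mk, Prod.mk_add_mk, smul_eq_mul, Prod.mk.injEq, hB₀] at hu
  obtain ⟨⟨hu₁, hu₂⟩, hu₃⟩ := hu
  have hℓ : ℓ u ^ 2 = 1 := by
    apply mul_left_cancel₀ hμ₃
    linear_combination hu₃ - μ₁ * hu₁ - μ₂ * hu₂ + μ₃ * hab
  refine ⟨ℓ u • u, show ℓ (ℓ u • u) = 1 by rw [map_smul, smul_eq_mul, ← sq, hℓ], ?_⟩
  simp only [apply_smul_smul, hℓ, one_mul, hu₁, hu₂, Prod.smul_mk, Prod.mk_add_mk,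
    smul_eq_mul]

end

theorem convex_range_quadratic_of_finiteDimensional {W : Type*} [NormedAddCommGroup W]
    [NormedSpace ℝ W] [FiniteDimensional ℝ W] (hW : 2 ≤ finrank ℝ W) (β₁ β₂ : BilinForm ℝ W)
    (α₁ α₂ : W →ₗ[ℝ] ℝ) (b₁ b₂ : ℝ) {μ₁ μ₂ : ℝ}
    (hpos : ∀ x ≠ 0, 0 < μ₁ * β₁ x x + μ₂ * β₂ x x) :
    Convex ℝ (range fun x => (β₁ x x + α₁ x + b₁, β₂ x x + α₂ x + b₂)) := by
  have hV : 3 ≤ finrank ℝ (W × ℝ) := by rw [finrank_prod, finrank_self]; omega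
  have hβ : ∀ x ≠ 0, 0 < (μ₁ • β₁ + μ₂ • β₂) x x := fun x hx => by simpa using hpos x hx
  obtain ⟨b, hb, hb'⟩ := ((eventually_pos_homogenization hβ (μ₁ • α₁ + μ₂ • α₂)).and
    (eventually_ne_atTop (μ₁ * b₁ + μ₂ * b₂))).exists
  have hslice := convex_image_affine_slice hV (β₁.homogenization α₁ b₁)
    (β₂.homogenization α₂ b₂) (LinearMap.snd ℝ W ℝ) (μ₁ := μ₁) (μ₂ := μ₂) (sub_ne_zero.mpr hb')
    fun ⟨x, s⟩ hp => by
      convert hb (x, s) hp using 1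
      simp
      ring
  convert hslice using 1
  ext p
  constructor
  · rintro ⟨x, rfl⟩
    exact ⟨(x, 1), rfl, by simp⟩
  · rintro ⟨⟨x, s⟩, rfl : s = 1, rfl⟩
    exact ⟨x, by simp⟩

theorem polyak_convexity_nonhomogeneous_general
    {H : Type*} [NormedAddCommGroup H] [InnerProductSpace ℝ H]
    (hdim : 3 ≤ Module.rank ℝ H)
    (A₁ A₂ : H →L[ℝ] H) (μ₁ μ₂ : ℝ)
    (hpos : ∀ x : H, x ≠ 0 → 0 < ⟪(μ₁ • A₁ + μ₂ • A₂) x, x⟫)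
    (a₁ a₂ : H) (b₁ b₂ : ℝ) :
    Convex ℝ {p : ℝ × ℝ | ∃ x : H,
      p = (⟪A₁ x, x⟫ + ⟪x, a₁⟫ + b₁, ⟪A₂ x, x⟫ + ⟪x, a₂⟫ + b₂)} := by
  rintro _ ⟨u₀, rfl⟩ _ ⟨u₁, rfl⟩ a b ha hb hab
  obtain ⟨E, hE, hdimE, hu⟩ :=
    exists_finiteDimensional_submodule (n := 3) hdim (toFinite {u₀, u₁})
  let β : (H →L[ℝ] H) → BilinForm ℝ E := fun A =>
    (innerₗ H).compl₁₂ (A ∘ₗ E.subtype) E.subtype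
  let α : H → E →ₗ[ℝ] ℝ := fun a => (innerₗ H).flip a ∘ₗ E.subtype
  have hconv := convex_range_quadratic_of_finiteDimensional (by omega) (β A₁) (β A₂)
    (α a₁) (α a₂) b₁ b₂ (μ₁ := μ₁) (μ₂ := μ₂) fun x hx => by
      simpa [β, inner_add_left, real_inner_smul_left] using hpos x (by simpa using hx)
  obtain ⟨x, hx⟩ := hconv ⟨⟨u₀, hu (by simp)⟩, rfl⟩ ⟨⟨u₁, hu (by simp)⟩, rfl⟩ ha hb hab
  exact ⟨x, by simpa [β, α, real_inner_comm] using hx.symm⟩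

theorem polyak_convexity_nonhomogeneous
    {H : Type*} [NormedAddCommGroup H] [InnerProductSpace ℝ H]
    (hdim : 3 ≤ Module.rank ℝ H)
    (A₁ A₂ : H →L[ℝ] H) (μ₁ μ₂ : ℝ)
    (hsymm : ∀ x y : H, ⟪(μ₁ • A₁ + μ₂ • A₂) x, y⟫ = ⟪x, (μ₁ • A₁ + μ₂ • A₂) y⟫)
    (hpos : ∀ x : H, x ≠ 0 → 0 < ⟪(μ₁ • A₁ + μ₂ • A₂) x, x⟫)
    (a₁ a₂ : H) (b₁ b₂ : ℝ) :
    Convex ℝ {p : ℝ × ℝ | ∃ x : H,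
      p = (⟪A₁ x, x⟫ + ⟪x, a₁⟫ + b₁, ⟪A₂ x, x⟫ + ⟪x, a₂⟫ + b₂)} :=
  polyak_convexity_nonhomogeneous_general hdim A₁ A₂ μ₁ μ₂ hpos a₁ a₂ b₁ b₂
end

section
/- Let H be a real Hilbert space with 3 ≤ dim(H) ≤ ∞, A₁, A₂ selfadjoint bounded operators, a₁, a₂ ∈ H, b₁, b₂ ∈ ℝ, and φⱼ(x) = ⟨Aⱼx,x⟩ + ⟨x,aⱼ⟩ + bⱼ. Suppose there exist linear combinations Ã₁ = α₁A₁ + α₂A₂ and Ã₂ = β₁A₁ + β₂A₂ with α₁β₂ − α₂β₁ ≠ 0, Ã₁ compact with ⟨Ã₁x,x⟩ = 0 for some x ≠ 0, and Ã₂ positive definite and invertible. Then Φ(H) = {(φ₁(x), φ₂(x)) : x ∈ H} is both convex and closed in ℝ². -/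
/-!
Taking the combinations `B₁ = α₁ A₁ + α₂ A₂`, `B₂ = β₁ A₁ + β₂ A₂` of the two coordinates and
translating `x` by the solution `w` of `2 B₂ w = β₁ a₁ + β₂ a₂` (which exists since `B₂` is
coercive) turns the image into the preimage, under an invertible affine map of the plane, of the
range of `y ↦ (⟪B₁ y, y⟫ + ⟪y, g⟫, ⟪B₂ y, y⟫)`. In dimension at least two every level set
`⟪B₂ y, y⟫ = t` is path-connected, so a point `(r, t)` lies in this range as soon as the level set
contains points whose first coordinates lie below and above `r`.

For convexity these points come from moving a convex combination of two points, inside their span,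
along a maximiser (or minimiser) of the Rayleigh quotient of `B₁` relative to `B₂` up to the right
level set. For closedness they come from the weak limit of an ultrafilter approximating a point of
the closure: by compactness of `B₁` it has the right first coordinate, by weak lower
semicontinuity its second coordinate can only be smaller, and moving it along a nonzero vector
isotropic for `B₁` reaches the right level set in both directions.
-/

open scoped RealInnerProductSpace

section

open Set Submodule Filter Topology InnerProductSpace

variable {E : Type*} [NormedAddCommGroup E] [InnerProductSpace ℝ E]

namespace LinearMap.IsSymmetric

variable {B : E →L[ℝ] E}

lemma inner_apply_comm_s14 (hB : (B : E →ₗ[ℝ] E).IsSymmetric) (x y : E) : ⟪B x, y⟫ = ⟪B y, x⟫ := by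
  rw [real_inner_comm]
  exact (hB y x).symm

lemma inner_apply_add_smul_self (hB : (B : E →ₗ[ℝ] E).IsSymmetric) (x e : E) (γ : ℝ) :
    ⟪B (x + γ • e), x + γ • e⟫ = ⟪B x, x⟫ + 2 * γ * ⟪B x, e⟫ + γ ^ 2 * ⟪B e, e⟫ := by
  simp only [map_add, map_smul, inner_add_left, inner_add_right, real_inner_smul_left,
    real_inner_smul_right, hB.inner_apply_comm_s14 e x]
  ring

lemma inner_apply_sub_self (hB : (B : E →ₗ[ℝ] E).IsSymmetric) (x w : E) :
    ⟪B (x - w), x - w⟫ = ⟪B x, x⟫ - 2 * ⟪B x, w⟫ + ⟪B w, w⟫ := by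
  simp only [map_sub, inner_sub_left, inner_sub_right, hB.inner_apply_comm_s14 w x]
  ring

lemma inner_apply_smul_add_smul_self (hB : (B : E →ₗ[ℝ] E).IsSymmetric) {a b : ℝ}
    (hab : a + b = 1) (x y : E) :
    ⟪B (a • x + b • y), a • x + b • y⟫ =
      a * ⟪B x, x⟫ + b * ⟪B y, y⟫ - a * b * ⟪B (x - y), x - y⟫ := by
  obtain rfl : b = 1 - a := by linarith
  simp only [map_add, map_smul, map_sub, inner_add_left, inner_add_right, inner_sub_left,
    inner_sub_right, real_inner_smul_left, real_inner_smul_right, hB.inner_apply_comm_s14 y x]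
  ring

lemma inner_apply_eq_zero_of_nonpos (hB : (B : E →ₗ[ℝ] E).IsSymmetric) {V : Submodule ℝ E}
    (hneg : ∀ z ∈ V, ⟪B z, z⟫ ≤ 0) {e : E} (he : e ∈ V) (he₀ : ⟪B e, e⟫ = 0) {v : E}
    (hv : v ∈ V) : ⟪B e, v⟫ = 0 := by
  by_contra hne
  obtain ⟨γ, hγ⟩ : ∃ γ : ℝ, 2 * γ * ⟪B e, v⟫ = 1 - ⟪B v, v⟫ :=
    ⟨(1 - ⟪B v, v⟫) / (2 * ⟪B e, v⟫), by field_simp⟩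
  have key := hneg (v + γ • e) (V.add_mem hv (V.smul_mem γ he))
  rw [hB.inner_apply_add_smul_self, he₀, hB.inner_apply_comm_s14 v e, hγ] at key
  linarith

end LinearMap.IsSymmetric

lemma inner_apply_smul_self (B : E →L[ℝ] E) (c : ℝ) (x : E) :
    ⟪B (c • x), c • x⟫ = c ^ 2 * ⟪B x, x⟫ := by
  simp only [map_smul, real_inner_smul_left, real_inner_smul_right]
  ring

lemma exists_sq_mul_eq_one {a : ℝ} (ha : 0 < a) : ∃ c : ℝ, c ^ 2 * a = 1 :=
  ⟨(√a)⁻¹, by rw [inv_pow, Real.sq_sqrt ha.le, inv_mul_cancel₀ ha.ne']⟩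

lemma inner_apply_self_pos_of_coercive {B : E →L[ℝ] E} {δ : ℝ} (hδ : 0 < δ)
    (hcoer : ∀ x, δ * ‖x‖ ^ 2 ≤ ⟪B x, x⟫) (x : E) (hx : x ≠ 0) : 0 < ⟪B x, x⟫ :=
  (by positivity : 0 < δ * ‖x‖ ^ 2).trans_le (hcoer x)

lemma inner_apply_self_nonneg_of_pos {B : E →L[ℝ] E} (hpos : ∀ x ≠ 0, 0 < ⟪B x, x⟫) (x : E) :
    0 ≤ ⟪B x, x⟫ := by
  rcases eq_or_ne x 0 with rfl | hx
  · simp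
  · exact (hpos x hx).le

lemma le_div_add_one_of_mul_sq_le {δ C r : ℝ} (hδ : 0 < δ) (h : δ * r ^ 2 ≤ C) :
    r ≤ C / δ + 1 := by
  have : r ^ 2 ≤ C / δ := by
    rw [le_div_iff₀ hδ, mul_comm]
    exact h
  nlinarith [sq_nonneg (r - 1)]

lemma Submodule.exists_forall_inner_apply_le_mul (B₁ : E →L[ℝ] E) {B₂ : E →L[ℝ] E} {δ : ℝ}
    (hδ : 0 < δ) (hcoer : ∀ x, δ * ‖x‖ ^ 2 ≤ ⟪B₂ x, x⟫) (V : Submodule ℝ E)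
    [FiniteDimensional ℝ V] {v : E} (hv : v ∈ V) (hv₀ : v ≠ 0) :
    ∃ e ∈ V, ⟪B₂ e, e⟫ = 1 ∧ ∀ z ∈ V, ⟪B₁ z, z⟫ ≤ ⟪B₁ e, e⟫ * ⟪B₂ z, z⟫ := by
  have hpos := inner_apply_self_pos_of_coercive hδ hcoer
  set K : Set V := {z | ⟪B₂ z, z⟫ = 1}
  have hK : IsCompact K := by
    refine Metric.isCompact_of_isClosed_isBounded (isClosed_eq (by fun_prop) continuous_const)
      (isBounded_iff_forall_norm_le.2 ⟨1 / δ + 1, fun z hz => ?_⟩)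
    exact le_div_add_one_of_mul_sq_le hδ ((hcoer z).trans (mem_ofPred_eq.mp hz).le)
  obtain ⟨c, hc⟩ := exists_sq_mul_eq_one (hpos v hv₀)
  obtain ⟨e, he, hmax⟩ := hK.exists_isMaxOn ⟨⟨c • v, V.smul_mem c hv⟩, by
      change ⟪B₂ (c • v), c • v⟫ = 1
      rw [inner_apply_smul_self, hc]⟩
    (by fun_prop : Continuous fun z : V => ⟪B₁ z, z⟫).continuousOn
  refine ⟨e, e.2, he, fun z hz => ?_⟩
  rcases eq_or_ne z 0 with rfl | hz₀
  · simp
  obtain ⟨c, hc⟩ := exists_sq_mul_eq_one (hpos z hz₀)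
  have hcz : c ^ 2 * ⟪B₁ z, z⟫ ≤ ⟪B₁ e, e⟫ :=
    (inner_apply_smul_self B₁ c z).symm.trans_le <| hmax (a := ⟨c • z, V.smul_mem c hz⟩)
      (show ⟪B₂ (c • z), c • z⟫ = 1 by rw [inner_apply_smul_self, hc])
  calc ⟪B₁ z, z⟫ = (c ^ 2 * ⟪B₂ z, z⟫) * ⟪B₁ z, z⟫ := by rw [hc, one_mul]
    _ = (c ^ 2 * ⟪B₁ z, z⟫) * ⟪B₂ z, z⟫ := by ring
    _ ≤ ⟪B₁ e, e⟫ * ⟪B₂ z, z⟫ := mul_le_mul_of_nonneg_right hcz (hpos z hz₀).le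

lemma inner_apply_eq_mul_of_forall_le_mul {B₁ B₂ : E →L[ℝ] E}
    (hB₁ : (B₁ : E →ₗ[ℝ] E).IsSymmetric) (hB₂ : (B₂ : E →ₗ[ℝ] E).IsSymmetric)
    {V : Submodule ℝ E} {m : ℝ} (hmax : ∀ z ∈ V, ⟪B₁ z, z⟫ ≤ m * ⟪B₂ z, z⟫) {e : E}
    (heV : e ∈ V) (he : ⟪B₁ e, e⟫ = m * ⟪B₂ e, e⟫) {v : E} (hv : v ∈ V) :
    ⟪B₁ e, v⟫ = m * ⟪B₂ e, v⟫ := by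
  have hC : ((B₁ - m • B₂ : E →L[ℝ] E) : E →ₗ[ℝ] E).IsSymmetric := hB₁.sub (hB₂.smul rfl)
  have hCapply : ∀ y z, ⟪(B₁ - m • B₂) y, z⟫ = ⟪B₁ y, z⟫ - m * ⟪B₂ y, z⟫ := fun y z => by
    rw [sub_apply, smul_apply, inner_sub_left, real_inner_smul_left]
  have := hC.inner_apply_eq_zero_of_nonpos (fun z hz => by rw [hCapply]; linarith [hmax z hz])
    heV (by rw [hCapply, he, sub_self]) hv
  rw [hCapply] at this
  linarith

lemma isPathConnected_setOf_inner_apply_self_eq (hrank : 1 < Module.rank ℝ E) {B : E →L[ℝ] E}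
    (hpos : ∀ x ≠ 0, 0 < ⟪B x, x⟫) {t : ℝ} (ht : 0 ≤ t) :
    IsPathConnected {y | ⟪B y, y⟫ = t} := by
  rcases ht.eq_or_lt with rfl | ht
  · have : {y : E | ⟪B y, y⟫ = 0} = {0} := by
      ext y
      exact ⟨fun h => by_contra fun hy => (hpos y hy).ne' h,
        fun h => by simp [mem_singleton_iff.mp h]⟩
    rw [this]
    exact isPathConnected_singleton 0
  -- `r` retracts `{0}ᶜ` onto the level set by rescaling.
  set r : E → E := fun y => √(t / ⟪B y, y⟫) • y
  have hS : {y | ⟪B y, y⟫ = t} = r '' {0}ᶜ := by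
    apply Subset.antisymm
    · intro y hy
      have hy₀ : y ≠ 0 := by
        rintro rfl
        simp only [mem_ofPred_eq, map_zero, inner_zero_left] at hy
        exact ht.ne hy
      exact ⟨y, hy₀, by simp [r, mem_ofPred_eq.mp hy, div_self ht.ne']⟩
    · rintro _ ⟨y, hy, rfl⟩
      have := hpos y hy
      rw [mem_ofPred_eq, inner_apply_smul_self, Real.sq_sqrt (by positivity)]
      field_simp
  rw [hS]
  refine (isPathConnected_compl_singleton_of_one_lt_rank hrank 0).image' fun y hy => ?_
  have := hpos y hy
  fun_prop (disch := positivity)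

lemma exists_inner_apply_add_smul_self_eq {B : E →L[ℝ] E} (hB : (B : E →ₗ[ℝ] E).IsSymmetric)
    {e y : E} (he : ⟪B e, e⟫ = 1) {t : ℝ} (hy : ⟪B y, y⟫ ≤ t) (L : ℝ) :
    ∃ γ : ℝ, ⟪B (y + γ • e), y + γ • e⟫ = t ∧ 0 ≤ γ * L := by
  set c := ⟪B y, e⟫
  set D := c ^ 2 + (t - ⟪B y, y⟫)
  have hD : √D ^ 2 = D := Real.sq_sqrt (by positivity)
  have hc : |c| ≤ √D := Real.abs_le_sqrt (by linarith)
  have hroot : ∀ γ, (γ + c) ^ 2 = D → ⟪B (y + γ • e), y + γ • e⟫ = t := fun γ hγ => by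
    rw [hB.inner_apply_add_smul_self, he]
    linear_combination hγ
  rcases le_total 0 L with hL | hL
  · exact ⟨-c + √D, hroot _ (by ring_nf; exact hD), mul_nonneg (by linarith [le_abs_self c]) hL⟩
  · exact ⟨-c - √D, hroot _ (by ring_nf; exact hD),
      mul_nonneg_of_nonpos_of_nonpos (by linarith [neg_abs_le c]) hL⟩

def quadPair (B₁ B₂ : E →L[ℝ] E) (g y : E) : ℝ × ℝ := (⟪B₁ y, y⟫ + ⟪y, g⟫, ⟪B₂ y, y⟫)

lemma mk_mem_range_quadPair (hrank : 1 < Module.rank ℝ E) (B₁ : E →L[ℝ] E) {B₂ : E →L[ℝ] E}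
    (hpos : ∀ x ≠ 0, 0 < ⟪B₂ x, x⟫) (g : E) {r t : ℝ} {u v : E}
    (hu : ⟪B₂ u, u⟫ = t) (hv : ⟪B₂ v, v⟫ = t)
    (hru : ⟪B₁ u, u⟫ + ⟪u, g⟫ ≤ r) (hrv : r ≤ ⟪B₁ v, v⟫ + ⟪v, g⟫) :
    (r, t) ∈ range (quadPair B₁ B₂ g) := by
  have ht : 0 ≤ t := hu ▸ inner_apply_self_nonneg_of_pos hpos u
  obtain ⟨y, hy, rfl⟩ := (isPathConnected_setOf_inner_apply_self_eq hrank hpos ht).isConnected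
    |>.isPreconnected.intermediate_value hu hv
      (by fun_prop : Continuous fun y : E => ⟪B₁ y, y⟫ + ⟪y, g⟫).continuousOn ⟨hru, hrv⟩
  exact ⟨y, by rw [quadPair, mem_ofPred_eq.mp hy]⟩

/- Let `e` maximise `⟪B₁ z, z⟫ / ⟪B₂ z, z⟫` on the span, with maximum `m`; then `e` lies in the
radical of `B₁ - m B₂` there. Moving `a • x₀ + b • x₁` along `e` onto the level set therefore
raises the first coordinate by `a b (m ⟪B₂ d, d⟫ - ⟪B₁ d, d⟫) ≥ 0`, `d = x₀ - x₁`, plus a linear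
term whose sign we may choose. -/
lemma exists_inner_apply_self_eq_and_le [Nontrivial E] {B₁ B₂ : E →L[ℝ] E}
    (hB₁ : (B₁ : E →ₗ[ℝ] E).IsSymmetric) (hB₂ : (B₂ : E →ₗ[ℝ] E).IsSymmetric) {δ : ℝ}
    (hδ : 0 < δ) (hcoer : ∀ x, δ * ‖x‖ ^ 2 ≤ ⟪B₂ x, x⟫) (g x₀ x₁ : E) {a b : ℝ}
    (ha : 0 ≤ a) (hb : 0 ≤ b) (hab : a + b = 1) :
    ∃ y, ⟪B₂ y, y⟫ = a * ⟪B₂ x₀, x₀⟫ + b * ⟪B₂ x₁, x₁⟫ ∧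
      a * (⟪B₁ x₀, x₀⟫ + ⟪x₀, g⟫) + b * (⟪B₁ x₁, x₁⟫ + ⟪x₁, g⟫) ≤ ⟪B₁ y, y⟫ + ⟪y, g⟫ := by
  obtain ⟨v, hv⟩ := exists_ne (0 : E)
  set V := span ℝ {x₀, x₁, v}
  have : FiniteDimensional ℝ V := FiniteDimensional.span_of_finite ℝ (toFinite _)
  have hx₀ : x₀ ∈ V := subset_span (by simp)
  have hx₁ : x₁ ∈ V := subset_span (by simp)
  obtain ⟨e, heV, he, hmax⟩ := V.exists_forall_inner_apply_le_mul B₁ hδ hcoer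
    (subset_span (by simp)) hv
  set m := ⟪B₁ e, e⟫ with hm
  set x := a • x₀ + b • x₁
  have hrad : ⟪B₁ e, x⟫ = m * ⟪B₂ e, x⟫ :=
    inner_apply_eq_mul_of_forall_le_mul hB₁ hB₂ hmax heV (by rw [he, mul_one])
      (V.add_mem (V.smul_mem a hx₀) (V.smul_mem b hx₁))
  have hx : ⟪B₂ x, x⟫ ≤ a * ⟪B₂ x₀, x₀⟫ + b * ⟪B₂ x₁, x₁⟫ := by
    rw [hB₂.inner_apply_smul_add_smul_self hab]
    have := inner_apply_self_nonneg_of_pos (inner_apply_self_pos_of_coercive hδ hcoer) (x₀ - x₁)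
    nlinarith [mul_nonneg (mul_nonneg ha hb) this]
  obtain ⟨γ, hγ, hγg⟩ := exists_inner_apply_add_smul_self_eq hB₂ he hx ⟪e, g⟫
  refine ⟨x + γ • e, hγ, ?_⟩
  have h₁ := hB₁.inner_apply_add_smul_self x e γ
  have h₂ := hB₂.inner_apply_add_smul_self x e γ
  have c₁ := hB₁.inner_apply_smul_add_smul_self hab x₀ x₁
  have c₂ := hB₂.inner_apply_smul_add_smul_self hab x₀ x₁
  rw [hB₁.inner_apply_comm_s14 x e, hrad] at h₁
  rw [hB₂.inner_apply_comm_s14 x e, he] at h₂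
  have key : ⟪B₁ (x + γ • e), x + γ • e⟫ + ⟪x + γ • e, g⟫ =
      a * (⟪B₁ x₀, x₀⟫ + ⟪x₀, g⟫) + b * (⟪B₁ x₁, x₁⟫ + ⟪x₁, g⟫) +
        a * b * (m * ⟪B₂ (x₀ - x₁), x₀ - x₁⟫ - ⟪B₁ (x₀ - x₁), x₀ - x₁⟫) + γ * ⟪e, g⟫ := by
    simp only [x, inner_add_left, real_inner_smul_left]
    linear_combination h₁ + c₁ + m * (hγ - h₂ - c₂) - γ ^ 2 * hm
  rw [key]
  linarith [mul_nonneg (mul_nonneg ha hb) (sub_nonneg.2 (hmax (x₀ - x₁) (V.sub_mem hx₀ hx₁)))]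

theorem convex_range_quadPair (hrank : 1 < Module.rank ℝ E) {B₁ B₂ : E →L[ℝ] E}
    (hB₁ : (B₁ : E →ₗ[ℝ] E).IsSymmetric) (hB₂ : (B₂ : E →ₗ[ℝ] E).IsSymmetric) {δ : ℝ}
    (hδ : 0 < δ) (hcoer : ∀ x, δ * ‖x‖ ^ 2 ≤ ⟪B₂ x, x⟫) (g : E) :
    Convex ℝ (range (quadPair B₁ B₂ g)) := by
  have : Nontrivial E := rank_pos_iff_nontrivial.mp (zero_lt_one.trans hrank)
  have hB₁' : ((-B₁ : E →L[ℝ] E) : E →ₗ[ℝ] E).IsSymmetric := fun x y => by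
    simpa using hB₁ x y
  rintro _ ⟨x₀, rfl⟩ _ ⟨x₁, rfl⟩ a b ha hb hab
  obtain ⟨u, hu, hru⟩ := exists_inner_apply_self_eq_and_le hB₁' hB₂ hδ hcoer (-g) x₀ x₁ ha hb hab
  obtain ⟨v, hv, hrv⟩ := exists_inner_apply_self_eq_and_le hB₁ hB₂ hδ hcoer g x₀ x₁ ha hb hab
  simp only [neg_apply, inner_neg_left, inner_neg_right] at hru
  simp only [quadPair, Prod.smul_mk, Prod.mk_add_mk, smul_eq_mul]
  exact mk_mem_range_quadPair hrank B₁ (inner_apply_self_pos_of_coercive hδ hcoer) g hu hv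
    (by linarith) hrv

lemma Ultrafilter.exists_forall_tendsto_inner [CompleteSpace E] (𝒰 : Ultrafilter E) {R : ℝ}
    (hR : ∀ᶠ y in (𝒰 : Filter E), ‖y‖ ≤ R) :
    ∃ y₀ : E, ∀ z, Tendsto (fun y => ⟪y, z⟫) 𝒰 (𝓝 ⟪y₀, z⟫) := by
  obtain ⟨ℓ, -, hℓ⟩ := (WeakDual.isCompact_closedBall (0 : StrongDual ℝ E) R).ultrafilter_le_nhds
    (𝒰.map fun y => StrongDual.toWeakDual (toDual ℝ E y))
    (le_principal_iff.2 <| Ultrafilter.mem_map.2 <| by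
      filter_upwards [hR] with y hy
      simpa using hy)
  refine ⟨(toDual ℝ E).symm (WeakDual.toStrongDual ℓ), fun z => ?_⟩
  rw [toDual_symm_apply]
  exact tendsto_iff_forall_eval_tendsto_topDualPairing.1 hℓ z

lemma tendsto_inner_of_tendsto_of_forall_tendsto_inner {l : Filter E} {u : E → E} {w y₀ : E}
    (hu : Tendsto u l (𝓝 w)) {R : ℝ} (hR : ∀ᶠ y in l, ‖y‖ ≤ R)
    (hy₀ : ∀ z, Tendsto (fun y => ⟪y, z⟫) l (𝓝 ⟪y₀, z⟫)) :
    Tendsto (fun y => ⟪u y, y⟫) l (𝓝 ⟪w, y₀⟫) := by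
  have h₁ : Tendsto (fun y => ⟪u y - w, y⟫) l (𝓝 0) := by
    refine squeeze_zero_norm' ?_
      (by simpa using (tendsto_iff_norm_sub_tendsto_zero.1 hu).mul_const R)
    filter_upwards [hR] with y hy
    exact (norm_inner_le_norm _ _).trans (mul_le_mul_of_nonneg_left hy (norm_nonneg _))
  have h₂ : Tendsto (fun y => ⟪w, y⟫) l (𝓝 ⟪w, y₀⟫) := by
    simpa only [real_inner_comm w] using hy₀ w
  simpa [inner_sub_left] using h₁.add h₂

lemma IsCompactOperator.tendsto_of_forall_tendsto_inner {B : E →L[ℝ] E}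
    (hB : (B : E →ₗ[ℝ] E).IsSymmetric) (hK : IsCompactOperator B) {𝒰 : Ultrafilter E} {R : ℝ}
    (hR : ∀ᶠ y in (𝒰 : Filter E), ‖y‖ ≤ R) {y₀ : E}
    (hy₀ : ∀ z, Tendsto (fun y => ⟪y, z⟫) 𝒰 (𝓝 ⟪y₀, z⟫)) :
    Tendsto B 𝒰 (𝓝 (B y₀)) := by
  obtain ⟨w, -, hw⟩ := (hK.isCompact_closure_image_closedBall R).ultrafilter_le_nhds (𝒰.map B)
    (le_principal_iff.2 <| Ultrafilter.mem_map.2 <| by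
      filter_upwards [hR] with y hy
      exact subset_closure (mem_image_of_mem B (mem_closedBall_zero_iff.2 hy)))
  suffices hwB : w = B y₀ from hwB ▸ hw
  refine ext_inner_right ℝ fun z => tendsto_nhds_unique
    (((continuous_id.inner continuous_const).tendsto w).comp hw) ?_
  simpa only [Function.comp_def, id, hB.apply_clm _ z] using hy₀ (B z)

lemma LinearMap.IsSymmetric.inner_apply_self_le_of_tendsto {B : E →L[ℝ] E}
    (hB : (B : E →ₗ[ℝ] E).IsSymmetric) (hB₀ : ∀ x, 0 ≤ ⟪B x, x⟫) {l : Filter E} [l.NeBot]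
    {y₀ : E} {t : ℝ} (hy₀ : ∀ z, Tendsto (fun y => ⟪y, z⟫) l (𝓝 ⟪y₀, z⟫))
    (ht : Tendsto (fun y => ⟪B y, y⟫) l (𝓝 t)) : ⟪B y₀, y₀⟫ ≤ t := by
  have hlim : Tendsto (fun y => 2 * ⟪y, B y₀⟫ - ⟪B y₀, y₀⟫) l (𝓝 ⟪B y₀, y₀⟫) := by
    convert ((hy₀ (B y₀)).const_mul 2).sub_const ⟪B y₀, y₀⟫ using 2
    rw [← hB.apply_clm]
    ring
  refine le_of_tendsto_of_tendsto hlim ht (Eventually.of_forall fun y => ?_)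
  have := hB.inner_apply_sub_self y y₀
  rw [hB.apply_clm y y₀] at this
  show 2 * ⟪y, B y₀⟫ - ⟪B y₀, y₀⟫ ≤ ⟪B y, y⟫
  linarith [hB₀ (y - y₀)]

lemma exists_of_mem_closure_range_quadPair [CompleteSpace E] {B₁ B₂ : E →L[ℝ] E}
    (hB₁ : (B₁ : E →ₗ[ℝ] E).IsSymmetric) (hB₂ : (B₂ : E →ₗ[ℝ] E).IsSymmetric)
    (hK : IsCompactOperator B₁) {δ : ℝ} (hδ : 0 < δ) (hcoer : ∀ x, δ * ‖x‖ ^ 2 ≤ ⟪B₂ x, x⟫)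
    {g : E} {p : ℝ × ℝ} (hp : p ∈ closure (range (quadPair B₁ B₂ g))) :
    ∃ y₀, ⟪B₁ y₀, y₀⟫ + ⟪y₀, g⟫ = p.1 ∧ ⟪B₂ y₀, y₀⟫ ≤ p.2 := by
  have : (comap (quadPair B₁ B₂ g) (𝓝 p)).NeBot :=
    comap_neBot_iff_frequently.2 (mem_closure_iff_frequently.1 hp)
  obtain ⟨𝒰, h𝒰⟩ := Ultrafilter.exists_le (comap (quadPair B₁ B₂ g) (𝓝 p))
  have h₁ : Tendsto (fun y => ⟪B₁ y, y⟫ + ⟪y, g⟫) 𝒰 (𝓝 p.1) :=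
    (continuous_fst.tendsto p).comp (tendsto_iff_comap.2 h𝒰)
  have h₂ : Tendsto (fun y => ⟪B₂ y, y⟫) 𝒰 (𝓝 p.2) :=
    (continuous_snd.tendsto p).comp (tendsto_iff_comap.2 h𝒰)
  have hR : ∀ᶠ y in (𝒰 : Filter E), ‖y‖ ≤ (p.2 + 1) / δ + 1 := by
    filter_upwards [h₂.eventually_lt_const (lt_add_one p.2)] with y hy
    exact le_div_add_one_of_mul_sq_le hδ ((hcoer y).trans hy.le)
  obtain ⟨y₀, hy₀⟩ := 𝒰.exists_forall_tendsto_inner hR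
  have hB₁y : Tendsto (fun y => ⟪B₁ y, y⟫) 𝒰 (𝓝 ⟪B₁ y₀, y₀⟫) :=
    tendsto_inner_of_tendsto_of_forall_tendsto_inner
      (hK.tendsto_of_forall_tendsto_inner hB₁ hR hy₀) hR hy₀
  exact ⟨y₀, tendsto_nhds_unique (hB₁y.add (hy₀ g)) h₁, hB₂.inner_apply_self_le_of_tendsto
    (inner_apply_self_nonneg_of_pos (inner_apply_self_pos_of_coercive hδ hcoer)) hy₀ h₂⟩

lemma mk_mem_range_quadPair_of_le (hrank : 1 < Module.rank ℝ E) {B₁ B₂ : E →L[ℝ] E}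
    (hB₁ : (B₁ : E →ₗ[ℝ] E).IsSymmetric) (hB₂ : (B₂ : E →ₗ[ℝ] E).IsSymmetric)
    (hpos : ∀ x ≠ 0, 0 < ⟪B₂ x, x⟫) {e : E} (he : e ≠ 0) (he₁ : ⟪B₁ e, e⟫ = 0) (g : E)
    {y₀ : E} {t : ℝ} (hy₀ : ⟪B₂ y₀, y₀⟫ ≤ t) :
    (⟪B₁ y₀, y₀⟫ + ⟪y₀, g⟫, t) ∈ range (quadPair B₁ B₂ g) := by
  obtain ⟨c, hc⟩ := exists_sq_mul_eq_one (hpos e he)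
  have he₂ : ⟪B₂ (c • e), c • e⟫ = 1 := by rw [inner_apply_smul_self, hc]
  set L := 2 * ⟪B₁ y₀, c • e⟫ + ⟪c • e, g⟫
  have hval : ∀ γ : ℝ, ⟪B₁ (y₀ + γ • c • e), y₀ + γ • c • e⟫ + ⟪y₀ + γ • c • e, g⟫ =
      ⟪B₁ y₀, y₀⟫ + ⟪y₀, g⟫ + γ * L := fun γ => by
    rw [hB₁.inner_apply_add_smul_self, inner_apply_smul_self, he₁, inner_add_left,
      real_inner_smul_left]
    ring
  obtain ⟨γ₁, hγ₁, hL₁⟩ := exists_inner_apply_add_smul_self_eq hB₂ he₂ hy₀ (-L)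
  obtain ⟨γ₂, hγ₂, hL₂⟩ := exists_inner_apply_add_smul_self_eq hB₂ he₂ hy₀ L
  exact mk_mem_range_quadPair hrank B₁ hpos g hγ₁ hγ₂ (by rw [hval]; linarith)
    (by rw [hval]; linarith)

theorem isClosed_range_quadPair [CompleteSpace E] (hrank : 1 < Module.rank ℝ E)
    {B₁ B₂ : E →L[ℝ] E} (hB₁ : (B₁ : E →ₗ[ℝ] E).IsSymmetric)
    (hB₂ : (B₂ : E →ₗ[ℝ] E).IsSymmetric) (hK : IsCompactOperator B₁) {e : E} (he : e ≠ 0)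
    (he₁ : ⟪B₁ e, e⟫ = 0) {δ : ℝ} (hδ : 0 < δ) (hcoer : ∀ x, δ * ‖x‖ ^ 2 ≤ ⟪B₂ x, x⟫)
    (g : E) : IsClosed (range (quadPair B₁ B₂ g)) := by
  refine closure_subset_iff_isClosed.1 fun p hp => ?_
  obtain ⟨y₀, hq, hs⟩ := exists_of_mem_closure_range_quadPair hB₁ hB₂ hK hδ hcoer hp
  simpa only [hq] using mk_mem_range_quadPair_of_le hrank hB₁ hB₂
    (inner_apply_self_pos_of_coercive hδ hcoer) he he₁ g hs

lemma exists_apply_eq_of_coercive [CompleteSpace E] {B : E →L[ℝ] E} {δ : ℝ} (hδ : 0 < δ)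
    (hcoer : ∀ x, δ * ‖x‖ ^ 2 ≤ ⟪B x, x⟫) (u : E) : ∃ w, B w = u := by
  have hB : IsCoercive (innerSL ℝ ∘L B) := ⟨δ, hδ, fun x => by
    rw [mul_assoc, ← sq]
    exact hcoer x⟩
  obtain ⟨w, hw⟩ := LinearMap.range_eq_top.1 hB.range_eq_top u
  refine ⟨w, ext_inner_right ℝ fun z => ?_⟩
  rw [← hw, ContinuousLinearMap.coe_coe, continuousLinearMapOfBilin_apply]
  rfl

lemma exists_eq_preimage_range_quadPair [CompleteSpace E] {A₁ A₂ : E →L[ℝ] E}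
    {α₁ α₂ β₁ β₂ : ℝ} (hB₁ : ((α₁ • A₁ + α₂ • A₂ : E →L[ℝ] E) : E →ₗ[ℝ] E).IsSymmetric)
    (hB₂ : ((β₁ • A₁ + β₂ • A₂ : E →L[ℝ] E) : E →ₗ[ℝ] E).IsSymmetric)
    (hdet : α₁ * β₂ - α₂ * β₁ ≠ 0) {δ : ℝ} (hδ : 0 < δ)
    (hcoer : ∀ x, δ * ‖x‖ ^ 2 ≤ ⟪(β₁ • A₁ + β₂ • A₂) x, x⟫) (a₁ a₂ : E) (b₁ b₂ : ℝ) :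
    ∃ (T : ℝ × ℝ →ₗ[ℝ] ℝ × ℝ) (g : E) (k : ℝ × ℝ),
      {p | ∃ x, p = (⟪A₁ x, x⟫ + ⟪x, a₁⟫ + b₁, ⟪A₂ x, x⟫ + ⟪x, a₂⟫ + b₂)} =
        T ⁻¹' ((k + ·) ⁻¹' range (quadPair (α₁ • A₁ + α₂ • A₂) (β₁ • A₁ + β₂ • A₂) g)) := by
  set B₁ := α₁ • A₁ + α₂ • A₂
  set B₂ := β₁ • A₁ + β₂ • A₂
  set c₁ := α₁ • a₁ + α₂ • a₂
  set c₂ := β₁ • a₁ + β₂ • a₂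
  obtain ⟨w, hw⟩ := exists_apply_eq_of_coercive hδ hcoer ((2 : ℝ)⁻¹ • c₂)
  have hc₂ : c₂ = (2 : ℝ) • B₂ w := by
    rw [hw, smul_smul]
    norm_num
  set T : ℝ × ℝ →ₗ[ℝ] ℝ × ℝ := (α₁ • LinearMap.fst ℝ ℝ ℝ + α₂ • LinearMap.snd ℝ ℝ ℝ).prod
    (β₁ • LinearMap.fst ℝ ℝ ℝ + β₂ • LinearMap.snd ℝ ℝ ℝ)
  have hTapply : ∀ p, T p = (α₁ * p.1 + α₂ * p.2, β₁ * p.1 + β₂ * p.2) := fun p => rfl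
  have hT : Function.Injective T := fun p q h => by
    rw [hTapply, hTapply, Prod.mk.injEq] at h
    exact Prod.ext (mul_left_cancel₀ hdet (by linear_combination β₂ * h.1 - α₂ * h.2))
      (mul_left_cancel₀ hdet (by linear_combination α₁ * h.2 - β₁ * h.1))
  set Φ : E → ℝ × ℝ := fun x => (⟪A₁ x, x⟫ + ⟪x, a₁⟫ + b₁, ⟪A₂ x, x⟫ + ⟪x, a₂⟫ + b₂)
  have hTΦ : ∀ x, T (Φ x) = (⟪B₁ x, x⟫ + ⟪x, c₁⟫ + (α₁ * b₁ + α₂ * b₂),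
      ⟪B₂ x, x⟫ + ⟪x, c₂⟫ + (β₁ * b₁ + β₂ * b₂)) := fun x => by
    simp only [hTapply, Φ, B₁, B₂, c₁, c₂, add_apply, smul_apply, inner_add_left,
      inner_add_right, real_inner_smul_left, real_inner_smul_right, Prod.mk.injEq]
    constructor <;> ring
  set k : ℝ × ℝ := (⟪w, c₁⟫ - ⟪B₁ w, w⟫ - (α₁ * b₁ + α₂ * b₂), ⟪B₂ w, w⟫ - (β₁ * b₁ + β₂ * b₂))
  have hΨ : ∀ y, quadPair B₁ B₂ (c₁ - (2 : ℝ) • B₁ w) y = k + T (Φ (y - w)) := fun y => by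
    rw [hTΦ, quadPair, Prod.mk_add_mk, Prod.mk.injEq, hB₁.inner_apply_sub_self,
      hB₂.inner_apply_sub_self, hc₂]
    simp only [inner_sub_left, inner_sub_right, real_inner_smul_right, hB₁.apply_clm,
      hB₂.apply_clm]
    constructor <;> ring
  refine ⟨T, c₁ - (2 : ℝ) • B₁ w, k, Set.ext fun p => ⟨?_, ?_⟩⟩
  · rintro ⟨x, rfl⟩
    exact ⟨x + w, by rw [hΨ, add_sub_cancel_right]⟩
  · rintro ⟨y, hy⟩
    exact ⟨y - w, hT (add_left_cancel (hy.symm.trans (hΨ y)))⟩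

end

theorem nonhomogeneous_image_convex_closed
    {H : Type*} [NormedAddCommGroup H] [InnerProductSpace ℝ H] [CompleteSpace H]
    (hdim : 3 ≤ Module.rank ℝ H)
    (A₁ A₂ : H →L[ℝ] H) (hA₁s : IsSelfAdjoint A₁) (hA₂s : IsSelfAdjoint A₂)
    (a₁ a₂ : H) (b₁ b₂ : ℝ)
    (α₁ α₂ β₁ β₂ : ℝ) (hdet : α₁ * β₂ - α₂ * β₁ ≠ 0)
    (hcompact : IsCompactOperator (α₁ • A₁ + α₂ • A₂))
    (hzero : ∃ x : H, x ≠ 0 ∧ ⟪(α₁ • A₁ + α₂ • A₂) x, x⟫ = 0)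
    (hpos : ∃ δ : ℝ, 0 < δ ∧ ∀ x : H, δ * ‖x‖ ^ 2 ≤ ⟪(β₁ • A₁ + β₂ • A₂) x, x⟫) :
    Convex ℝ {p : ℝ × ℝ | ∃ x : H,
      p = (⟪A₁ x, x⟫ + ⟪x, a₁⟫ + b₁, ⟪A₂ x, x⟫ + ⟪x, a₂⟫ + b₂)} ∧
    IsClosed {p : ℝ × ℝ | ∃ x : H,
      p = (⟪A₁ x, x⟫ + ⟪x, a₁⟫ + b₁, ⟪A₂ x, x⟫ + ⟪x, a₂⟫ + b₂)} := by
  obtain ⟨δ, hδ, hcoer⟩ := hpos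
  obtain ⟨e, he, he₁⟩ := hzero
  have hrank : 1 < Module.rank ℝ H := lt_of_lt_of_le (by norm_num) hdim
  have hB₁ : ((α₁ • A₁ + α₂ • A₂ : H →L[ℝ] H) : H →ₗ[ℝ] H).IsSymmetric :=
    (hA₁s.isSymmetric.smul rfl).add (hA₂s.isSymmetric.smul rfl)
  have hB₂ : ((β₁ • A₁ + β₂ • A₂ : H →L[ℝ] H) : H →ₗ[ℝ] H).IsSymmetric :=
    (hA₁s.isSymmetric.smul rfl).add (hA₂s.isSymmetric.smul rfl)
  obtain ⟨T, g, k, hS⟩ := exists_eq_preimage_range_quadPair hB₁ hB₂ hdet hδ hcoer a₁ a₂ b₁ b₂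
  have hconv := convex_range_quadPair hrank hB₁ hB₂ hδ hcoer g
  have hclosed := isClosed_range_quadPair hrank hB₁ hB₂ hcompact he he₁ hδ hcoer g
  rw [hS]
  exact ⟨(hconv.translate_preimage_right k).linear_preimage T,
    (hclosed.preimage (continuous_const_add k)).preimage T.continuous_of_finiteDimensional⟩
end

section
/- Special case: let A₁ be a compact selfadjoint operator on a real Hilbert space H (dim ≥ 3) with 0 in its numerical range, and A₂ a positive definite invertible operator. Then for any a₁, a₂ ∈ H and b₁, b₂ ∈ ℝ, the set {(⟨A₁x,x⟩+⟨x,a₁⟩+b₁, ⟨A₂x,x⟩+⟨x,a₂⟩+b₂) : x ∈ H} is convex and closed in ℝ². -/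
/-!
Write `f`, `g` for the two quadratic functions. Because `⟪A₁ e, e⟫ = 0` for a unit vector `e`
and `dim H ≥ 2`, every level set of `f` contains a curve to infinity starting at any of its
points; `g` is coercive, so along it `g` takes every value above its initial one. Hence the image
is closed upwards in the second coordinate, and it suffices to find, for `f x < u < f y`, a point
`z` with `f z = u` that minimizes a Lagrangian `g - ℓ f` (then `g z` lies below the chord).

For `ℓ` in the open interval where `A₂ - ℓ A₁` is uniformly positive, `g - ℓ f` has a unique
critical point, its global minimizer, depending continuously on `ℓ`; if `f` of these minimizers
takes values on both sides of `u`, the intermediate value theorem applies. Otherwise let `ℓ₀` be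
an endpoint of the interval. A weak limit of unit vectors on which `A₂ - ℓ₀ A₁` almost vanishes
gives, by compactness of `A₁`, an isotropic vector `k` with `⟪A₁ k, k⟫ ≠ 0`; a weak limit of the
minimizers minimizes `g - ℓ₀ f`, and moving it along `k` keeps it a minimizer while `f` sweeps
up to `u`. Closedness follows in the same way from weak limits: `f` is weakly continuous since
`A₁` is compact, and `g` is weakly lower semicontinuous.
-/

open scoped RealInnerProductSpace
open Filter Topology Set Bornology

namespace QuadraticImage

variable {H : Type*} [NormedAddCommGroup H] [InnerProductSpace ℝ H]

def quadFun (A : H →L[ℝ] H) (a : H) (b : ℝ) (x : H) : ℝ := ⟪A x, x⟫ + ⟪x, a⟫ + b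

section Algebra

variable {A : H →L[ℝ] H} (a : H) (b : ℝ)

theorem quadFun_neg (x : H) : quadFun (-A) (-a) (-b) x = -quadFun A a b x := by
  simp only [quadFun, neg_apply, inner_neg_left, inner_neg_right]
  ring

theorem quadFun_zero (x : H) : quadFun A 0 0 x = ⟪A x, x⟫ := by
  simp [quadFun]

theorem continuous_quadFun (A : H →L[ℝ] H) : Continuous (quadFun A a b) := by
  unfold quadFun
  fun_prop

theorem quadFun_sub_mul_quadFun {A₁ A₂ : H →L[ℝ] H} {a₁ a₂ : H} {b₁ b₂ : ℝ} (ℓ : ℝ) (x : H) :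
    quadFun A₂ a₂ b₂ x - ℓ * quadFun A₁ a₁ b₁ x =
      quadFun (A₂ - ℓ • A₁) (a₂ - ℓ • a₁) (b₂ - ℓ * b₁) x := by
  simp only [quadFun, sub_apply, smul_apply, inner_sub_left, inner_sub_right,
    real_inner_smul_left, real_inner_smul_right]
  ring

theorem inner_sub_smul_apply_self {A₁ A₂ : H →L[ℝ] H} (ℓ : ℝ) (x : H) :
    ⟪(A₂ - ℓ • A₁) x, x⟫ = ⟪A₂ x, x⟫ - ℓ * ⟪A₁ x, x⟫ := by
  simp [inner_sub_left, real_inner_smul_left]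

end Algebra

section Coercive

theorem tendsto_atTop_quadratic {α : ℝ} (hα : 0 < α) (β γ : ℝ) :
    Tendsto (fun t : ℝ => α * t ^ 2 + β * t + γ) atTop atTop := by
  have h : Tendsto (fun t : ℝ => t * (α * t + β)) atTop atTop :=
    tendsto_id.atTop_mul_atTop₀
      (tendsto_atTop_add_const_right _ β (tendsto_id.const_mul_atTop hα))
  refine tendsto_atTop_add_const_right _ γ (h.congr fun t => ?_)
  ring

variable {A : H →L[ℝ] H} {δ : ℝ} (a : H) (b : ℝ)

theorem quadratic_le_quadFun (hA : ∀ x, δ * ‖x‖ ^ 2 ≤ ⟪A x, x⟫) (x : H) :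
    δ * ‖x‖ ^ 2 + (-‖a‖) * ‖x‖ + b ≤ quadFun A a b x := by
  have := neg_le_of_abs_le (abs_real_inner_le_norm x a)
  unfold quadFun
  nlinarith [hA x]

theorem bddBelow_range_quadFun (hδ : 0 < δ) (hA : ∀ x, δ * ‖x‖ ^ 2 ≤ ⟪A x, x⟫) :
    BddBelow (range (quadFun A a b)) := by
  refine ⟨b - ‖a‖ ^ 2 / (4 * δ), forall_mem_range.2 fun x => ?_⟩
  have h := quadratic_le_quadFun a b hA x
  have : -(‖a‖ ^ 2 / (4 * δ)) ≤ δ * ‖x‖ ^ 2 + (-‖a‖) * ‖x‖ := by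
    rw [neg_le, ← sub_nonneg]
    field_simp
    nlinarith [sq_nonneg (2 * δ * ‖x‖ - ‖a‖)]
  linarith

theorem tendsto_quadFun_cobounded (hδ : 0 < δ) (hA : ∀ x, δ * ‖x‖ ^ 2 ≤ ⟪A x, x⟫) :
    Tendsto (quadFun A a b) (cobounded H) atTop :=
  tendsto_atTop_mono (quadratic_le_quadFun a b hA)
    ((tendsto_atTop_quadratic hδ _ _).comp tendsto_norm_cobounded_atTop)

theorem isBounded_setOf_quadFun_le (hδ : 0 < δ) (hA : ∀ x, δ * ‖x‖ ^ 2 ≤ ⟪A x, x⟫)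
    (c : ℝ) : IsBounded {x | quadFun A a b x ≤ c} := by
  rw [isBounded_def]
  filter_upwards [(tendsto_quadFun_cobounded a b hδ hA).eventually_gt_atTop c] with x hx
  exact not_le.2 hx

theorem exists_quadFun_eq_of_tendsto_norm (hδ : 0 < δ) (hA : ∀ x, δ * ‖x‖ ^ 2 ≤ ⟪A x, x⟫)
    {γ : ℝ → H} (hγ : ContinuousOn γ (Ici 0)) (hnorm : Tendsto (fun s => ‖γ s‖) atTop atTop)
    {c : ℝ} (hc : quadFun A a b (γ 0) ≤ c) : ∃ s, 0 ≤ s ∧ quadFun A a b (γ s) = c :=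
  intermediate_value_Ici ((continuous_quadFun a b A).comp_continuousOn hγ)
    ((tendsto_quadFun_cobounded a b hδ hA).comp (tendsto_norm_atTop_iff_cobounded.1 hnorm)) hc

end Coercive

theorem tendsto_norm_atTop_of_inner_eq {γ : ℝ → H} {w : H} (hw : w ≠ 0) (c : ℝ)
    (h : ∀ s, ⟪γ s, w⟫ = c + s * ‖w‖ ^ 2) : Tendsto (fun s => ‖γ s‖) atTop atTop := by
  have hinner : Tendsto (fun s => ⟪γ s, w⟫) atTop atTop := by
    simp_rw [h]
    exact tendsto_atTop_add_const_left _ c (tendsto_id.atTop_mul_const (by positivity))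
  refine (tendsto_mul_const_atTop_of_pos (norm_pos_iff.2 hw)).1
    (tendsto_atTop_mono (fun s => ?_) hinner)
  exact real_inner_le_norm _ _

theorem exists_ne_zero_inner_eq_zero (hdim : 1 < Module.rank ℝ H) (e : H) :
    ∃ u : H, u ≠ 0 ∧ ⟪e, u⟫ = 0 := by
  by_contra! h
  have htop : (ℝ ∙ e) = ⊤ := Submodule.orthogonal_eq_bot_iff.1 <|
    (Submodule.eq_bot_iff _).2 fun u hu => by_contra fun hu₀ =>
      h u hu₀ (Submodule.mem_orthogonal_singleton_iff_inner_right.1 hu)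
  have hle := rank_span_le (R := ℝ) ({e} : Set H)
  rw [htop, rank_top, Cardinal.mk_singleton] at hle
  exact hle.not_gt hdim

theorem tendsto_inner_of_tendsto_inner {ι : Type*} {l : Filter ι} {x y : ι → H} {s : Set H}
    (hs : IsBounded s) (hx : ∀ᶠ i in l, x i ∈ s) {xb y₀ : H}
    (hxb : ∀ v, Tendsto (fun i => ⟪x i, v⟫) l (𝓝 ⟪xb, v⟫)) (hy : Tendsto y l (𝓝 y₀)) :
    Tendsto (fun i => ⟪y i, x i⟫) l (𝓝 ⟪y₀, xb⟫) := by
  obtain ⟨R, hR⟩ := hs.exists_norm_le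
  have hsmall : Tendsto (fun i => ⟪y i - y₀, x i⟫) l (𝓝 0) := by
    refine squeeze_zero_norm' ?_
      (by simpa using (tendsto_iff_norm_sub_tendsto_zero.1 hy).mul_const R)
    filter_upwards [hx] with i hi
    exact (norm_inner_le_norm _ _).trans (mul_le_mul_of_nonneg_left (hR _ hi) (norm_nonneg _))
  have hmain : Tendsto (fun i => ⟪y₀, x i⟫) l (𝓝 ⟪y₀, xb⟫) := by
    simpa only [real_inner_comm y₀] using hxb y₀
  simpa [inner_sub_left] using hsmall.add hmain

def IsUniformlyPositive (T : H →L[ℝ] H) : Prop :=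
  ∃ ε, 0 < ε ∧ ∀ x, ε * ‖x‖ ^ 2 ≤ ⟪T x, x⟫

section UniformlyPositive

theorem isOpen_setOf_isUniformlyPositive :
    IsOpen {T : H →L[ℝ] H | IsUniformlyPositive T} := by
  refine Metric.isOpen_iff.2 fun T ⟨ε, hε, hT⟩ =>
    ⟨ε / 2, half_pos hε, fun S hS => ⟨ε / 2, half_pos hε, fun x => ?_⟩⟩
  have hST : |⟪(S - T) x, x⟫| ≤ ε / 2 * ‖x‖ ^ 2 := calc
    _ ≤ ‖(S - T) x‖ * ‖x‖ := abs_real_inner_le_norm _ _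
    _ ≤ ‖S - T‖ * ‖x‖ * ‖x‖ := by gcongr; exact (S - T).le_opNorm x
    _ ≤ ε / 2 * ‖x‖ ^ 2 := by
      rw [sq, ← mul_assoc]
      gcongr
      rw [← dist_eq_norm]
      exact (Metric.mem_ball.1 hS).le
  have hsplit : ⟪S x, x⟫ = ⟪T x, x⟫ + ⟪(S - T) x, x⟫ := by
    simp [inner_sub_left]
  linarith [hT x, neg_abs_le ⟪(S - T) x, x⟫]

theorem convex_setOf_isUniformlyPositive :
    Convex ℝ {T : H →L[ℝ] H | IsUniformlyPositive T} := by
  rintro S ⟨ε, hε, hS⟩ T ⟨η, hη, hT⟩ s t hs ht hst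
  refine ⟨min ε η, lt_min hε hη, fun x => ?_⟩
  have hεx : min ε η * ‖x‖ ^ 2 ≤ ε * ‖x‖ ^ 2 := by gcongr; exact min_le_left ε η
  have hηx : min ε η * ‖x‖ ^ 2 ≤ η * ‖x‖ ^ 2 := by gcongr; exact min_le_right ε η
  calc min ε η * ‖x‖ ^ 2 = s * (min ε η * ‖x‖ ^ 2) + t * (min ε η * ‖x‖ ^ 2) := by
        rw [← add_mul, hst, one_mul]
    _ ≤ s * ⟪S x, x⟫ + t * ⟪T x, x⟫ := by
        gcongr
        · exact hεx.trans (hS x)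
        · exact hηx.trans (hT x)
    _ = ⟪(s • S + t • T) x, x⟫ := by
        simp [inner_add_left, real_inner_smul_left]

theorem exists_norm_eq_one_inner_lt {T : H →L[ℝ] H} (hT : ¬IsUniformlyPositive T) {ε : ℝ}
    (hε : 0 < ε) : ∃ w, ‖w‖ = 1 ∧ ⟪T w, w⟫ < ε := by
  by_contra! h
  refine hT ⟨ε, hε, fun x => ?_⟩
  rcases eq_or_ne x 0 with rfl | hx
  · simp
  have hx' : 0 < ‖x‖ := norm_pos_iff.2 hx
  have hunit := h (‖x‖⁻¹ • x) (by simp [norm_smul, hx'.ne'])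
  rw [map_smul, real_inner_smul_left, real_inner_smul_right] at hunit
  calc ε * ‖x‖ ^ 2 ≤ ‖x‖⁻¹ * (‖x‖⁻¹ * ⟪T x, x⟫) * ‖x‖ ^ 2 := by gcongr
    _ = ⟪T x, x⟫ := by field_simp

variable (A₁ A₂ : H →L[ℝ] H)

theorem isOpen_setOf_isUniformlyPositive_sub_smul :
    IsOpen {ℓ : ℝ | IsUniformlyPositive (A₂ - ℓ • A₁)} :=
  isOpen_setOf_isUniformlyPositive.preimage (by fun_prop)

theorem convex_setOf_isUniformlyPositive_sub_smul :
    Convex ℝ {ℓ : ℝ | IsUniformlyPositive (A₂ - ℓ • A₁)} := by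
  have hline : ∀ ℓ : ℝ, AffineMap.lineMap A₂ (A₂ - A₁) ℓ = A₂ - ℓ • A₁ := fun ℓ => by
    rw [AffineMap.lineMap_apply_module]
    module
  have h := convex_setOf_isUniformlyPositive.affine_preimage (AffineMap.lineMap A₂ (A₂ - A₁))
  simp only [preimage, hline] at h
  exact h

theorem inner_nonneg_of_mem_closure {ℓ : ℝ}
    (hℓ : ℓ ∈ closure {ℓ : ℝ | IsUniformlyPositive (A₂ - ℓ • A₁)}) (w : H) :
    0 ≤ ⟪(A₂ - ℓ • A₁) w, w⟫ :=
  closure_minimal (t := {ℓ : ℝ | 0 ≤ ⟪(A₂ - ℓ • A₁) w, w⟫})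
    (fun _ hℓ => by
      obtain ⟨ε, hε, h⟩ := hℓ
      exact (by positivity : 0 ≤ ε * ‖w‖ ^ 2).trans (h w))
    (isClosed_le continuous_const (by fun_prop)) hℓ

end UniformlyPositive

theorem exists_Ico_subset_of_isOpen {C : Set ℝ} (hC : IsOpen C) (h₀ : 0 ∈ C)
    (hne : ∃ ℓ, 0 ≤ ℓ ∧ ℓ ∉ C) : ∃ ℓ₀, 0 < ℓ₀ ∧ Ico 0 ℓ₀ ⊆ C ∧ ℓ₀ ∉ C := by
  have hbdd : BddBelow (Ici 0 \ C) := ⟨0, fun _ hℓ => hℓ.1⟩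
  have hmem : sInf (Ici 0 \ C) ∈ Ici 0 \ C := (isClosed_Ici.sdiff hC).csInf_mem hne hbdd
  refine ⟨_, hmem.1.lt_of_ne fun h => hmem.2 (h ▸ h₀), fun ℓ hℓ => ?_, hmem.2⟩
  by_contra hℓC
  exact (csInf_le hbdd ⟨hℓ.1, hℓC⟩).not_gt hℓ.2

section LagrangeMin

variable {α : Type*} {f g : α → ℝ}

def IsLagrangeMin (f g : α → ℝ) (ℓ : ℝ) (z : α) : Prop :=
  ∀ w, g z - ℓ * f z ≤ g w - ℓ * f w

theorem IsLagrangeMin.le_of_le {ℓ : ℝ} {z q : α} (hz : IsLagrangeMin f g ℓ z) (hℓ : 0 ≤ ℓ)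
    (hfq : f z ≤ f q) : g z ≤ g q := by
  nlinarith [hz q]

theorem isLagrangeMin_neg_iff {ℓ : ℝ} {z : α} :
    IsLagrangeMin (fun x => -f x) g ℓ z ↔ IsLagrangeMin f g (-ℓ) z := by
  simp only [IsLagrangeMin, mul_neg, neg_mul]

theorem exists_eq_le_of_isLagrangeMin
    (hL : ∀ x y u, f x < u → u < f y → ∃ z ℓ, f z = u ∧ IsLagrangeMin f g ℓ z)
    (x y : α) {a b : ℝ} (ha : 0 ≤ a) (hb : 0 ≤ b) (hab : a + b = 1) :
    ∃ z, f z = a * f x + b * f y ∧ g z ≤ a * g x + b * g y := by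
  wlog hxy : f x ≤ f y generalizing x y a b
  · obtain ⟨z, hfz, hgz⟩ := this y x hb ha (by linarith) (le_of_not_ge hxy)
    exact ⟨z, by linarith, by linarith⟩
  obtain rfl : b = 1 - a := by linarith
  rcases hxy.eq_or_lt with hxy | hxy
  · rcases le_total (g x) (g y) with hg | hg
    · exact ⟨x, by rw [← hxy]; ring, by nlinarith [mul_le_mul_of_nonneg_left hg hb]⟩
    · exact ⟨y, by rw [hxy]; ring, by nlinarith [mul_le_mul_of_nonneg_left hg ha]⟩
  rcases ha.eq_or_lt with rfl | ha
  · exact ⟨y, by ring, le_of_eq (by ring)⟩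
  rcases hb.eq_or_lt with hb₀ | hb
  · obtain rfl : a = 1 := by linarith
    exact ⟨x, by ring, le_of_eq (by ring)⟩
  obtain ⟨z, ℓ, hfz, hz⟩ := hL x y (a * f x + (1 - a) * f y)
    (by nlinarith [mul_lt_mul_of_pos_left hxy hb]) (by nlinarith [mul_lt_mul_of_pos_left hxy ha])
  have hzx := hz x
  have hzy := hz y
  rw [hfz] at hzx hzy
  exact ⟨z, hfz, by nlinarith [mul_le_mul_of_nonneg_left hzx ha.le,
    mul_le_mul_of_nonneg_left hzy hb.le]⟩

theorem isLagrangeMin_iff {A₁ A₂ : H →L[ℝ] H} {a₁ a₂ : H} {b₁ b₂ ℓ : ℝ} {z : H} :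
    IsLagrangeMin (quadFun A₁ a₁ b₁) (quadFun A₂ a₂ b₂) ℓ z ↔
      ∀ w, quadFun (A₂ - ℓ • A₁) (a₂ - ℓ • a₁) (b₂ - ℓ * b₁) z ≤
        quadFun (A₂ - ℓ • A₁) (a₂ - ℓ • a₁) (b₂ - ℓ * b₁) w := by
  simp only [IsLagrangeMin, quadFun_sub_mul_quadFun]

end LagrangeMin

/-- The critical point of the Lagrangian `quadFun A₂ a₂ b₂ - ℓ * quadFun A₁ a₁ b₁`, meaningful
only when `A₂ - ℓ • A₁` is invertible (otherwise `Ring.inverse` is `0`). -/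
noncomputable def critPoint (A₁ A₂ : H →L[ℝ] H) (a₁ a₂ : H) (ℓ : ℝ) : H :=
  Ring.inverse (A₂ - ℓ • A₁) (-(2⁻¹ : ℝ) • (a₂ - ℓ • a₁))

theorem critPoint_neg (A₁ A₂ : H →L[ℝ] H) (a₁ a₂ : H) (ℓ : ℝ) :
    critPoint (-A₁) A₂ (-a₁) a₂ ℓ = critPoint A₁ A₂ a₁ a₂ (-ℓ) := by
  simp only [critPoint, smul_neg, neg_smul]

variable [CompleteSpace H]

section SelfAdjoint

variable {A : H →L[ℝ] H} (a : H) (b : ℝ)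

theorem quadFun_add (hA : IsSelfAdjoint A) (z h : H) :
    quadFun A a b (z + h) = quadFun A a b z + (2 * ⟪A z, h⟫ + ⟪h, a⟫) + ⟪A h, h⟫ := by
  have hsymm : ⟪A h, z⟫ = ⟪A z, h⟫ := by
    rw [real_inner_comm]
    exact (hA.isSymmetric z h).symm
  simp only [quadFun, map_add, inner_add_left, inner_add_right, hsymm]
  ring

theorem quadFun_add_smul (hA : IsSelfAdjoint A) (z w : H) (t : ℝ) :
    quadFun A a b (z + t • w) =
      quadFun A a b z + t * (2 * ⟪A z, w⟫ + ⟪w, a⟫) + t ^ 2 * ⟪A w, w⟫ := by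
  rw [quadFun_add a b hA]
  simp only [map_smul, real_inner_smul_left, real_inner_smul_right]
  ring

theorem isSelfAdjoint_sub_smul {A₁ A₂ : H →L[ℝ] H} (hA₁ : IsSelfAdjoint A₁)
    (hA₂ : IsSelfAdjoint A₂) (ℓ : ℝ) : IsSelfAdjoint (A₂ - ℓ • A₁) :=
  hA₂.sub (IsSelfAdjoint.smul (star_trivial ℓ) hA₁)

end SelfAdjoint

theorem exists_quadFun_eq_of_le (hdim : 1 < Module.rank ℝ H) {A₁ A₂ : H →L[ℝ] H}
    (hA₁ : IsSelfAdjoint A₁) {e : H} (he : e ≠ 0) (he₀ : ⟪A₁ e, e⟫ = 0) {δ : ℝ} (hδ : 0 < δ)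
    (hA₂ : ∀ x, δ * ‖x‖ ^ 2 ≤ ⟪A₂ x, x⟫) (a₁ a₂ : H) (b₁ b₂ : ℝ) (z : H) {c : ℝ}
    (hc : quadFun A₂ a₂ b₂ z ≤ c) :
    ∃ z', quadFun A₁ a₁ b₁ z' = quadFun A₁ a₁ b₁ z ∧ quadFun A₂ a₂ b₂ z' = c := by
  suffices ∃ γ : ℝ → H, ContinuousOn γ (Ici 0) ∧ γ 0 = z ∧
      (∀ s, 0 ≤ s → quadFun A₁ a₁ b₁ (γ s) = quadFun A₁ a₁ b₁ z) ∧
      Tendsto (fun s => ‖γ s‖) atTop atTop by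
    obtain ⟨γ, hγ, hγ₀, hf, hnorm⟩ := this
    obtain ⟨s, hs, hgs⟩ := exists_quadFun_eq_of_tendsto_norm a₂ b₂ hδ hA₂ hγ hnorm (hγ₀ ▸ hc)
    exact ⟨γ s, hf s hs, hgs⟩
  -- `α` is the slope of `f` at `z` in the isotropic direction `e`
  set α := 2 * ⟪A₁ z, e⟫ + ⟪e, a₁⟫ with hα_def
  rcases eq_or_ne α 0 with hα | hα
  · refine ⟨fun s => z + s • e, by fun_prop, by simp, fun s _ => ?_,
      tendsto_norm_atTop_of_inner_eq he ⟪z, e⟫ fun s => ?_⟩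
    · rw [quadFun_add_smul a₁ b₁ hA₁, ← hα_def, hα, he₀]
      ring
    · rw [inner_add_left, real_inner_smul_left, real_inner_self_eq_norm_sq]
  obtain ⟨u, hu, heu⟩ := exists_ne_zero_inner_eq_zero hdim e
  obtain ⟨v, hv, hev, hαv⟩ : ∃ v : H, v ≠ 0 ∧ ⟪e, v⟫ = 0 ∧ 0 ≤ α * ⟪A₁ v, e⟫ := by
    rcases le_total 0 (α * ⟪A₁ u, e⟫) with h | h
    · exact ⟨u, hu, heu, h⟩
    · exact ⟨-u, neg_ne_zero.2 hu, by simp [heu], by simpa using h⟩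
  -- move along `v`, correcting along `e` to stay on the level set of `f`
  set D : ℝ → ℝ := fun s => α + 2 * s * ⟪A₁ v, e⟫
  have hD : ∀ s, 0 ≤ s → D s ≠ 0 := fun s hs hDs => by
    have : α * D s = 0 := by rw [hDs, mul_zero]
    nlinarith [mul_nonneg hs hαv, mul_self_pos.2 hα]
  set t : ℝ → ℝ := fun s => (quadFun A₁ a₁ b₁ z - quadFun A₁ a₁ b₁ (z + s • v)) / D s
  refine ⟨fun s => z + s • v + t s • e, ?_, by simp [t], fun s hs => ?_,
    tendsto_norm_atTop_of_inner_eq hv ⟪z, v⟫ fun s => ?_⟩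
  · have ht : ContinuousOn t (Ici 0) :=
      ((continuous_const.sub ((continuous_quadFun a₁ b₁ A₁).comp (by fun_prop))).continuousOn).div
        (by fun_prop) hD
    exact continuousOn_const.add (continuousOn_id.smul continuousOn_const) |>.add
      (ht.smul continuousOn_const)
  · have hcoef : 2 * ⟪A₁ (z + s • v), e⟫ + ⟪e, a₁⟫ = D s := by
      simp only [D, α, map_add, map_smul, inner_add_left, real_inner_smul_left]
      ring
    rw [quadFun_add_smul a₁ b₁ hA₁, he₀, hcoef, div_mul_cancel₀ _ (hD s hs)]
    ring
  · simp only [inner_add_left, real_inner_smul_left, real_inner_self_eq_norm_sq, hev]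
    ring

section WeakLimits

variable {ι : Type*}

theorem exists_tendsto_inner_of_isBounded (U : Ultrafilter ι) {x : ι → H} {s : Set H}
    (hs : IsBounded s) (hx : ∀ᶠ i in U, x i ∈ s) :
    ∃ xb, ∀ y, Tendsto (fun i => ⟪x i, y⟫) U (𝓝 ⟪xb, y⟫) := by
  obtain ⟨R, hR⟩ := hs.subset_closedBall 0
  let φ : ι → WeakDual ℝ H := fun i =>
    StrongDual.toWeakDual (InnerProductSpace.toDual ℝ H (x i))
  obtain ⟨φ₀, -, hφ₀⟩ := (WeakDual.isCompact_closedBall (𝕜 := ℝ) (0 : StrongDual ℝ H) R)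
    |>.ultrafilter_le_nhds (U.map φ) (by
      rw [Ultrafilter.coe_map, le_principal_iff, mem_map]
      filter_upwards [hx] with i hi
      simpa [φ] using hR hi)
  refine ⟨(InnerProductSpace.toDual ℝ H).symm (WeakDual.toStrongDual φ₀), fun y => ?_⟩
  rw [InnerProductSpace.toDual_symm_apply]
  exact ((WeakDual.eval_continuous y).tendsto φ₀).comp hφ₀

theorem _root_.IsCompactOperator.tendsto_apply_of_tendsto_inner {A : H →L[ℝ] H}
    (hA : IsCompactOperator A) (U : Ultrafilter ι) {x : ι → H} {s : Set H}
    (hs : IsBounded s) (hx : ∀ᶠ i in U, x i ∈ s) {xb : H}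
    (hxb : ∀ y, Tendsto (fun i => ⟪x i, y⟫) U (𝓝 ⟪xb, y⟫)) :
    Tendsto (fun i => A (x i)) U (𝓝 (A xb)) := by
  obtain ⟨R, hR⟩ := hs.subset_closedBall 0
  obtain ⟨K, hK, hKR⟩ := hA.image_closedBall_subset_compact (f := (A : H →ₗ[ℝ] H)) R
  obtain ⟨q, -, hq⟩ := hK.ultrafilter_le_nhds (U.map fun i => A (x i)) (by
    rw [Ultrafilter.coe_map, le_principal_iff, mem_map]
    filter_upwards [hx] with i hi
    exact hKR ⟨x i, hR hi, rfl⟩)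
  rw [Ultrafilter.coe_map] at hq
  suffices q = A xb from this ▸ hq
  refine ext_inner_right ℝ fun v => tendsto_nhds_unique (Tendsto.inner hq tendsto_const_nhds) ?_
  simpa only [ContinuousLinearMap.adjoint_inner_right] using hxb (ContinuousLinearMap.adjoint A v)

theorem tendsto_quadFun_of_isCompactOperator {A : H →L[ℝ] H} (hA : IsCompactOperator A)
    (a : H) (b : ℝ) (U : Ultrafilter ι) {x : ι → H} {s : Set H}
    (hs : IsBounded s) (hx : ∀ᶠ i in U, x i ∈ s) {xb : H}
    (hxb : ∀ y, Tendsto (fun i => ⟪x i, y⟫) U (𝓝 ⟪xb, y⟫)) :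
    Tendsto (fun i => quadFun A a b (x i)) U (𝓝 (quadFun A a b xb)) :=
  ((tendsto_inner_of_tendsto_inner hs hx hxb
    (hA.tendsto_apply_of_tendsto_inner U hs hx hxb)).add (hxb a)).add_const b

theorem quadFun_le_of_tendsto_inner {l : Filter ι} [l.NeBot] {A : H →L[ℝ] H}
    (hA : IsSelfAdjoint A) (hA₀ : ∀ x, 0 ≤ ⟪A x, x⟫) (a : H) (b : ℝ) {x : ι → H} {xb : H}
    (hxb : ∀ y, Tendsto (fun i => ⟪x i, y⟫) l (𝓝 ⟪xb, y⟫)) {r : ι → ℝ} {r₀ : ℝ}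
    (hr : Tendsto r l (𝓝 r₀)) (hle : ∀ᶠ i in l, quadFun A a b (x i) ≤ r i) :
    quadFun A a b xb ≤ r₀ := by
  have hlow : ∀ i, quadFun A a b xb + (2 * ⟪x i - xb, A xb⟫ + ⟪x i - xb, a⟫) ≤
      quadFun A a b (x i) := fun i => by
    have h := quadFun_add a b hA xb (x i - xb)
    rw [add_sub_cancel, real_inner_comm (x i - xb)] at h
    linarith [hA₀ (x i - xb)]
  have hsub : ∀ v, Tendsto (fun i => ⟪x i - xb, v⟫) l (𝓝 0) := fun v => by
    simpa [inner_sub_left] using (hxb v).sub_const ⟪xb, v⟫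
  have hlim := (((hsub (A xb)).const_mul 2).add (hsub a)).const_add (quadFun A a b xb)
  simp only [mul_zero, add_zero] at hlim
  exact le_of_tendsto_of_tendsto hlim hr (hle.mono fun i hi => (hlow i).trans hi)

end WeakLimits

theorem IsUniformlyPositive.isUnit {T : H →L[ℝ] H} (hT : IsUniformlyPositive T) : IsUnit T := by
  obtain ⟨ε, hε, hTε⟩ := hT
  have hB : IsCoercive ((innerSL ℝ : H →L[ℝ] H →L[ℝ] ℝ) ∘L T) :=
    ⟨ε, hε, fun u => by rw [mul_assoc, ← sq]; exact hTε u⟩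
  refine ⟨hB.continuousLinearEquivOfBilin.toUnit, ?_⟩
  ext v
  exact ext_inner_right ℝ (hB.continuousLinearEquivOfBilin_apply v)

section Minimizers

variable {ι : Type*} {A₁ A₂ : H →L[ℝ] H} {a₁ a₂ : H} {b₁ b₂ : ℝ}

theorem quadFun_le_of_apply_eq {B : H →L[ℝ] H} (hB : IsSelfAdjoint B)
    (hB₀ : ∀ x, 0 ≤ ⟪B x, x⟫) {c : H} (β : ℝ) {z : H} (hz : B z = -(2⁻¹ : ℝ) • c) (w : H) :
    quadFun B c β z ≤ quadFun B c β w := by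
  have hw := quadFun_add c β hB z (w - z)
  rw [add_sub_cancel, hz, real_inner_smul_left, real_inner_comm c] at hw
  linarith [hB₀ (w - z)]

theorem isLagrangeMin_critPoint (hA₁ : IsSelfAdjoint A₁) (hA₂ : IsSelfAdjoint A₂) {ℓ : ℝ}
    (hℓ : IsUniformlyPositive (A₂ - ℓ • A₁)) :
    IsLagrangeMin (quadFun A₁ a₁ b₁) (quadFun A₂ a₂ b₂) ℓ (critPoint A₁ A₂ a₁ a₂ ℓ) := by
  obtain ⟨ε, hε, hεℓ⟩ := id hℓ
  refine isLagrangeMin_iff.2 (quadFun_le_of_apply_eq (isSelfAdjoint_sub_smul hA₁ hA₂ ℓ)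
    (fun x => (by positivity : 0 ≤ ε * ‖x‖ ^ 2).trans (hεℓ x)) _ ?_)
  exact congr($(Ring.mul_inverse_cancel _ hℓ.isUnit) (-(2⁻¹ : ℝ) • (a₂ - ℓ • a₁)))

variable (A₁ A₂ a₁ a₂) in
theorem continuousOn_critPoint :
    ContinuousOn (critPoint A₁ A₂ a₁ a₂) {ℓ | IsUniformlyPositive (A₂ - ℓ • A₁)} := by
  intro ℓ hℓ
  obtain ⟨u, hu⟩ := hℓ.isUnit
  have hinv : ContinuousAt (fun ℓ : ℝ => Ring.inverse (A₂ - ℓ • A₁)) ℓ :=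
    (hu ▸ NormedRing.inverse_continuousAt u).comp (f := fun ℓ : ℝ => A₂ - ℓ • A₁)
      (by fun_prop)
  exact (hinv.clm_apply (by fun_prop)).continuousWithinAt

theorem IsLagrangeMin.add_smul (hA₁ : IsSelfAdjoint A₁) (hA₂ : IsSelfAdjoint A₂) {ℓ : ℝ}
    {z k : H} (hz : IsLagrangeMin (quadFun A₁ a₁ b₁) (quadFun A₂ a₂ b₂) ℓ z)
    (hk : ⟪(A₂ - ℓ • A₁) k, k⟫ = 0) (t : ℝ) :
    IsLagrangeMin (quadFun A₁ a₁ b₁) (quadFun A₂ a₂ b₂) ℓ (z + t • k) := by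
  rw [isLagrangeMin_iff] at hz ⊢
  set τ := 2 * ⟪(A₂ - ℓ • A₁) z, k⟫ + ⟪k, a₂ - ℓ • a₁⟫
  have hline : ∀ t : ℝ, quadFun (A₂ - ℓ • A₁) (a₂ - ℓ • a₁) (b₂ - ℓ * b₁) (z + t • k) =
      quadFun (A₂ - ℓ • A₁) (a₂ - ℓ • a₁) (b₂ - ℓ * b₁) z + t * τ := fun t => by
    rw [quadFun_add_smul _ _ (isSelfAdjoint_sub_smul hA₁ hA₂ ℓ), hk, mul_zero, add_zero]
  have hτ : τ = 0 := by
    have h₁ := hz (z + (1 : ℝ) • k)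
    have h₂ := hz (z + (-1 : ℝ) • k)
    rw [hline] at h₁ h₂
    linarith
  intro w
  rw [hline, hτ, mul_zero, add_zero]
  exact hz w

theorem exists_isLagrangeMin_of_tendsto (hA₁c : IsCompactOperator A₁) (hA₂ : IsSelfAdjoint A₂)
    (hA₂₀ : ∀ x, 0 ≤ ⟪A₂ x, x⟫) (U : Ultrafilter ι) {ℓ : ι → ℝ} {ℓ₀ : ℝ}
    (hℓ : Tendsto ℓ U (𝓝 ℓ₀)) {z : ι → H} {s : Set H} (hs : IsBounded s)
    (hzs : ∀ᶠ i in U, z i ∈ s)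
    (hz : ∀ᶠ i in U, IsLagrangeMin (quadFun A₁ a₁ b₁) (quadFun A₂ a₂ b₂) (ℓ i) (z i)) :
    ∃ zb, Tendsto (fun i => quadFun A₁ a₁ b₁ (z i)) U (𝓝 (quadFun A₁ a₁ b₁ zb)) ∧
      IsLagrangeMin (quadFun A₁ a₁ b₁) (quadFun A₂ a₂ b₂) ℓ₀ zb := by
  obtain ⟨zb, hzb⟩ := exists_tendsto_inner_of_isBounded U hs hzs
  have hf := tendsto_quadFun_of_isCompactOperator hA₁c a₁ b₁ U hs hzs hzb
  refine ⟨zb, hf, fun w => ?_⟩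
  have hg := quadFun_le_of_tendsto_inner hA₂ hA₂₀ a₂ b₂ hzb
    (((tendsto_const_nhds (x := quadFun A₂ a₂ b₂ w)).sub
      (hℓ.mul_const (quadFun A₁ a₁ b₁ w))).add (hℓ.mul hf))
    (hz.mono fun i hi => by linarith [hi w])
  linarith

end Minimizers

section Endpoint

variable {A₁ A₂ : H →L[ℝ] H} {a₁ a₂ : H} {b₁ b₂ : ℝ}

theorem exists_inner_eq_zero_of_not_isUniformlyPositive (hA₁ : IsSelfAdjoint A₁)
    (hA₁c : IsCompactOperator A₁) (hA₂ : IsSelfAdjoint A₂) {δ : ℝ}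
    (hA₂δ : ∀ x, δ * ‖x‖ ^ 2 ≤ ⟪A₂ x, x⟫) {ℓ : ℝ} (hB₀ : ∀ x, 0 ≤ ⟪(A₂ - ℓ • A₁) x, x⟫)
    (hB : ¬IsUniformlyPositive (A₂ - ℓ • A₁)) :
    ∃ k, ⟪(A₂ - ℓ • A₁) k, k⟫ = 0 ∧ δ ≤ ℓ * ⟪A₁ k, k⟫ := by
  choose w hw₁ hwB using fun n : ℕ =>
    exists_norm_eq_one_inner_lt hB (Nat.one_div_pos_of_nat (n := n))
  set U := Ultrafilter.of (atTop : Filter ℕ)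
  have hUle : (U : Filter ℕ) ≤ atTop := Ultrafilter.of_le _
  have hws : ∀ᶠ n in U, w n ∈ Metric.closedBall (0 : H) 1 :=
    Eventually.of_forall fun n => by simp [hw₁]
  obtain ⟨k, hk⟩ := exists_tendsto_inner_of_isBounded U Metric.isBounded_closedBall hws
  have hBw : Tendsto (fun n => ⟪(A₂ - ℓ • A₁) (w n), w n⟫) U (𝓝 0) :=
    squeeze_zero (fun n => hB₀ (w n)) (fun n => (hwB n).le)
      (tendsto_one_div_add_atTop_nhds_zero_nat.mono_left hUle)
  have hA₁w : Tendsto (fun n => ⟪A₁ (w n), w n⟫) U (𝓝 ⟪A₁ k, k⟫) := by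
    simpa only [quadFun_zero] using
      tendsto_quadFun_of_isCompactOperator hA₁c 0 0 U Metric.isBounded_closedBall hws hk
  refine ⟨k, le_antisymm ?_ (hB₀ k), ?_⟩
  · simpa only [quadFun_zero] using quadFun_le_of_tendsto_inner
      (isSelfAdjoint_sub_smul hA₁ hA₂ ℓ) hB₀ 0 0 hk hBw
      (Eventually.of_forall fun n => (quadFun_zero _).le)
  · have hδw := (tendsto_const_nhds (x := δ)).sub hBw
    rw [sub_zero] at hδw
    refine le_of_tendsto_of_tendsto' hδw (hA₁w.const_mul ℓ) fun n => ?_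
    have := hA₂δ (w n)
    rw [hw₁, one_pow, mul_one] at this
    linarith [inner_sub_smul_apply_self (A₁ := A₁) (A₂ := A₂) ℓ (w n)]

theorem exists_nonneg_not_isUniformlyPositive (hA₁ : IsSelfAdjoint A₁)
    (hA₂ : IsSelfAdjoint A₂) {δ : ℝ} (hδ : 0 < δ) (hA₂δ : ∀ x, δ * ‖x‖ ^ 2 ≤ ⟪A₂ x, x⟫)
    {u : ℝ} {q : H} (hq : u < quadFun A₁ a₁ b₁ q)
    (hcrit : ∀ ℓ, IsUniformlyPositive (A₂ - ℓ • A₁) →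
      quadFun A₁ a₁ b₁ (critPoint A₁ A₂ a₁ a₂ ℓ) < u) :
    ∃ ℓ : ℝ, 0 ≤ ℓ ∧ ¬IsUniformlyPositive (A₂ - ℓ • A₁) := by
  by_contra! h
  obtain ⟨m, hm⟩ := bddBelow_range_quadFun a₂ 0 hδ hA₂δ
  have hgap : 0 < quadFun A₁ a₁ b₁ q - u := sub_pos.2 hq
  set ℓ := (quadFun A₂ a₂ 0 q - m) / (quadFun A₁ a₁ b₁ q - u) + 1
  have hℓ : ℓ * (quadFun A₁ a₁ b₁ q - u) =
      quadFun A₂ a₂ 0 q - m + (quadFun A₁ a₁ b₁ q - u) := by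
    rw [add_mul, div_mul_cancel₀ _ hgap.ne', one_mul]
  have hℓ₀ : 0 < ℓ := by
    have := hm (mem_range_self q)
    positivity
  set z := critPoint A₁ A₂ a₁ a₂ ℓ
  have hz : quadFun A₂ a₂ 0 z - ℓ * quadFun A₁ a₁ b₁ z ≤
      quadFun A₂ a₂ 0 q - ℓ * quadFun A₁ a₁ b₁ q :=
    isLagrangeMin_critPoint hA₁ hA₂ (h ℓ hℓ₀.le) q
  have hfz := hcrit ℓ (h ℓ hℓ₀.le)
  have hgz := hm (mem_range_self z)
  linarith [mul_lt_mul_of_pos_left hfz hℓ₀]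

theorem exists_isLagrangeMin_of_forall_lt (hA₁ : IsSelfAdjoint A₁)
    (hA₁c : IsCompactOperator A₁) (hA₂ : IsSelfAdjoint A₂) {δ : ℝ} (hδ : 0 < δ)
    (hA₂δ : ∀ x, δ * ‖x‖ ^ 2 ≤ ⟪A₂ x, x⟫) {u : ℝ} {q : H} (hq : u < quadFun A₁ a₁ b₁ q)
    (hcrit : ∀ ℓ, IsUniformlyPositive (A₂ - ℓ • A₁) →
      quadFun A₁ a₁ b₁ (critPoint A₁ A₂ a₁ a₂ ℓ) < u) :
    ∃ z ℓ, quadFun A₁ a₁ b₁ z = u ∧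
      IsLagrangeMin (quadFun A₁ a₁ b₁) (quadFun A₂ a₂ b₂) ℓ z := by
  have hA₂₀ : ∀ x, 0 ≤ ⟪A₂ x, x⟫ := fun x => (by positivity : 0 ≤ δ * ‖x‖ ^ 2).trans (hA₂δ x)
  have hC₀ : (0 : ℝ) ∈ {ℓ : ℝ | IsUniformlyPositive (A₂ - ℓ • A₁)} :=
    ⟨δ, hδ, by simpa using hA₂δ⟩
  obtain ⟨ℓ₀, hℓ₀, hIco, hℓ₀C⟩ := exists_Ico_subset_of_isOpen
    (isOpen_setOf_isUniformlyPositive_sub_smul A₁ A₂) hC₀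
    (exists_nonneg_not_isUniformlyPositive hA₁ hA₂ hδ hA₂δ hq hcrit)
  have hB₀ := inner_nonneg_of_mem_closure A₁ A₂ (ℓ := ℓ₀) (closure_mono hIco
    (by rw [closure_Ico hℓ₀.ne]; exact right_mem_Icc.2 hℓ₀.le))
  obtain ⟨k, hBk, hA₁k⟩ :=
    exists_inner_eq_zero_of_not_isUniformlyPositive hA₁ hA₁c hA₂ hA₂δ hB₀ hℓ₀C
  set U := Ultrafilter.of (𝓝[<] ℓ₀)
  have hU : ∀ᶠ ℓ in U, ℓ ∈ Ico 0 ℓ₀ := Ultrafilter.of_le _ (Ico_mem_nhdsLT hℓ₀)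
  have hbdd : ∀ᶠ ℓ in U,
      critPoint A₁ A₂ a₁ a₂ ℓ ∈ {x | quadFun A₂ a₂ b₂ x ≤ quadFun A₂ a₂ b₂ q} :=
    hU.mono fun ℓ hℓ => (isLagrangeMin_critPoint hA₁ hA₂ (hIco hℓ)).le_of_le hℓ.1
      ((hcrit ℓ (hIco hℓ)).le.trans hq.le)
  obtain ⟨zb, hfzb, hzb⟩ := exists_isLagrangeMin_of_tendsto (b₂ := b₂) hA₁c hA₂ hA₂₀ U
    (tendsto_id.mono_left ((Ultrafilter.of_le _).trans nhdsWithin_le_nhds))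
    (isBounded_setOf_quadFun_le a₂ b₂ hδ hA₂δ _) hbdd
    (hU.mono fun ℓ hℓ => isLagrangeMin_critPoint hA₁ hA₂ (hIco hℓ))
  have hzbu : quadFun A₁ a₁ b₁ zb ≤ u :=
    le_of_tendsto hfzb (hU.mono fun ℓ hℓ => (hcrit ℓ (hIco hℓ)).le)
  -- along the line `zb + t • k` the Lagrangian is constant while `f` tends to `+∞`
  have hline : Tendsto (fun t : ℝ => quadFun A₁ a₁ b₁ (zb + t • k)) atTop atTop := by
    simp only [quadFun_add_smul a₁ b₁ hA₁]
    refine (tendsto_atTop_quadratic (pos_of_mul_pos_right (hδ.trans_le hA₁k) hℓ₀.le)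
      (2 * ⟪A₁ zb, k⟫ + ⟪k, a₁⟫) (quadFun A₁ a₁ b₁ zb)).congr fun t => ?_
    ring
  obtain ⟨t, -, ht⟩ := intermediate_value_Ici (a := 0)
    ((continuous_quadFun a₁ b₁ A₁).comp (by fun_prop : Continuous fun t : ℝ => zb + t • k)
      |>.continuousOn) hline (by simpa using hzbu)
  exact ⟨zb + t • k, ℓ₀, ht, hzb.add_smul hA₁ hA₂ hBk t⟩

theorem exists_isLagrangeMin (hA₁ : IsSelfAdjoint A₁) (hA₁c : IsCompactOperator A₁)
    (hA₂ : IsSelfAdjoint A₂) {δ : ℝ} (hδ : 0 < δ) (hA₂δ : ∀ x, δ * ‖x‖ ^ 2 ≤ ⟪A₂ x, x⟫)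
    {p q : H} {u : ℝ} (hp : quadFun A₁ a₁ b₁ p < u) (hq : u < quadFun A₁ a₁ b₁ q) :
    ∃ z ℓ, quadFun A₁ a₁ b₁ z = u ∧
      IsLagrangeMin (quadFun A₁ a₁ b₁) (quadFun A₂ a₂ b₂) ℓ z := by
  set C := {ℓ : ℝ | IsUniformlyPositive (A₂ - ℓ • A₁)}
  by_cases hhi : ∃ ℓ ∈ C, u ≤ quadFun A₁ a₁ b₁ (critPoint A₁ A₂ a₁ a₂ ℓ)
  swap
  · push Not at hhi
    exact exists_isLagrangeMin_of_forall_lt hA₁ hA₁c hA₂ hδ hA₂δ hq hhi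
  by_cases hlo : ∃ ℓ ∈ C, quadFun A₁ a₁ b₁ (critPoint A₁ A₂ a₁ a₂ ℓ) ≤ u
  swap
  · -- the previous case for `-f`
    push Not at hlo
    have hf_neg : quadFun (-A₁) (-a₁) (-b₁) = fun x => -quadFun A₁ a₁ b₁ x :=
      funext (quadFun_neg a₁ b₁)
    obtain ⟨z, ℓ, hz, hzmin⟩ := exists_isLagrangeMin_of_forall_lt (b₂ := b₂) (u := -u) (q := p)
      hA₁.neg (by simpa using hA₁c.neg) hA₂ hδ hA₂δ (by rw [hf_neg]; exact neg_lt_neg hp)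
      fun ℓ hℓ => by
        rw [critPoint_neg, hf_neg, neg_lt_neg_iff]
        exact hlo (-ℓ) (by simpa [C] using hℓ)
    rw [hf_neg] at hz hzmin
    exact ⟨z, -ℓ, neg_inj.1 hz, isLagrangeMin_neg_iff.1 hzmin⟩
  obtain ⟨ℓ₁, hℓ₁, h₁⟩ := hhi
  obtain ⟨ℓ₂, hℓ₂, h₂⟩ := hlo
  have hsub : uIcc ℓ₂ ℓ₁ ⊆ C :=
    (convex_setOf_isUniformlyPositive_sub_smul A₁ A₂).ordConnected.uIcc_subset hℓ₂ hℓ₁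
  obtain ⟨ℓ, hℓ, hfℓ⟩ := intermediate_value_uIcc
    ((continuous_quadFun a₁ b₁ A₁).comp_continuousOn
      ((continuousOn_critPoint A₁ A₂ a₁ a₂).mono hsub)) (mem_uIcc.2 (Or.inl ⟨h₂, h₁⟩))
  exact ⟨_, ℓ, hfℓ, isLagrangeMin_critPoint hA₁ hA₂ (hsub hℓ)⟩

end Endpoint

theorem convex_setOf_quadFun (hdim : 1 < Module.rank ℝ H) {A₁ A₂ : H →L[ℝ] H}
    (hA₁ : IsSelfAdjoint A₁) (hA₁c : IsCompactOperator A₁) (hA₂ : IsSelfAdjoint A₂) {e : H}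
    (he : e ≠ 0) (he₀ : ⟪A₁ e, e⟫ = 0) {δ : ℝ} (hδ : 0 < δ)
    (hA₂δ : ∀ x, δ * ‖x‖ ^ 2 ≤ ⟪A₂ x, x⟫) (a₁ a₂ : H) (b₁ b₂ : ℝ) :
    Convex ℝ {p : ℝ × ℝ | ∃ x : H, p = (quadFun A₁ a₁ b₁ x, quadFun A₂ a₂ b₂ x)} := by
  rintro _ ⟨x, rfl⟩ _ ⟨y, rfl⟩ a b ha hb hab
  obtain ⟨z, hfz, hgz⟩ := exists_eq_le_of_isLagrangeMin
    (fun x y _ hx hy => exists_isLagrangeMin hA₁ hA₁c hA₂ hδ hA₂δ hx hy) x y ha hb hab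
  obtain ⟨z', hf, hg⟩ := exists_quadFun_eq_of_le hdim hA₁ he he₀ hδ hA₂δ a₁ a₂ b₁ b₂ z hgz
  exact ⟨z', by rw [hf, hfz, hg]; simp⟩

theorem isClosed_setOf_quadFun (hdim : 1 < Module.rank ℝ H) {A₁ A₂ : H →L[ℝ] H}
    (hA₁ : IsSelfAdjoint A₁) (hA₁c : IsCompactOperator A₁) (hA₂ : IsSelfAdjoint A₂) {e : H}
    (he : e ≠ 0) (he₀ : ⟪A₁ e, e⟫ = 0) {δ : ℝ} (hδ : 0 < δ)
    (hA₂δ : ∀ x, δ * ‖x‖ ^ 2 ≤ ⟪A₂ x, x⟫) (a₁ a₂ : H) (b₁ b₂ : ℝ) :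
    IsClosed {p : ℝ × ℝ | ∃ x : H, p = (quadFun A₁ a₁ b₁ x, quadFun A₂ a₂ b₂ x)} := by
  set F : H → ℝ × ℝ := fun x => (quadFun A₁ a₁ b₁ x, quadFun A₂ a₂ b₂ x)
  refine isClosed_iff_ultrafilter.2 fun p U hU hS => ?_
  set x := Function.invFun F
  have hFx : ∀ᶠ q in U, F (x q) = q :=
    mem_of_superset hS fun q ⟨y, hy⟩ => Function.invFun_eq ⟨y, hy.symm⟩
  have hf : Tendsto (fun q => quadFun A₁ a₁ b₁ (x q)) U (𝓝 p.1) :=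
    ((continuous_fst.tendsto p).comp hU).congr' (hFx.mono fun q hq => congrArg Prod.fst hq.symm)
  have hg : Tendsto (fun q => quadFun A₂ a₂ b₂ (x q)) U (𝓝 p.2) :=
    ((continuous_snd.tendsto p).comp hU).congr' (hFx.mono fun q hq => congrArg Prod.snd hq.symm)
  have hxs : ∀ᶠ q in U, x q ∈ {y | quadFun A₂ a₂ b₂ y ≤ p.2 + 1} :=
    hg.eventually (eventually_le_nhds (lt_add_one p.2))
  have hbdd := isBounded_setOf_quadFun_le a₂ b₂ hδ hA₂δ (p.2 + 1)
  obtain ⟨xb, hxb⟩ := exists_tendsto_inner_of_isBounded U hbdd hxs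
  have hfxb := tendsto_nhds_unique
    (tendsto_quadFun_of_isCompactOperator hA₁c a₁ b₁ U hbdd hxs hxb) hf
  have hgxb := quadFun_le_of_tendsto_inner hA₂
    (fun x => (by positivity : 0 ≤ δ * ‖x‖ ^ 2).trans (hA₂δ x)) a₂ b₂ hxb hg
    (Eventually.of_forall fun _ => le_rfl)
  obtain ⟨z, hfz, hgz⟩ := exists_quadFun_eq_of_le hdim hA₁ he he₀ hδ hA₂δ a₁ a₂ b₁ b₂ xb hgxb
  exact ⟨z, by rw [hfz, hfxb, hgz]⟩

end QuadraticImage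

open QuadraticImage in
theorem nonhomogeneous_image_convex_closed_special
    {H : Type*} [NormedAddCommGroup H] [InnerProductSpace ℝ H] [CompleteSpace H]
    (hdim : 3 ≤ Module.rank ℝ H)
    (A₁ A₂ : H →L[ℝ] H) (hA₁s : IsSelfAdjoint A₁) (hA₂s : IsSelfAdjoint A₂)
    (hA₁c : IsCompactOperator A₁)
    (hzero : ∃ x : H, ‖x‖ = 1 ∧ ⟪A₁ x, x⟫ = 0)
    (hpos : ∃ δ : ℝ, 0 < δ ∧ ∀ x : H, δ * ‖x‖ ^ 2 ≤ ⟪A₂ x, x⟫)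
    (a₁ a₂ : H) (b₁ b₂ : ℝ) :
    Convex ℝ {p : ℝ × ℝ | ∃ x : H,
      p = (⟪A₁ x, x⟫ + ⟪x, a₁⟫ + b₁, ⟪A₂ x, x⟫ + ⟪x, a₂⟫ + b₂)} ∧
    IsClosed {p : ℝ × ℝ | ∃ x : H,
      p = (⟪A₁ x, x⟫ + ⟪x, a₁⟫ + b₁, ⟪A₂ x, x⟫ + ⟪x, a₂⟫ + b₂)} := by
  obtain ⟨e, he, he₀⟩ := hzero
  obtain ⟨δ, hδ, hA₂δ⟩ := hpos
  have hdim' : 1 < Module.rank ℝ H := lt_of_lt_of_le (by norm_num) hdim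
  have he' : e ≠ 0 := norm_ne_zero_iff.1 (he ▸ one_ne_zero)
  exact ⟨convex_setOf_quadFun hdim' hA₁s hA₁c hA₂s he' he₀ hδ hA₂δ a₁ a₂ b₁ b₂,
    isClosed_setOf_quadFun hdim' hA₁s hA₁c hA₂s he' he₀ hδ hA₂δ a₁ a₂ b₁ b₂⟩
end

section
/- S-procedure: Let H be a real Hilbert space with 3 ≤ dim(H) ≤ ∞, fᵢ(x) = ⟨Aᵢx,x⟩ for i = 0,1,2 with Aᵢ ∈ L(H), and α₀, α₁, α₂ ∈ ℝ. Suppose there exist μ₁, μ₂ ∈ ℝ with μ₁A₁ + μ₂A₂ > 0 and a point x⁰ ∈ H with f₁(x⁰) < α₁ and f₂(x⁰) < α₂. Then [f₀(x) ≤ α₀ for every x with f₁(x) ≤ α₁ and f₂(x) ≤ α₂] holds if and only if there exist τ₁ ≥ 0, τ₂ ≥ 0 such that A₀ ≤ τ₁A₁ + τ₂A₂ (as quadratic forms, i.e., ⟨A₀x,x⟩ ≤ τ₁⟨A₁x,x⟩ + τ₂⟨A₂x,x⟩ for all x) and α₀ ≥ τ₁α₁ + τ₂α₂. -/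
/-!
Write `qᵢ x = ⟪Aᵢ x, x⟫`. The heart of the proof is Polyak's theorem: the joint range of
`(q₀, q₁, q₂)` is convex. It rests on the fact that in dimension `≥ 3`, if `q₀` vanishes at `x` and
`y` and `q₁` changes sign between them, then `q₀` and `q₁` have a common nonzero zero (found on a
curve inside the cone `q₀ = 0`, spanned by `x`, `y` and a `q₀`-orthogonal third vector). Applied to
two suitable combinations of the forms, it moves any point of the chord between two image points of
the unit sphere of the positive definite `B = μ₁ q₁ + μ₂ q₂` onto that image (Brickman), and
homogeneity gives the convexity of the whole range.

The convex range misses the open orthant `{p₀ > α₀, p₁ < α₁, p₂ < α₂}`, so a separating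
hyperplane yields multipliers; Slater's condition makes the one of `p₀` nonzero, and homogeneity
turns the resulting affine bound on `q₀ - τ₁ q₁ - τ₂ q₂` into the operator inequality.
-/

open scoped RealInnerProductSpace

open Submodule (span)

namespace QuadraticMap

variable {R M N : Type*} [CommRing R] [AddCommGroup M] [Module R M] [AddCommGroup N] [Module R N]
  (Q : QuadraticMap R M N)

theorem map_smul_add_smul (a b : R) (x y : M) :
    Q (a • x + b • y) = (a * a) • Q x + (b * b) • Q y + (a * b) • polar Q x y := by
  rw [QuadraticMap.map_add ⇑Q, QuadraticMap.map_smul, QuadraticMap.map_smul, polar_smul_left,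
    polar_smul_right, smul_smul]

theorem map_smul_add_smul_add_smul (a b c : R) (x y w : M) :
    Q (a • x + b • y + c • w) = (a * a) • Q x + (b * b) • Q y + (c * c) • Q w +
      (a * b) • polar Q x y + (a * c) • polar Q x w + (b * c) • polar Q y w := by
  rw [QuadraticMap.map_add ⇑Q, map_smul_add_smul, QuadraticMap.map_smul, polar_add_left,
    polar_smul_left, polar_smul_left, polar_smul_right, polar_smul_right, smul_smul, smul_smul]
  abel

end QuadraticMap

open QuadraticMap

section Field

variable {K V : Type*} [Field K] [AddCommGroup V] [Module K V]

theorem exists_notMem_span_pair (hV : 3 ≤ Module.rank K V) (x y : V) :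
    ∃ v, v ∉ span K {x, y} := by
  by_contra! h
  have htop : span K {x, y} = ⊤ := Submodule.eq_top_iff'.2 h
  have : Module.rank K V ≤ 2 :=
    calc Module.rank K V = Module.rank K (span K ({x, y} : Set V)) := by rw [htop, rank_top]
      _ ≤ Cardinal.mk ({x, y} : Set V) := rank_span_le _
      _ ≤ 2 := by
        refine Cardinal.mk_insert_le.trans ?_
        rw [Cardinal.mk_singleton]; norm_num
  exact absurd (hV.trans this) (by norm_num)

theorem smul_add_smul_add_smul_ne_zero {x y w : V} (hw : w ∉ span K {x, y}) (a b : K) {c : K}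
    (hc : c ≠ 0) : a • x + b • y + c • w ≠ 0 := by
  intro h
  refine hw (Submodule.mem_span_pair.2 ⟨-(a / c), -(b / c), ?_⟩)
  linear_combination (norm := skip) (-c⁻¹) • h
  match_scalars <;> field_simp <;> ring

theorem exists_polar_eq_zero_notMem_span (Q : QuadraticForm K V) {x y v : V}
    (hv : v ∉ span K {x, y}) (hx : Q x = 0) (hy : Q y = 0) (hxy : polar Q x y ≠ 0) :
    ∃ w ∉ span K {x, y}, polar Q x w = 0 ∧ polar Q y w = 0 := by
  set k₁ := polar Q y v / polar Q x y
  set k₂ := polar Q x v / polar Q x y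
  refine ⟨v - k₁ • x - k₂ • y, fun hw => hv ?_, ?_, ?_⟩
  · have : v = (v - k₁ • x - k₂ • y) + k₁ • x + k₂ • y := by abel
    rw [this]
    exact add_mem (add_mem hw (Submodule.smul_mem _ _ (Submodule.subset_span (by simp))))
      (Submodule.smul_mem _ _ (Submodule.subset_span (by simp)))
  · simp only [polar_sub_right, polar_smul_right, polar_self, hx, smul_eq_mul, k₂]
    field_simp
    ring
  · simp only [polar_sub_right, polar_smul_right, polar_self, hy, smul_eq_mul, k₁,
      polar_comm Q y x]
    field_simp
    ring

end Field

section Real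

variable {V : Type*} [AddCommGroup V] [Module ℝ V]

theorem QuadraticMap.apply_sqrt_smul (Q : QuadraticForm ℝ V) {t : ℝ} (ht : 0 ≤ t) (x : V) :
    Q (√t • x) = t * Q x := by
  rw [QuadraticMap.map_smul, Real.mul_self_sqrt ht, smul_eq_mul]

theorem exists_common_zero_of_polar_eq_zero {q₀ q₁ : QuadraticForm ℝ V} {x y : V}
    (h₀x : q₀ x = 0) (h₀y : q₀ y = 0) (h₀xy : polar q₀ x y = 0)
    (h₁x : 0 < q₁ x) (h₁y : q₁ y < 0) :
    ∃ z ≠ 0, q₀ z = 0 ∧ q₁ z = 0 := by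
  have hdiscrim : 0 ≤ discrim (q₁ x) (polar q₁ x y) (q₁ y) := by
    unfold discrim; nlinarith [sq_nonneg (polar q₁ x y)]
  obtain ⟨s, hs⟩ := exists_quadratic_eq_zero h₁x.ne' ⟨_, (Real.mul_self_sqrt hdiscrim).symm⟩
  have hq (q : QuadraticForm ℝ V) : q (s • x + y) = q x * (s * s) + polar q x y * s + q y := by
    rw [QuadraticMap.map_add ⇑q, QuadraticMap.map_smul, polar_smul_left, smul_eq_mul, smul_eq_mul]
    ring
  refine ⟨s • x + y, fun hz => ?_, by rw [hq, h₀x, h₀y, h₀xy]; ring, by rw [hq, hs]⟩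
  have : q₁ y = s * s * q₁ x := by
    rw [add_eq_zero_iff_neg_eq] at hz
    rw [← hz, QuadraticMap.map_neg, QuadraticMap.map_smul, smul_eq_mul]
  nlinarith [mul_self_nonneg s]

theorem exists_common_zero_of_apply_ne_zero {q₀ q₁ : QuadraticForm ℝ V} {x y w : V}
    (hw : w ∉ span ℝ {x, y}) (h₀x : q₀ x = 0) (h₀y : q₀ y = 0) (h₀xy : polar q₀ x y ≠ 0)
    (h₀xw : polar q₀ x w = 0) (h₀yw : polar q₀ y w = 0) (h₀w : q₀ w ≠ 0)
    (h₁x : 0 < q₁ x) (h₁y : q₁ y < 0) :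
    ∃ z ≠ 0, q₀ z = 0 ∧ q₁ z = 0 := by
  -- the curve lies on the cone `q₀ = 0`: along it `q₀` equals `t²(1-t)²(q₀ w + m · polar q₀ x y)`
  set m := -q₀ w / polar q₀ x y
  set z : ℝ → V := fun t => (m * (1 - t) ^ 2) • x + (t ^ 2) • y + (t * (1 - t)) • w
  have hq₀z (t : ℝ) : q₀ (z t) = 0 := by
    simp only [z, map_smul_add_smul_add_smul, h₀x, h₀y, h₀xw, h₀yw, smul_eq_mul, m]
    field_simp
    ring
  have hq₁z : Continuous fun t => q₁ (z t) := by
    simp only [z, map_smul_add_smul_add_smul, smul_eq_mul]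
    fun_prop
  have hm : m ≠ 0 := div_ne_zero (neg_ne_zero.2 h₀w) h₀xy
  have hz₀ : 0 < q₁ (z 0) := by
    simp only [z, sub_zero, one_pow, mul_one, zero_pow two_ne_zero, zero_smul, add_zero,
      QuadraticMap.map_smul, smul_eq_mul]
    exact mul_pos (mul_self_pos.2 hm) h₁x
  have hz₁ : q₁ (z 1) < 0 := by simpa [z] using h₁y
  obtain ⟨t, -, ht : q₁ (z t) = 0⟩ :=
    intermediate_value_Icc' zero_le_one hq₁z.continuousOn ⟨hz₁.le, hz₀.le⟩
  have ht₀ : t ≠ 0 := by rintro rfl; exact hz₀.ne' ht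
  have ht₁ : t ≠ 1 := by rintro rfl; exact hz₁.ne ht
  exact ⟨z t, smul_add_smul_add_smul_ne_zero hw _ _
    (mul_ne_zero ht₀ (sub_ne_zero.2 ht₁.symm)), hq₀z t, ht⟩

theorem exists_common_zero_of_sign_change (hV : 3 ≤ Module.rank ℝ V) {q₀ q₁ : QuadraticForm ℝ V}
    {x y : V} (h₀x : q₀ x = 0) (h₀y : q₀ y = 0) (h₁x : 0 < q₁ x) (h₁y : q₁ y < 0) :
    ∃ z ≠ 0, q₀ z = 0 ∧ q₁ z = 0 := by
  by_cases h₀xy : polar q₀ x y = 0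
  · exact exists_common_zero_of_polar_eq_zero h₀x h₀y h₀xy h₁x h₁y
  obtain ⟨v, hv⟩ := exists_notMem_span_pair hV x y
  obtain ⟨w, hw, h₀xw, h₀yw⟩ := exists_polar_eq_zero_notMem_span q₀ hv h₀x h₀y h₀xy
  -- `w` is `q₀`-orthogonal to `x` and `y`: if `q₀ w = 0`, then `q₀` vanishes on the planes
  -- spanned by `x, w` and by `w, y`
  by_cases h₀w : q₀ w = 0
  · rcases lt_trichotomy (q₁ w) 0 with h₁w | h₁w | h₁w
    · exact exists_common_zero_of_polar_eq_zero h₀x h₀w h₀xw h₁x h₁w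
    · exact ⟨w, fun h => hw (h ▸ zero_mem _), h₀w, h₁w⟩
    · exact exists_common_zero_of_polar_eq_zero h₀w h₀y (polar_comm q₀ y w ▸ h₀yw) h₁w h₁y
  · exact exists_common_zero_of_apply_ne_zero hw h₀x h₀y h₀xy h₀xw h₀yw h₀w h₁x h₁y

theorem exists_apply_eq_convexCombination_of_posDef (hV : 3 ≤ Module.rank ℝ V)
    {q₀ q₁ B : QuadraticForm ℝ V} (hB : ∀ z ≠ 0, 0 < B z) {x y : V} (hx : B x = 1)
    (hy : B y = 1) {σ : ℝ} (hσ : σ ∈ Set.Ioo 0 1) :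
    ∃ z, B z = 1 ∧ q₀ z = σ * q₀ x + (1 - σ) * q₀ y ∧ q₁ z = σ * q₁ x + (1 - σ) * q₁ y := by
  obtain ⟨hσ₀, hσ₁⟩ := hσ
  set e₀ := q₀ x - q₀ y
  set e₁ := q₁ x - q₁ y
  set c₀ := σ * q₀ x + (1 - σ) * q₀ y
  set c₁ := σ * q₁ x + (1 - σ) * q₁ y
  by_cases he : e₀ = 0 ∧ e₁ = 0
  · exact ⟨x, hx, by linear_combination (1 - σ) * he.1, by linear_combination (1 - σ) * he.2⟩
  have hE : 0 < e₀ ^ 2 + e₁ ^ 2 := by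
    rcases not_and_or.1 he with h | h <;> positivity
  -- The two forms passed to `exists_common_zero_of_sign_change` are the cross and dot products of
  -- `(G₀, G₁)` with `e = (e₀, e₁)`; `(G₀, G₁)` equals `(1 - σ) • e` at `x` and `-σ • e` at `y`.
  set G₀ := q₀ - c₀ • B
  set G₁ := q₁ - c₁ • B
  obtain ⟨z, hz, hC₀, hC₁⟩ := exists_common_zero_of_sign_change hV
    (q₀ := e₁ • G₀ - e₀ • G₁) (q₁ := e₀ • G₀ + e₁ • G₁) (x := x) (y := y)
    (by simp only [G₀, G₁, sub_apply, smul_apply, smul_eq_mul, hx, c₀, c₁, e₀, e₁]; ring)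
    (by simp only [G₀, G₁, sub_apply, smul_apply, smul_eq_mul, hy, c₀, c₁, e₀, e₁]; ring)
    (by simp only [G₀, G₁, add_apply, sub_apply, smul_apply, smul_eq_mul, hx, c₀, c₁, e₀, e₁]
        nlinarith)
    (by simp only [G₀, G₁, add_apply, sub_apply, smul_apply, smul_eq_mul, hy, c₀, c₁, e₀, e₁]
        nlinarith)
  simp only [sub_apply, add_apply, smul_apply, smul_eq_mul, G₀, G₁] at hC₀ hC₁
  have hq₀z : q₀ z = c₀ * B z := by
    have : (e₀ ^ 2 + e₁ ^ 2) * (q₀ z - c₀ * B z) = 0 := by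
      linear_combination e₁ * hC₀ + e₀ * hC₁
    linarith [(mul_eq_zero.1 this).resolve_left hE.ne']
  have hq₁z : q₁ z = c₁ * B z := by
    have : (e₀ ^ 2 + e₁ ^ 2) * (q₁ z - c₁ * B z) = 0 := by
      linear_combination e₁ * hC₁ - e₀ * hC₀
    linarith [(mul_eq_zero.1 this).resolve_left hE.ne']
  have hBz := hB z hz
  refine ⟨√(B z)⁻¹ • z, ?_, ?_, ?_⟩ <;>
    rw [QuadraticMap.apply_sqrt_smul _ (inv_nonneg.2 hBz.le)] <;> field_simp <;> linarith

theorem exists_apply_eq_add_of_posDef (hV : 3 ≤ Module.rank ℝ V) {q₀ q₁ B : QuadraticForm ℝ V}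
    (hB : ∀ z ≠ 0, 0 < B z) (x y : V) :
    ∃ z, q₀ z = q₀ x + q₀ y ∧ q₁ z = q₁ x + q₁ y ∧ B z = B x + B y := by
  rcases eq_or_ne x 0 with rfl | hx
  · exact ⟨y, by simp⟩
  rcases eq_or_ne y 0 with rfl | hy
  · exact ⟨x, by simp⟩
  have hBx := hB x hx
  have hBy := hB y hy
  have hunit {v : V} (hv : 0 < B v) : B (√(B v)⁻¹ • v) = 1 := by
    rw [QuadraticMap.apply_sqrt_smul _ (inv_nonneg.2 hv.le), inv_mul_cancel₀ hv.ne']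
  have hσ : B x / (B x + B y) ∈ Set.Ioo 0 1 :=
    ⟨by positivity, (div_lt_one (by positivity)).2 (by linarith)⟩
  obtain ⟨z, hBz, h₀z, h₁z⟩ := exists_apply_eq_convexCombination_of_posDef hV (q₀ := q₀)
    (q₁ := q₁) hB (hunit hBx) (hunit hBy) hσ
  have hscale {q : QuadraticForm ℝ V} (hq : q z = B x / (B x + B y) * q (√(B x)⁻¹ • x) +
      (1 - B x / (B x + B y)) * q (√(B y)⁻¹ • y)) : q (√(B x + B y) • z) = q x + q y := by
    simp only [QuadraticMap.apply_sqrt_smul _ (inv_nonneg.2 hBx.le),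
      QuadraticMap.apply_sqrt_smul _ (inv_nonneg.2 hBy.le)] at hq
    rw [QuadraticMap.apply_sqrt_smul _ (by positivity), hq]
    field_simp
    ring
  exact ⟨_, hscale h₀z, hscale h₁z, hscale (by rw [hBz, hunit hBx, hunit hBy]; ring)⟩

theorem convex_range_of_posDef_combination (hV : 3 ≤ Module.rank ℝ V)
    (q₀ q₁ q₂ : QuadraticForm ℝ V) {μ₁ μ₂ : ℝ} (hB : ∀ z ≠ 0, 0 < (μ₁ • q₁ + μ₂ • q₂) z) :
    Convex ℝ (Set.range fun z => (q₀ z, q₁ z, q₂ z)) := by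
  have hμ : μ₁ ^ 2 + μ₂ ^ 2 ≠ 0 := by
    have : Nontrivial V := rank_pos_iff_nontrivial.1 (lt_of_lt_of_le (by norm_num) hV)
    obtain ⟨v, hv⟩ := exists_ne (0 : V)
    intro h
    have hBv := hB v hv
    rw [show μ₁ = 0 by nlinarith, show μ₂ = 0 by nlinarith] at hBv
    simp at hBv
  set B := μ₁ • q₁ + μ₂ • q₂
  set q' := μ₂ • q₁ - μ₁ • q₂
  -- `(B, q')` is obtained from `(q₁, q₂)` by an invertible rotation-dilation
  have hq₁ (v : V) : q₁ v = (μ₁ * B v + μ₂ * q' v) / (μ₁ ^ 2 + μ₂ ^ 2) := by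
    simp only [B, q', add_apply, sub_apply, smul_apply, smul_eq_mul]
    field_simp
    ring
  have hq₂ (v : V) : q₂ v = (μ₂ * B v - μ₁ * q' v) / (μ₁ ^ 2 + μ₂ ^ 2) := by
    simp only [B, q', add_apply, sub_apply, smul_apply, smul_eq_mul]
    field_simp
    ring
  have hadd (x y : V) : ∃ z, q₀ z = q₀ x + q₀ y ∧ q₁ z = q₁ x + q₁ y ∧ q₂ z = q₂ x + q₂ y := by
    obtain ⟨z, h₀z, h'z, hBz⟩ := exists_apply_eq_add_of_posDef hV (q₀ := q₀) (q₁ := q') hB x y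
    refine ⟨z, h₀z, ?_, ?_⟩
    · simp only [hq₁, h'z, hBz]; ring
    · simp only [hq₂, h'z, hBz]; ring
  rintro _ ⟨x, rfl⟩ _ ⟨y, rfl⟩ a b ha hb -
  obtain ⟨z, h₀z, h₁z, h₂z⟩ := hadd (√a • x) (√b • y)
  refine ⟨z, ?_⟩
  simp only [QuadraticMap.apply_sqrt_smul _ ha, QuadraticMap.apply_sqrt_smul _ hb] at h₀z h₁z h₂z
  simp only [h₀z, h₁z, h₂z, Prod.smul_mk, Prod.mk_add_mk, smul_eq_mul]

theorem QuadraticMap.apply_nonpos_of_forall_le (Q : QuadraticForm ℝ V) {δ : ℝ}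
    (h : ∀ x, Q x ≤ δ) (x : V) : Q x ≤ 0 := by
  by_contra! hx
  have hδ : 0 ≤ δ := by simpa using h 0
  set t := δ / Q x + 1
  have ht : 1 ≤ t := by linarith [div_nonneg hδ hx.le]
  have htx : t * Q x = δ + Q x := by rw [add_mul, div_mul_cancel₀ _ hx.ne', one_mul]
  have := h (t • x)
  rw [QuadraticMap.map_smul, smul_eq_mul] at this
  nlinarith

end Real

theorem nonpos_of_forall_add_mul_le {a b u : ℝ} (h : ∀ t, 0 ≤ t → a + t * b ≤ u) : b ≤ 0 := by
  by_contra! hb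
  have := h ((u - a + 1) / b) (div_nonneg (by linarith [h 0 le_rfl]) hb.le)
  rw [div_mul_cancel₀ _ hb.ne'] at this
  linarith

open Set in
theorem apply_le_and_signs_of_lt_on_orthant (f : StrongDual ℝ (ℝ × ℝ × ℝ)) {u α₀ α₁ α₂ : ℝ}
    (hf : ∀ p ∈ Ioi α₀ ×ˢ Iio α₁ ×ˢ Iio α₂, f p < u) :
    f (α₀, α₁, α₂) ≤ u ∧ f (1, 0, 0) ≤ 0 ∧ 0 ≤ f (0, 1, 0) ∧ 0 ≤ f (0, 0, 1) := by
  have hle : ∀ p ∈ Ici α₀ ×ˢ Iic α₁ ×ˢ Iic α₂, f p ≤ u := by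
    have : closure (Ioi α₀ ×ˢ Iio α₁ ×ˢ Iio α₂) ⊆ {p | f p ≤ u} :=
      (closure_mono hf).trans (closure_lt_subset_le f.continuous continuous_const)
    rwa [closure_prod_eq, closure_prod_eq, closure_Ioi, closure_Iio, closure_Iio] at this
  have hray (v : ℝ × ℝ × ℝ)
      (hv : ∀ t : ℝ, 0 ≤ t → (α₀, α₁, α₂) + t • v ∈ Ici α₀ ×ˢ Iic α₁ ×ˢ Iic α₂) : f v ≤ 0 :=
    nonpos_of_forall_add_mul_le (a := f (α₀, α₁, α₂)) (u := u) fun t ht => by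
      simpa using hle _ (hv t ht)
  have h₁ := hray (-(0, 1, 0)) fun t ht => by simpa
  have h₂ := hray (-(0, 0, 1)) fun t ht => by simpa
  rw [map_neg, neg_nonpos] at h₁ h₂
  exact ⟨hle _ (by simp), hray _ fun t ht => by simpa, h₁, h₂⟩

open Set in
theorem exists_nonneg_multipliers_of_convex {G : Set (ℝ × ℝ × ℝ)} (hG : Convex ℝ G)
    {α₀ α₁ α₂ : ℝ} (hslater : ∃ p ∈ G, p.2.1 < α₁ ∧ p.2.2 < α₂)
    (hα : ∀ p ∈ G, p.2.1 < α₁ → p.2.2 < α₂ → p.1 ≤ α₀) :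
    ∃ τ₁ τ₂ : ℝ, 0 ≤ τ₁ ∧ 0 ≤ τ₂ ∧
      ∀ p ∈ G, p.1 - α₀ ≤ τ₁ * (p.2.1 - α₁) + τ₂ * (p.2.2 - α₂) := by
  have hCG : Disjoint (Ioi α₀ ×ˢ Iio α₁ ×ˢ Iio α₂) G :=
    disjoint_left.2 fun p ⟨h₀, h₁, h₂⟩ hp => (hα p hp h₁ h₂).not_gt h₀
  obtain ⟨f, u, hfC, hfG⟩ := geometric_hahn_banach_open
    ((convex_Ioi _).prod ((convex_Iio _).prod (convex_Iio _)))
    (isOpen_Ioi.prod (isOpen_Iio.prod isOpen_Iio)) hG hCG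
  obtain ⟨hfα, hc₀, hc₁, hc₂⟩ := apply_le_and_signs_of_lt_on_orthant f hfC
  set c₀ := f (1, 0, 0)
  set c₁ := f (0, 1, 0)
  set c₂ := f (0, 0, 1)
  have hf (p : ℝ × ℝ × ℝ) : f p = c₀ * p.1 + c₁ * p.2.1 + c₂ * p.2.2 := by
    conv_lhs => rw [show p = p.1 • (1, 0, 0) + p.2.1 • (0, 1, 0) + p.2.2 • (0, 0, 1) by
      ext <;> simp]
    simp only [map_add, map_smul, smul_eq_mul]
    ring
  have hsep (p) (hp : p ∈ G) :
      0 ≤ c₀ * (p.1 - α₀) + c₁ * (p.2.1 - α₁) + c₂ * (p.2.2 - α₂) := by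
    linarith [hfG p hp, hf p, hf (α₀, α₁, α₂)]
  have hc₀' : c₀ < 0 := by
    refine hc₀.lt_of_ne fun h₀ => ?_
    obtain ⟨p, hp, hp₁, hp₂⟩ := hslater
    have hsp := hsep p hp
    rw [h₀] at hsp
    have h₁ : c₁ = 0 := by nlinarith
    have h₂ : c₂ = 0 := by nlinarith
    have hC := hfC (α₀ + 1, α₁ - 1, α₂ - 1) (by simp)
    have hG := hfG p hp
    simp only [hf, h₀, h₁, h₂, zero_mul, add_zero] at hC hG
    linarith
  refine ⟨c₁ / -c₀, c₂ / -c₀, div_nonneg hc₁ (by linarith), div_nonneg hc₂ (by linarith),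
    fun p hp => ?_⟩
  rw [div_mul_eq_mul_div, div_mul_eq_mul_div, ← add_div, le_div_iff₀ (by linarith)]
  linarith [hsep p hp]

section InnerProductSpace

variable {H : Type*} [NormedAddCommGroup H] [InnerProductSpace ℝ H]

noncomputable def ContinuousLinearMap.innerSelfForm (A : H →L[ℝ] H) : QuadraticForm ℝ H :=
  LinearMap.BilinMap.toQuadraticMap (innerₗ H ∘ₗ (A : H →ₗ[ℝ] H))

@[simp]
theorem ContinuousLinearMap.innerSelfForm_apply (A : H →L[ℝ] H) (x : H) :
    A.innerSelfForm x = ⟪A x, x⟫ :=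
  rfl

end InnerProductSpace

theorem s_procedure_general
    {H : Type*} [NormedAddCommGroup H] [InnerProductSpace ℝ H]
    (hdim : 3 ≤ Module.rank ℝ H)
    (A₀ A₁ A₂ : H →L[ℝ] H) (α₀ α₁ α₂ : ℝ) (μ₁ μ₂ : ℝ)
    (hpos : ∀ x : H, x ≠ 0 → 0 < ⟪(μ₁ • A₁ + μ₂ • A₂) x, x⟫)
    (x₀ : H) (hx₁ : ⟪A₁ x₀, x₀⟫ < α₁) (hx₂ : ⟪A₂ x₀, x₀⟫ < α₂) :
    (∀ x : H, ⟪A₁ x, x⟫ ≤ α₁ → ⟪A₂ x, x⟫ ≤ α₂ → ⟪A₀ x, x⟫ ≤ α₀) ↔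
    (∃ τ₁ τ₂ : ℝ, 0 ≤ τ₁ ∧ 0 ≤ τ₂ ∧
      (∀ x : H, ⟪A₀ x, x⟫ ≤ τ₁ * ⟪A₁ x, x⟫ + τ₂ * ⟪A₂ x, x⟫) ∧
      τ₁ * α₁ + τ₂ * α₂ ≤ α₀) := by
  constructor
  · intro hS
    have hconv := convex_range_of_posDef_combination hdim A₀.innerSelfForm A₁.innerSelfForm
      A₂.innerSelfForm (μ₁ := μ₁) (μ₂ := μ₂)
      (by simpa [inner_add_left, real_inner_smul_left] using hpos)
    obtain ⟨τ₁, τ₂, hτ₁, hτ₂, hτ⟩ := exists_nonneg_multipliers_of_convex hconv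
      ⟨_, ⟨x₀, rfl⟩, hx₁, hx₂⟩ (by rintro _ ⟨x, rfl⟩ h₁ h₂; exact hS x h₁.le h₂.le)
    set q := A₀.innerSelfForm - τ₁ • A₁.innerSelfForm - τ₂ • A₂.innerSelfForm
    have hq (x : H) : q x = ⟪A₀ x, x⟫ - τ₁ * ⟪A₁ x, x⟫ - τ₂ * ⟪A₂ x, x⟫ := by simp [q]
    have hle (x : H) : q x ≤ α₀ - τ₁ * α₁ - τ₂ * α₂ := by
      have := hτ _ ⟨x, rfl⟩
      simp only [ContinuousLinearMap.innerSelfForm_apply] at this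
      linarith [hq x]
    refine ⟨τ₁, τ₂, hτ₁, hτ₂, fun x => ?_, ?_⟩
    · linarith [hq x, q.apply_nonpos_of_forall_le hle x]
    · linarith [hle 0, q.map_zero]
  · rintro ⟨τ₁, τ₂, hτ₁, hτ₂, hA, hα⟩ x h₁ h₂
    nlinarith [hA x, mul_le_mul_of_nonneg_left h₁ hτ₁, mul_le_mul_of_nonneg_left h₂ hτ₂]

/-- S-procedure on a real Hilbert space of dimension at least 3. -/
theorem s_procedure
    {H : Type*} [NormedAddCommGroup H] [InnerProductSpace ℝ H] [CompleteSpace H]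
    (hdim : 3 ≤ Module.rank ℝ H)
    (A₀ A₁ A₂ : H →L[ℝ] H) (α₀ α₁ α₂ : ℝ) (μ₁ μ₂ : ℝ)
    (hsymm : ∀ x y : H, ⟪(μ₁ • A₁ + μ₂ • A₂) x, y⟫ = ⟪x, (μ₁ • A₁ + μ₂ • A₂) y⟫)
    (hpos : ∀ x : H, x ≠ 0 → 0 < ⟪(μ₁ • A₁ + μ₂ • A₂) x, x⟫)
    (x₀ : H) (hx₁ : ⟪A₁ x₀, x₀⟫ < α₁) (hx₂ : ⟪A₂ x₀, x₀⟫ < α₂) :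
    (∀ x : H, ⟪A₁ x, x⟫ ≤ α₁ → ⟪A₂ x, x⟫ ≤ α₂ → ⟪A₀ x, x⟫ ≤ α₀) ↔
    (∃ τ₁ τ₂ : ℝ, 0 ≤ τ₁ ∧ 0 ≤ τ₂ ∧
      (∀ x : H, ⟪A₀ x, x⟫ ≤ τ₁ * ⟪A₁ x, x⟫ + τ₂ * ⟪A₂ x, x⟫) ∧
      τ₁ * α₁ + τ₂ * α₂ ≤ α₀) :=
  s_procedure_general hdim A₀ A₁ A₂ α₀ α₁ α₂ μ₁ μ₂ hpos x₀ hx₁ hx₂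
end
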